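/- arXiv:1607.02425 — 9 statements merged into one kernel-verified Lean document; each statement's English description precedes it below -/
import Mathlib

section
/- Let (X,T) be a topological dynamical system, 𝒰 a finite open cover of X, and (c_S^n) a system of coefficients. Then Int(X,𝒰,T) = 2·Asc(X,𝒰,T) − h_top(X,𝒰,T). -/
open Set Filter Topology

/-- Minimal cardinality of a subcover of a family of sets covering `X`. -/
noncomputable def coverNum {X : Type*} (𝒰 : Set (Set X)) : ℕ :=
  sInf {m | ∃ F : Finset (Set X), ↑F ⊆ 𝒰 ∧ F.card = m ∧ ⋃₀ (F : Set (Set X)) = Set.univ}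

/-- The join `⋁_{i ∈ S} T^{-i} 𝒰` of preimages of a cover along a finite set of times
`S ⊆ n* = {0, …, n-1}`. -/
def joinCover {X : Type*} (T : X → X) (𝒰 : Set (Set X)) {n : ℕ} (S : Finset (Fin n)) :
    Set (Set X) :=
  {V | ∃ f : Fin n → Set X, (∀ i, f i ∈ 𝒰) ∧ V = ⋂ i ∈ S, (T^[(i : ℕ)]) ⁻¹' f i}

lemma coverNum_joinCover_pos {X : Type*} [Nonempty X] (T : X → X) (𝒰 : Set (Set X))
    (hUfin : 𝒰.Finite) (hUcover : ⋃₀ 𝒰 = Set.univ) {n : ℕ} (S : Finset (Fin n)) :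
    0 < coverNum (joinCover T 𝒰 S) := by
  classical
  haveI : Fintype ↥𝒰 := hUfin.fintype
  set F : Finset (Set X) :=
    Finset.image (fun f : Fin n → ↥𝒰 => ⋂ i ∈ S, (T^[(i : ℕ)]) ⁻¹' (f i : Set X))
      Finset.univ with hF
  have hFsub : ↑F ⊆ joinCover T 𝒰 S := by
    intro V hV
    simp only [hF, Finset.coe_image, Set.mem_image] at hV
    rcases hV with ⟨f, -, rfl⟩
    exact ⟨fun i => (f i : Set X), fun i => (f i).2, rfl⟩
  have hFcov : ⋃₀ (F : Set (Set X)) = Set.univ := by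
    ext x
    simp only [Set.mem_univ, iff_true, Set.mem_sUnion]
    have hx : ∀ i : Fin n, ∃ U : ↥𝒰, (T^[(i : ℕ)]) x ∈ (U : Set X) := by
      intro i
      have : (T^[(i : ℕ)]) x ∈ ⋃₀ 𝒰 := hUcover ▸ Set.mem_univ _
      rcases this with ⟨U, hU, hxU⟩
      exact ⟨⟨U, hU⟩, hxU⟩
    choose f hf using hx
    refine ⟨⋂ i ∈ S, (T^[(i : ℕ)]) ⁻¹' (f i : Set X), ?_, ?_⟩
    · simp only [hF, Finset.coe_image, Set.mem_image]
      exact ⟨f, Finset.mem_coe.mpr (Finset.mem_univ f), rfl⟩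
    · simp only [Set.mem_iInter]
      intro i _
      exact hf i
  have hne : {m | ∃ G : Finset (Set X), ↑G ⊆ joinCover T 𝒰 S ∧ G.card = m ∧
      ⋃₀ (G : Set (Set X)) = Set.univ}.Nonempty := ⟨F.card, F, hFsub, rfl, hFcov⟩
  rw [coverNum, pos_iff_ne_zero]
  intro h0
  have hmem := Nat.sInf_mem hne
  rw [h0] at hmem
  rcases hmem with ⟨G, -, hGcard, hGcov⟩
  rw [Finset.card_eq_zero] at hGcard
  subst hGcard
  simp only [Finset.coe_empty, Set.sUnion_empty] at hGcov
  exact (Set.empty_ne_univ hGcov)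

lemma coverNum_joinCover_zero {X : Type*} (hX : ¬ Nonempty X) (T : X → X) (𝒰 : Set (Set X))
    {n : ℕ} (S : Finset (Fin n)) : coverNum (joinCover T 𝒰 S) = 0 := by
  apply Nat.sInf_eq_zero.mpr
  left
  refine ⟨∅, by simp, by simp, ?_⟩
  simp only [Finset.coe_empty, Set.sUnion_empty]
  exact (Set.univ_eq_empty_iff.mpr (not_nonempty_iff.mp hX)).symm

/-- `Int(X,𝒰,T) = 2·Asc(X,𝒰,T) − h_top(X,𝒰,T)`. -/
theorem int_eq_two_asc_sub_entropy
    {X : Type*} [MetricSpace X] [CompactSpace X] (T : X → X) (hT : Continuous T)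
    (𝒰 : Set (Set X)) (hUfin : 𝒰.Finite) (hUopen : ∀ U ∈ 𝒰, IsOpen U)
    (hUcover : ⋃₀ 𝒰 = Set.univ)
    (c : (n : ℕ) → Finset (Fin n) → ℝ)
    (hc_nonneg : ∀ n (S : Finset (Fin n)), 0 ≤ c n S)
    (hc_sum : ∀ n, ∑ S : Finset (Fin n), c n S = 1)
    (hc_compl : ∀ n (S : Finset (Fin n)), c n Sᶜ = c n S)
    (A I h : ℝ)
    (hAsc : Tendsto (fun n : ℕ =>
        (1 / (n : ℝ)) * ∑ S : Finset (Fin n), c n S *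
          Real.log (coverNum (joinCover T 𝒰 S))) atTop (𝓝 A))
    (hInt : Tendsto (fun n : ℕ =>
        (1 / (n : ℝ)) * ∑ S : Finset (Fin n), c n S *
          Real.log (((coverNum (joinCover T 𝒰 S) : ℝ) *
              (coverNum (joinCover T 𝒰 Sᶜ) : ℝ)) /
            (coverNum (joinCover T 𝒰 (Finset.univ : Finset (Fin n))) : ℝ)))
        atTop (𝓝 I))
    (hEnt : Tendsto (fun n : ℕ =>
        Real.log (coverNum (joinCover T 𝒰 (Finset.univ : Finset (Fin n)))) / (n : ℝ))
        atTop (𝓝 h)) :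
    I = 2 * A - h := by
  classical
  by_cases hX : Nonempty X
  · -- main case
    have hpos : ∀ (n : ℕ) (S : Finset (Fin n)),
        (0 : ℝ) < (coverNum (joinCover T 𝒰 S) : ℝ) := fun n S => by
      exact_mod_cast coverNum_joinCover_pos T 𝒰 hUfin hUcover S
    have key : ∀ n : ℕ,
        (1 / (n : ℝ)) * ∑ S : Finset (Fin n), c n S *
          Real.log (((coverNum (joinCover T 𝒰 S) : ℝ) *
              (coverNum (joinCover T 𝒰 Sᶜ) : ℝ)) /
            (coverNum (joinCover T 𝒰 (Finset.univ : Finset (Fin n))) : ℝ))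
        = 2 * ((1 / (n : ℝ)) * ∑ S : Finset (Fin n), c n S *
            Real.log (coverNum (joinCover T 𝒰 S)))
          - Real.log (coverNum (joinCover T 𝒰 (Finset.univ : Finset (Fin n)))) / (n : ℝ) := by
      intro n
      have hlog : ∀ S : Finset (Fin n),
          Real.log (((coverNum (joinCover T 𝒰 S) : ℝ) *
              (coverNum (joinCover T 𝒰 Sᶜ) : ℝ)) /
            (coverNum (joinCover T 𝒰 (Finset.univ : Finset (Fin n))) : ℝ))
          = Real.log (coverNum (joinCover T 𝒰 S)) +
            Real.log (coverNum (joinCover T 𝒰 Sᶜ)) -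
            Real.log (coverNum (joinCover T 𝒰 (Finset.univ : Finset (Fin n)))) := by
        intro S
        rw [Real.log_div (mul_pos (hpos n S) (hpos n Sᶜ)).ne' (hpos n _).ne',
          Real.log_mul (hpos n S).ne' (hpos n Sᶜ).ne']
      have hsum : (∑ S : Finset (Fin n), c n S *
            Real.log ((coverNum (joinCover T 𝒰 Sᶜ) : ℝ)))
          = ∑ S : Finset (Fin n), c n S * Real.log ((coverNum (joinCover T 𝒰 S) : ℝ)) := by
        refine (Fintype.sum_bijective (fun S : Finset (Fin n) => Sᶜ)
          (Function.Involutive.bijective (fun S => compl_compl S)) _ _ ?_).symm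
        intro S
        rw [hc_compl, compl_compl]
      calc (1 / (n : ℝ)) * ∑ S : Finset (Fin n), c n S *
            Real.log (((coverNum (joinCover T 𝒰 S) : ℝ) *
                (coverNum (joinCover T 𝒰 Sᶜ) : ℝ)) /
              (coverNum (joinCover T 𝒰 (Finset.univ : Finset (Fin n))) : ℝ))
          = (1 / (n : ℝ)) * ∑ S : Finset (Fin n),
              (c n S * Real.log (coverNum (joinCover T 𝒰 S)) +
               c n S * Real.log (coverNum (joinCover T 𝒰 Sᶜ)) -
               c n S * Real.log (coverNum (joinCover T 𝒰 (Finset.univ : Finset (Fin n))))) := by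
            congr 1
            refine Finset.sum_congr rfl fun S _ => ?_
            rw [hlog S]; ring
        _ = (1 / (n : ℝ)) * ((∑ S : Finset (Fin n), c n S *
              Real.log (coverNum (joinCover T 𝒰 S))) +
              (∑ S : Finset (Fin n), c n S * Real.log (coverNum (joinCover T 𝒰 Sᶜ))) -
              (∑ S : Finset (Fin n), c n S) *
                Real.log (coverNum (joinCover T 𝒰 (Finset.univ : Finset (Fin n))))) := by
            rw [Finset.sum_sub_distrib, Finset.sum_add_distrib, Finset.sum_mul]
        _ = (1 / (n : ℝ)) * (2 * (∑ S : Finset (Fin n), c n S *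
              Real.log (coverNum (joinCover T 𝒰 S))) -
              Real.log (coverNum (joinCover T 𝒰 (Finset.univ : Finset (Fin n))))) := by
            rw [hsum, hc_sum]; ring
        _ = _ := by field_simp
    have hInt' : Tendsto (fun n : ℕ =>
        2 * ((1 / (n : ℝ)) * ∑ S : Finset (Fin n), c n S *
            Real.log (coverNum (joinCover T 𝒰 S)))
          - Real.log (coverNum (joinCover T 𝒰 (Finset.univ : Finset (Fin n)))) / (n : ℝ))
        atTop (𝓝 (2 * A - h)) := (hAsc.const_mul 2).sub hEnt
    have := hInt.congr key
    exact tendsto_nhds_unique this hInt'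
  · -- X empty
    have hz : ∀ (n : ℕ) (S : Finset (Fin n)),
        (coverNum (joinCover T 𝒰 S) : ℝ) = 0 := fun n S => by
      exact_mod_cast coverNum_joinCover_zero hX T 𝒰 S
    have hA : A = 0 := by
      refine tendsto_nhds_unique hAsc ?_
      have : (fun n : ℕ => (1 / (n : ℝ)) * ∑ S : Finset (Fin n), c n S *
          Real.log (coverNum (joinCover T 𝒰 S))) = fun _ => 0 := by
        funext n; simp [hz]
      rw [this]; exact tendsto_const_nhds
    have hI : I = 0 := by
      refine tendsto_nhds_unique hInt ?_
      have : (fun n : ℕ => (1 / (n : ℝ)) * ∑ S : Finset (Fin n), c n S *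
          Real.log (((coverNum (joinCover T 𝒰 S) : ℝ) *
              (coverNum (joinCover T 𝒰 Sᶜ) : ℝ)) /
            (coverNum (joinCover T 𝒰 (Finset.univ : Finset (Fin n))) : ℝ))) = fun _ => 0 := by
        funext n; simp [hz]
      rw [this]; exact tendsto_const_nhds
    have hh : h = 0 := by
      refine tendsto_nhds_unique hEnt ?_
      have : (fun n : ℕ =>
          Real.log (coverNum (joinCover T 𝒰 (Finset.univ : Finset (Fin n)))) / (n : ℝ))
          = fun _ => 0 := by
        funext n; simp [hz]
      rw [this]; exact tendsto_const_nhds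
    rw [hA, hI, hh]; ring
end

section
/- Let (X,T) be a topological dynamical system, 𝒰 a finite open cover of X, and (c_S^n) a system of coefficients. Then Asc(X,𝒰,T) ≤ h_top(X,𝒰,T) ≤ h_top(X,T), and hence also Int(X,𝒰,T) ≤ h_top(X,𝒰,T) ≤ h_top(X,T). In particular, a system with zero topological entropy has zero topological intricacy with respect to every finite open cover. -/
open Set Filter Topology

/-- The set of values `h_top(X,𝒱,T)` over all finite open covers `𝒱`, as extended reals;
its supremum is the topological entropy `h_top(X,T)`. -/
def entropySet {X : Type*} [TopologicalSpace X] (T : X → X) : Set EReal :=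
  {e | ∃ 𝒱 : Set (Set X), 𝒱.Finite ∧ (∀ V ∈ 𝒱, IsOpen V) ∧ ⋃₀ 𝒱 = Set.univ ∧
    ∃ r : ℝ, Tendsto (fun n : ℕ =>
        Real.log (coverNum (joinCover T 𝒱 (Finset.univ : Finset (Fin n)))) / (n : ℝ))
      atTop (𝓝 r) ∧ e = (r : EReal)}

/-!
Since `S ⊆ n*`, the join `𝒰_{n*}` refines `𝒰_S`, so `N(𝒰_S) ≤ N(𝒰_{n*})`; averaging against the
probability weights `c_S^n` gives `Asc_n ≤ h_n`, where `h_n = (1/n) log N(𝒰_{n*})`. The symmetry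
`c_{S^c}^n = c_S^n` turns the intricacy sum into `Int_n = 2 Asc_n - h_n`, so in the limit
`Int = 2 Asc - h ≤ h`, and `h` is one of the values whose supremum is `h_top(X,T)`. If that
supremum vanishes, then `0 ≤ Asc ≤ h ≤ 0` forces `Int = 0`.
-/

lemma Real.log_natCast_mono : Monotone fun n : ℕ => Real.log n := by
  intro a b hab
  rcases Nat.eq_zero_or_pos a with rfl | ha
  · simpa using Real.log_natCast_nonneg b
  · exact Real.log_le_log (by exact_mod_cast ha) (by exact_mod_cast hab)

lemma sum_mul_le_of_le {ι : Type*} [Fintype ι] {c : ι → ℝ} (hc : ∀ i, 0 ≤ c i)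
    (hc_sum : ∑ i, c i = 1) {a : ι → ℝ} {M : ℝ} (ha : ∀ i, a i ≤ M) : ∑ i, c i * a i ≤ M :=
  calc ∑ i, c i * a i ≤ ∑ i, c i * M :=
        Finset.sum_le_sum fun i _ => mul_le_mul_of_nonneg_left (ha i) (hc i)
    _ = M := by rw [← Finset.sum_mul, hc_sum, one_mul]

lemma sum_mul_compl_eq {α : Type*} [Fintype α] [BooleanAlgebra α] {c : α → ℝ}
    (hc : ∀ S, c Sᶜ = c S) (f : α → ℝ) : ∑ S, c S * f Sᶜ = ∑ S, c S * f S :=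
  Fintype.sum_bijective compl compl_bijective _ _ fun S => by rw [hc]

section Covers

variable {X : Type*}

lemma coverNum_le_card {𝒱 : Set (Set X)} {F : Finset (Set X)} (hF : ↑F ⊆ 𝒱)
    (hcov : ⋃₀ (F : Set (Set X)) = univ) : coverNum 𝒱 ≤ F.card :=
  Nat.sInf_le ⟨F, hF, rfl, hcov⟩

lemma coverNum_eq_zero_of_isEmpty [IsEmpty X] (𝒱 : Set (Set X)) : coverNum 𝒱 = 0 :=
  Nat.eq_zero_of_le_zero <| coverNum_le_card (F := ∅) (by simp)
    (by simpa using (univ_eq_empty_iff.2 ‹_›).symm)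

lemma exists_finset_subcover_card_eq_coverNum {𝒱 : Set (Set X)} (hfin : 𝒱.Finite)
    (hcov : ⋃₀ 𝒱 = univ) :
    ∃ F : Finset (Set X), ↑F ⊆ 𝒱 ∧ F.card = coverNum 𝒱 ∧ ⋃₀ (F : Set (Set X)) = univ :=
  Nat.sInf_mem (s := {m | ∃ F : Finset (Set X), (F : Set (Set X)) ⊆ 𝒱 ∧ F.card = m ∧
    ⋃₀ (F : Set (Set X)) = univ})
    ⟨_, hfin.toFinset, by simp, rfl, by simp [hcov]⟩

lemma coverNum_pos [Nonempty X] {𝒱 : Set (Set X)} (hfin : 𝒱.Finite)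
    (hcov : ⋃₀ 𝒱 = univ) : 0 < coverNum 𝒱 := by
  obtain ⟨F, -, hcard, hFcov⟩ := exists_finset_subcover_card_eq_coverNum hfin hcov
  rw [← hcard, Finset.card_pos, Finset.nonempty_iff_ne_empty]
  rintro rfl
  exact empty_ne_univ (by simpa using hFcov)

lemma coverNum_le_of_refines {𝒱 𝒲 : Set (Set X)} (hrefine : ∀ W ∈ 𝒲, ∃ V ∈ 𝒱, W ⊆ V)
    (hfin : 𝒲.Finite) (hcov : ⋃₀ 𝒲 = univ) : coverNum 𝒱 ≤ coverNum 𝒲 := by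
  classical
  obtain ⟨F, hF𝒲, hcard, hFcov⟩ := exists_finset_subcover_card_eq_coverNum hfin hcov
  choose! g hg𝒱 hsub using hrefine
  refine (coverNum_le_card (F := F.image g) ?_ ?_).trans (hcard ▸ Finset.card_image_le)
  · rw [Finset.coe_image, image_subset_iff]
    exact fun W hW => hg𝒱 W (hF𝒲 hW)
  · refine eq_univ_of_forall fun x => ?_
    obtain ⟨W, hW, hxW⟩ := mem_sUnion.1 (hFcov ▸ mem_univ x)
    exact mem_sUnion.2 ⟨g W, by simpa using ⟨W, hW, rfl⟩, hsub W (hF𝒲 hW) hxW⟩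

lemma log_coverNum_mul_div {𝒱₁ 𝒱₂ 𝒱₃ : Set (Set X)} (hfin₁ : 𝒱₁.Finite) (hcov₁ : ⋃₀ 𝒱₁ = univ)
    (hfin₂ : 𝒱₂.Finite) (hcov₂ : ⋃₀ 𝒱₂ = univ) (hfin₃ : 𝒱₃.Finite) (hcov₃ : ⋃₀ 𝒱₃ = univ) :
    Real.log ((coverNum 𝒱₁ : ℝ) * coverNum 𝒱₂ / coverNum 𝒱₃) =
      Real.log (coverNum 𝒱₁) + Real.log (coverNum 𝒱₂) - Real.log (coverNum 𝒱₃) := by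
  cases isEmpty_or_nonempty X
  · simp [coverNum_eq_zero_of_isEmpty]
  · have pos : ∀ {𝒱 : Set (Set X)}, 𝒱.Finite → ⋃₀ 𝒱 = univ → (coverNum 𝒱 : ℝ) ≠ 0 :=
      fun hfin hcov => Nat.cast_ne_zero.2 (coverNum_pos hfin hcov).ne'
    rw [Real.log_div (mul_ne_zero (pos hfin₁ hcov₁) (pos hfin₂ hcov₂)) (pos hfin₃ hcov₃),
      Real.log_mul (pos hfin₁ hcov₁) (pos hfin₂ hcov₂)]

end Covers

section JoinCover

variable {X : Type*} (T : X → X) {𝒰 : Set (Set X)} {n : ℕ}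

lemma joinCover_finite (hUfin : 𝒰.Finite) (S : Finset (Fin n)) : (joinCover T 𝒰 S).Finite :=
  ((Set.Finite.pi fun _ => hUfin).image fun f : Fin n → Set X =>
    ⋂ i ∈ S, T^[(i : ℕ)] ⁻¹' f i).subset fun _ ⟨f, hf, hV⟩ => ⟨f, fun i _ => hf i, hV.symm⟩

lemma sUnion_joinCover (hUcover : ⋃₀ 𝒰 = univ) (S : Finset (Fin n)) :
    ⋃₀ joinCover T 𝒰 S = univ := by
  refine eq_univ_of_forall fun x => ?_
  choose f hf𝒰 hxf using fun i : Fin n => mem_sUnion.1 (hUcover ▸ mem_univ (T^[(i : ℕ)] x))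
  exact mem_sUnion.2 ⟨_, ⟨f, hf𝒰, rfl⟩, mem_iInter₂.2 fun i _ => hxf i⟩

lemma joinCover_refines_of_subset {S S' : Finset (Fin n)} (hSS' : S ⊆ S') :
    ∀ W ∈ joinCover T 𝒰 S', ∃ V ∈ joinCover T 𝒰 S, W ⊆ V := by
  rintro _ ⟨f, hf𝒰, rfl⟩
  exact ⟨_, ⟨f, hf𝒰, rfl⟩, biInter_subset_biInter_left fun i hi => hSS' hi⟩

lemma coverNum_joinCover_mono (hUfin : 𝒰.Finite) (hUcover : ⋃₀ 𝒰 = univ)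
    {S S' : Finset (Fin n)} (hSS' : S ⊆ S') :
    coverNum (joinCover T 𝒰 S) ≤ coverNum (joinCover T 𝒰 S') :=
  coverNum_le_of_refines (joinCover_refines_of_subset T hSS') (joinCover_finite T hUfin S')
    (sUnion_joinCover T hUcover S')

end JoinCover

section Sequences

variable {X : Type*} (T : X → X) (𝒰 : Set (Set X)) (c : (n : ℕ) → Finset (Fin n) → ℝ)

/- The `n`-th terms of the sequences whose limits are `h_top(X,𝒰,T)`, `Asc(X,𝒰,T)` and
`Int(X,𝒰,T)`. -/
noncomputable def coverEntropySeq (n : ℕ) : ℝ :=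
  Real.log (coverNum (joinCover T 𝒰 (Finset.univ : Finset (Fin n)))) / n

noncomputable def avgSampleComplexitySeq (n : ℕ) : ℝ :=
  (1 / (n : ℝ)) * ∑ S : Finset (Fin n), c n S * Real.log (coverNum (joinCover T 𝒰 S))

noncomputable def intricacySeq (n : ℕ) : ℝ :=
  (1 / (n : ℝ)) * ∑ S : Finset (Fin n), c n S *
    Real.log ((coverNum (joinCover T 𝒰 S) : ℝ) * coverNum (joinCover T 𝒰 Sᶜ) /
      coverNum (joinCover T 𝒰 (Finset.univ : Finset (Fin n))))

variable {T 𝒰 c}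

lemma avgSampleComplexitySeq_nonneg (hc_nonneg : ∀ n (S : Finset (Fin n)), 0 ≤ c n S) (n : ℕ) :
    0 ≤ avgSampleComplexitySeq T 𝒰 c n :=
  mul_nonneg (one_div_nonneg.2 n.cast_nonneg) <| Finset.sum_nonneg fun S _ =>
    mul_nonneg (hc_nonneg n S) (Real.log_natCast_nonneg _)

lemma avgSampleComplexitySeq_le_coverEntropySeq (hUfin : 𝒰.Finite) (hUcover : ⋃₀ 𝒰 = univ)
    (hc_nonneg : ∀ n (S : Finset (Fin n)), 0 ≤ c n S)
    (hc_sum : ∀ n, ∑ S : Finset (Fin n), c n S = 1)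
    (n : ℕ) : avgSampleComplexitySeq T 𝒰 c n ≤ coverEntropySeq T 𝒰 n := by
  rw [avgSampleComplexitySeq, coverEntropySeq, one_div, div_eq_inv_mul]
  refine mul_le_mul_of_nonneg_left (sum_mul_le_of_le (hc_nonneg n) (hc_sum n) fun S => ?_)
    (inv_nonneg.2 n.cast_nonneg)
  exact Real.log_natCast_mono (coverNum_joinCover_mono T hUfin hUcover (Finset.subset_univ S))

lemma intricacySeq_eq (hUfin : 𝒰.Finite) (hUcover : ⋃₀ 𝒰 = univ)
    (hc_sum : ∀ n, ∑ S : Finset (Fin n), c n S = 1)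
    (hc_compl : ∀ n (S : Finset (Fin n)), c n Sᶜ = c n S) (n : ℕ) :
    intricacySeq T 𝒰 c n = 2 * avgSampleComplexitySeq T 𝒰 c n - coverEntropySeq T 𝒰 n := by
  set logN : Finset (Fin n) → ℝ := fun S => Real.log (coverNum (joinCover T 𝒰 S))
  have hsplit : ∀ S : Finset (Fin n), c n S *
      Real.log ((coverNum (joinCover T 𝒰 S) : ℝ) * coverNum (joinCover T 𝒰 Sᶜ) /
        coverNum (joinCover T 𝒰 (Finset.univ : Finset (Fin n)))) =
      c n S * logN S + c n S * logN Sᶜ - c n S * logN Finset.univ := fun S => by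
    rw [log_coverNum_mul_div (joinCover_finite T hUfin _) (sUnion_joinCover T hUcover _)
      (joinCover_finite T hUfin _) (sUnion_joinCover T hUcover _)
      (joinCover_finite T hUfin _) (sUnion_joinCover T hUcover _)]
    ring
  rw [intricacySeq, avgSampleComplexitySeq, coverEntropySeq,
    Finset.sum_congr rfl fun S _ => hsplit S, Finset.sum_sub_distrib,
    Finset.sum_add_distrib, sum_mul_compl_eq (hc_compl n), ← Finset.sum_mul, hc_sum, one_mul]
  ring

end Sequences

theorem asc_le_entropy_and_int_le_entropy_general
    {X : Type*} [MetricSpace X] (T : X → X)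
    (𝒰 : Set (Set X)) (hUfin : 𝒰.Finite) (hUopen : ∀ U ∈ 𝒰, IsOpen U)
    (hUcover : ⋃₀ 𝒰 = Set.univ)
    (c : (n : ℕ) → Finset (Fin n) → ℝ)
    (hc_nonneg : ∀ n (S : Finset (Fin n)), 0 ≤ c n S)
    (hc_sum : ∀ n, ∑ S : Finset (Fin n), c n S = 1)
    (hc_compl : ∀ n (S : Finset (Fin n)), c n Sᶜ = c n S)
    (A I h : ℝ)
    (hAsc : Tendsto (fun n : ℕ =>
        (1 / (n : ℝ)) * ∑ S : Finset (Fin n), c n S *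
          Real.log (coverNum (joinCover T 𝒰 S))) atTop (𝓝 A))
    (hInt : Tendsto (fun n : ℕ =>
        (1 / (n : ℝ)) * ∑ S : Finset (Fin n), c n S *
          Real.log (((coverNum (joinCover T 𝒰 S) : ℝ) *
              (coverNum (joinCover T 𝒰 Sᶜ) : ℝ)) /
            (coverNum (joinCover T 𝒰 (Finset.univ : Finset (Fin n))) : ℝ)))
        atTop (𝓝 I))
    (hEnt : Tendsto (fun n : ℕ =>
        Real.log (coverNum (joinCover T 𝒰 (Finset.univ : Finset (Fin n)))) / (n : ℝ))
        atTop (𝓝 h)) :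
    A ≤ h ∧ (h : EReal) ≤ sSup (entropySet T) ∧
    I ≤ h ∧ (I : EReal) ≤ sSup (entropySet T) ∧
    (sSup (entropySet T) = 0 → I = 0) := by
  have hh_le : (h : EReal) ≤ sSup (entropySet T) :=
    le_sSup ⟨𝒰, hUfin, hUopen, hUcover, h, hEnt, rfl⟩
  have hA_nonneg : 0 ≤ A := ge_of_tendsto' hAsc (avgSampleComplexitySeq_nonneg hc_nonneg)
  have hA_le : A ≤ h := le_of_tendsto_of_tendsto' hAsc hEnt
    (avgSampleComplexitySeq_le_coverEntropySeq hUfin hUcover hc_nonneg hc_sum)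
  have hI : I = 2 * A - h :=
    tendsto_nhds_unique (hInt.congr (intricacySeq_eq hUfin hUcover hc_sum hc_compl))
      ((hAsc.const_mul 2).sub hEnt)
  have hI_le : I ≤ h := by linarith
  refine ⟨hA_le, hh_le, hI_le, (EReal.coe_le_coe_iff.2 hI_le).trans hh_le, fun hsup => ?_⟩
  have hh_nonpos : h ≤ 0 := EReal.coe_nonpos.1 (hsup ▸ hh_le)
  linarith

/-- `Asc(X,𝒰,T) ≤ h_top(X,𝒰,T) ≤ h_top(X,T)` and
`Int(X,𝒰,T) ≤ h_top(X,𝒰,T) ≤ h_top(X,T)`; in particular a system with zero topological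
entropy has zero topological intricacy with respect to every finite open cover. -/
theorem asc_le_entropy_and_int_le_entropy
    {X : Type*} [MetricSpace X] [CompactSpace X] (T : X → X) (hT : Continuous T)
    (𝒰 : Set (Set X)) (hUfin : 𝒰.Finite) (hUopen : ∀ U ∈ 𝒰, IsOpen U)
    (hUcover : ⋃₀ 𝒰 = Set.univ)
    (c : (n : ℕ) → Finset (Fin n) → ℝ)
    (hc_nonneg : ∀ n (S : Finset (Fin n)), 0 ≤ c n S)
    (hc_sum : ∀ n, ∑ S : Finset (Fin n), c n S = 1)
    (hc_compl : ∀ n (S : Finset (Fin n)), c n Sᶜ = c n S)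
    (A I h : ℝ)
    (hAsc : Tendsto (fun n : ℕ =>
        (1 / (n : ℝ)) * ∑ S : Finset (Fin n), c n S *
          Real.log (coverNum (joinCover T 𝒰 S))) atTop (𝓝 A))
    (hInt : Tendsto (fun n : ℕ =>
        (1 / (n : ℝ)) * ∑ S : Finset (Fin n), c n S *
          Real.log (((coverNum (joinCover T 𝒰 S) : ℝ) *
              (coverNum (joinCover T 𝒰 Sᶜ) : ℝ)) /
            (coverNum (joinCover T 𝒰 (Finset.univ : Finset (Fin n))) : ℝ)))
        atTop (𝓝 I))
    (hEnt : Tendsto (fun n : ℕ =>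
        Real.log (coverNum (joinCover T 𝒰 (Finset.univ : Finset (Fin n)))) / (n : ℝ))
        atTop (𝓝 h)) :
    A ≤ h ∧ (h : EReal) ≤ sSup (entropySet T) ∧
    I ≤ h ∧ (I : EReal) ≤ sSup (entropySet T) ∧
    (sSup (entropySet T) = 0 → I = 0) :=
  asc_le_entropy_and_int_le_entropy_general T 𝒰 hUfin hUopen hUcover c hc_nonneg hc_sum hc_compl A I
    h hAsc hInt hEnt
end

section
/- Let X be a one-step shift of finite type over a finite alphabet with 0–1 adjacency (transition) matrix M such that every entry of M² is strictly positive, and let σ be the shift map. Take the uniform system of coefficients c_S^n = 2^{−n} for all S ⊆ n*. Then the topological average sample complexity with respect to the time-zero cover satisfies Asc(X,𝒰₀,σ) = (1/4) · Σ_{k=1}^∞ log|ℒ_k(X)| / 2^k, where ℒ_k(X) is the set of k-blocks occurring in points of X. -/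
/-!
A point's pattern on a finite set `T` of coordinates splits along the maximal runs of `T`:
consecutive runs are separated by at least one free coordinate, and since `M² > 0` any two
points can be glued across such a gap. Hence `N(𝒰_S) = ∏ |ℒ_k|` over the maximal runs of `S`.
For a uniformly random `S ⊆ n*` an interval `[i, i + k)` is a maximal run with probability
`2^{-k}` times `1/2` or `1/4`, according to whether or not it touches an end of `n*`, so the
expected number of maximal runs of length `k < n` is `(n - k + 3) 2^{-k} / 4`. Dividing by `n`
and letting `n → ∞` (dominated convergence, as `log |ℒ_k| ≤ k log |𝒜|`) gives the series.
-/

open Set Filter Topology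

/-- The one-step SFT determined by a 0-1 transition relation `M` on the alphabet `A`. -/
def sftSpace {A : Type*} (M : A → A → Prop) : Type _ :=
  {x : ℤ → A // ∀ i : ℤ, M (x i) (x (i + 1))}

/-- The shift map on the SFT. -/
def sftShift {A : Type*} (M : A → A → Prop) : sftSpace M → sftSpace M :=
  fun x => ⟨fun i => x.1 (i + 1), fun i => by
    simpa [add_assoc] using x.2 (i + 1)⟩

/-- The time-zero cover (and partition) of the SFT by cylinder sets `{x : x₀ = a}`. -/
def timeZeroCover {A : Type*} (M : A → A → Prop) : Set (Set (sftSpace M)) :=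
  Set.range fun a : A => {x : sftSpace M | x.1 0 = a}

/-- The language of the SFT: the set of `k`-blocks occurring in points of `X`. -/
def sftLang {A : Type*} (M : A → A → Prop) (k : ℕ) : Set (Fin k → A) :=
  {w | ∃ x : sftSpace M, ∃ i : ℤ, ∀ j : Fin k, w j = x.1 (i + (j : ℤ))}

theorem coverNum_range_preimage_singleton {X P : Type*} (π : X → P) (hπ : (range π).Finite) :
    coverNum (range fun p => π ⁻¹' {p}) = (range π).ncard := by
  have hsubcover : ∀ F : Finset (Set X), ↑F ⊆ range (fun p => π ⁻¹' {p}) →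
      ⋃₀ (F : Set (Set X)) = univ → (range π).ncard ≤ F.card := by
    intro F hF hcov
    rw [← ncard_coe_finset]
    refine ncard_le_ncard_of_injOn (fun p => π ⁻¹' {p}) ?_ ?_
    · rintro _ ⟨x, rfl⟩
      obtain ⟨V, hVF, hxV⟩ := hcov.symm ▸ mem_univ x
      obtain ⟨q, rfl⟩ := hF hVF
      rwa [show π x = q from hxV]
    · rintro _ ⟨x, rfl⟩ q _ h
      have hx : x ∈ π ⁻¹' {π x} := rfl
      rwa [show π ⁻¹' {π x} = π ⁻¹' {q} from h] at hx
  classical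
  set F := hπ.toFinset.image fun p => π ⁻¹' {p}
  have hF : ↑F ⊆ range (fun p => π ⁻¹' {p}) := by
    rw [Finset.coe_image]
    exact image_subset_range _ _
  have hcovF : ⋃₀ (F : Set (Set X)) = univ :=
    eq_univ_of_forall fun x => ⟨π ⁻¹' {π x}, by simp [F], rfl⟩
  refine le_antisymm ?_ (le_csInf ⟨_, F, hF, rfl, hcovF⟩ fun m ⟨F', hF', hm, hcov⟩ =>
    hm ▸ hsubcover F' hF' hcov)
  calc coverNum (range fun p => π ⁻¹' {p}) ≤ F.card := Nat.sInf_le ⟨F, hF, rfl, hcovF⟩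
    _ ≤ (range π).ncard := by
      rw [ncard_eq_toFinset_card _ hπ]
      exact Finset.card_image_le

open Finset in
theorem card_filter_inter_eq {α : Type*} [Fintype α] [DecidableEq α] {B C : Finset α}
    (hCB : C ⊆ B) : #{S : Finset α | S ∩ B = C} = 2 ^ (Fintype.card α - #B) := by
  rw [← card_compl, ← card_powerset]
  have hdisj {D : Finset α} (hD : D ⊆ Bᶜ) : Disjoint D B :=
    Finset.disjoint_of_subset_left hD disjoint_compl_left
  refine card_nbij' (· \ B) (· ∪ C) (fun S _ => ?_) (fun D hD => ?_) (fun S hS => ?_)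
    (fun D hD => ?_)
  · simp
  · rw [Finset.mem_coe, Finset.mem_powerset] at hD
    rw [Finset.mem_coe, Finset.mem_filter, Finset.union_inter_distrib_right,
      Finset.inter_eq_left.2 hCB, Finset.disjoint_iff_inter_eq_empty.1 (hdisj hD),
      Finset.empty_union]
    exact ⟨Finset.mem_univ _, rfl⟩
  · rw [Finset.mem_coe, Finset.mem_filter] at hS
    rw [← hS.2]
    exact Finset.sdiff_union_inter S B
  · rw [Finset.mem_coe, Finset.mem_powerset] at hD
    show (D ∪ C) \ B = D
    rw [Finset.union_sdiff_distrib, Finset.sdiff_eq_self_of_disjoint (hdisj hD),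
      Finset.sdiff_eq_empty_iff_subset.2 hCB, Finset.union_empty]

section SFT

variable {A : Type*} {M : A → A → Prop}

theorem sftShift_iterate_apply (x : sftSpace M) (m : ℕ) (j : ℤ) :
    ((sftShift M)^[m] x).1 j = x.1 (j + m) := by
  induction m generalizing x with
  | zero => simp
  | succ m ih =>
    rw [Function.iterate_succ_apply, ih]
    simp only [sftShift, Nat.cast_succ]
    ring_nf

theorem sftSpace_nonempty [Nonempty A] (hM2 : ∀ a b : A, ∃ c, M a c ∧ M c b) :
    Nonempty (sftSpace M) := by
  obtain ⟨a⟩ := ‹Nonempty A›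
  obtain ⟨c, hac, hca⟩ := hM2 a a
  refine ⟨⟨fun j => if Even j then a else c, fun j => ?_⟩⟩
  by_cases h : Even j <;> simp [h, ← Int.not_even_iff_odd, hac, hca]

theorem sftSpace_exists_glue (hM2 : ∀ a b : A, ∃ c, M a c ∧ M c b) (x y : sftSpace M) (t : ℤ) :
    ∃ z : sftSpace M, (∀ j ≤ t, z.1 j = x.1 j) ∧ ∀ j, t + 2 ≤ j → z.1 j = y.1 j := by
  obtain ⟨c, hxc, hcy⟩ := hM2 (x.1 t) (y.1 (t + 2))
  refine ⟨⟨fun j => if j ≤ t then x.1 j else if j = t + 1 then c else y.1 j, fun j => ?_⟩,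
    fun j hj => if_pos hj,
    fun j hj => by simp [show ¬ j ≤ t by omega, show j ≠ t + 1 by omega]⟩
  rcases lt_trichotomy j t with h | rfl | h
  · simpa [h.le, show j + 1 ≤ t by omega] using x.2 j
  · simpa using hxc
  · rcases (show j = t + 1 ∨ t + 1 < j by omega) with rfl | h'
    · simpa [show t + 1 + 1 = t + 2 by ring] using hcy
    · simpa [show ¬ j ≤ t by omega, show j ≠ t + 1 by omega, show ¬ j + 1 ≤ t by omega,
        show j + 1 ≠ t + 1 by omega] using y.2 j

theorem sftLang_eq_range (k : ℕ) (t : ℤ) :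
    sftLang M k = range fun x : sftSpace M => fun j : Fin k => x.1 (t + j) := by
  refine Subset.antisymm ?_ fun _ ⟨x, hx⟩ => ⟨x, t, fun j => by rw [← hx]⟩
  rintro w ⟨x, s, hx⟩
  refine ⟨⟨fun j => x.1 (j + (s - t)),
    fun j => by simpa [add_right_comm] using x.2 (j + (s - t))⟩, funext fun j => ?_⟩
  rw [hx]
  ring_nf

theorem joinCover_timeZeroCover [Nonempty A] {n : ℕ} (S : Finset (Fin n)) :
    joinCover (sftShift M) (timeZeroCover M) S =
      range fun p : S → A =>
        (fun x : sftSpace M => fun i : S => x.1 ((i : Fin n) : ℕ)) ⁻¹' {p} := by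
  ext V
  simp only [joinCover, timeZeroCover, mem_ofPred_eq, mem_range]
  constructor
  · rintro ⟨f, hf, rfl⟩
    choose a ha using hf
    refine ⟨fun i => a i, ?_⟩
    ext x
    simp [← ha, sftShift_iterate_apply, funext_iff]
  · rintro ⟨p, rfl⟩
    refine ⟨fun i => {x | x.1 0 = if h : i ∈ S then p ⟨i, h⟩ else Classical.arbitrary A},
      fun i => ⟨_, rfl⟩, ?_⟩
    ext x
    simp only [mem_preimage, mem_singleton_iff, mem_iInter, mem_ofPred_eq, sftShift_iterate_apply,
      zero_add, funext_iff, Subtype.forall]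
    exact forall₂_congr fun i hi => by rw [dif_pos hi]

variable (M) in
def sftPatterns (T : Finset ℕ) : Set (T → A) :=
  range fun x : sftSpace M => fun j : T => x.1 (j : ℕ)

theorem ncard_sftPatterns_union_Ico (hM2 : ∀ a b : A, ∃ c, M a c ∧ M c b) {T : Finset ℕ}
    {i k : ℕ} (hT : ∀ j ∈ T, j + 2 ≤ i) :
    (sftPatterns M (T ∪ Finset.Ico i (i + k))).ncard =
      (sftPatterns M T).ncard * (sftLang M k).ncard := by
  let Ψ : (↥(T ∪ Finset.Ico i (i + k)) → A) → (↥T → A) × (Fin k → A) := fun g =>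
    (fun j => g ⟨j, Finset.mem_union_left _ j.2⟩,
      fun j => g ⟨i + j, Finset.mem_union_right _ (by simp)⟩)
  have hΨ : Function.Injective Ψ := by
    intro g g' h
    funext ⟨j, hj⟩
    rcases Finset.mem_union.1 hj with hj | hj
    · exact congrFun (congrArg Prod.fst h) ⟨j, hj⟩
    · rw [Finset.mem_Ico] at hj
      obtain ⟨d, rfl⟩ : ∃ d, j = i + d := ⟨j - i, by omega⟩
      exact congrFun (congrArg Prod.snd h) ⟨d, by omega⟩
  have himage : Ψ '' sftPatterns M (T ∪ Finset.Ico i (i + k)) =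
      sftPatterns M T ×ˢ sftLang M k := by
    rw [sftPatterns, ← range_comp, sftLang_eq_range k i]
    refine Subset.antisymm (range_subset_iff.2 fun x => ⟨⟨x, rfl⟩, x, by ext; simp [Ψ]⟩) ?_
    rintro ⟨-, -⟩ ⟨⟨x, rfl⟩, y, rfl⟩
    obtain ⟨z, hzx, hzy⟩ := sftSpace_exists_glue hM2 x y (i - 2)
    refine ⟨z, Prod.ext (funext fun j => ?_) (funext fun j => ?_)⟩
    · exact hzx _ (by have := hT j j.2; dsimp only; omega)
    · simpa [Ψ] using hzy (i + j) (by omega)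
  rw [← ncard_image_of_injective _ hΨ, himage, ncard_prod]

end SFT

section Runs

def IsMaxRun (T : Finset ℕ) (i k : ℕ) : Prop :=
  0 < k ∧ Finset.Ico i (i + k) ⊆ T ∧ (∀ j ∈ T, j + 1 ≠ i) ∧ i + k ∉ T

open scoped Classical in
noncomputable def runs (T : Finset ℕ) : Finset (ℕ × ℕ) :=
  (T ×ˢ Finset.range (T.card + 1)).filter fun p => IsMaxRun T p.1 p.2

theorem mem_runs {T : Finset ℕ} {p : ℕ × ℕ} : p ∈ runs T ↔ IsMaxRun T p.1 p.2 := by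
  classical
  refine ⟨fun h => (Finset.mem_filter.1 h).2,
    fun h => Finset.mem_filter.2 ⟨Finset.mem_product.2 ⟨?_, ?_⟩, h⟩⟩
  · exact h.2.1 (by simp [h.1])
  · simpa [Nat.lt_succ_iff] using Finset.card_le_card h.2.1

theorem runs_empty : runs ∅ = ∅ := by
  ext ⟨i, k⟩
  simp only [mem_runs, IsMaxRun, Finset.subset_empty, Finset.Ico_eq_empty_iff,
    Finset.notMem_empty, iff_false]
  omega

theorem exists_eq_union_Ico {T : Finset ℕ} (hT : T.Nonempty) :
    ∃ T' i k, 0 < k ∧ (∀ j ∈ T', j + 2 ≤ i) ∧ T = T' ∪ Finset.Ico i (i + k) := by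
  classical
  set m := T.max' hT
  have hex : ∃ i, Finset.Ico i (m + 1) ⊆ T := ⟨m, by simp [m, T.max'_mem hT]⟩
  have hi : Finset.Ico (Nat.find hex) (m + 1) ⊆ T := Nat.find_spec hex
  have him : Nat.find hex ≤ m := Nat.find_min' hex (by simp [m, T.max'_mem hT])
  refine ⟨T.filter (· + 2 ≤ Nat.find hex), Nat.find hex, m + 1 - Nat.find hex, by omega,
    fun j hj => (Finset.mem_filter.1 hj).2, ?_⟩
  rw [show Nat.find hex + (m + 1 - Nat.find hex) = m + 1 by omega]
  ext j
  simp only [Finset.mem_union, Finset.mem_filter, Finset.mem_Ico]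
  refine ⟨fun hj => ?_, by rintro (⟨hj, -⟩ | hj); exacts [hj, hi (Finset.mem_Ico.2 hj)]⟩
  rcases lt_or_ge j (Nat.find hex) with hlt | hge
  · refine Or.inl ⟨hj, by_contra fun hj2 => Nat.find_min hex hlt fun l hl => ?_⟩
    rw [Finset.mem_Ico] at hl
    rcases (show l = j ∨ Nat.find hex ≤ l by omega) with rfl | hl'
    · exact hj
    · exact hi (Finset.mem_Ico.2 ⟨hl', hl.2⟩)
  · exact Or.inr ⟨hge, Nat.lt_succ_of_le (T.le_max' j hj)⟩

theorem runs_union_Ico {T : Finset ℕ} {i k : ℕ} (hk : 0 < k) (hT : ∀ j ∈ T, j + 2 ≤ i) :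
    runs (T ∪ Finset.Ico i (i + k)) = insert (i, k) (runs T) := by
  ext ⟨a, b⟩
  simp only [Finset.mem_insert, mem_runs, IsMaxRun, Prod.mk.injEq, Finset.subset_iff,
    Finset.mem_union, Finset.mem_Ico]
  constructor
  · rintro ⟨hb, hsub, hleft, hright⟩
    by_cases hia : i ≤ a
    · have ha : a < i + k := by
        rcases hsub ⟨le_rfl, by omega⟩ with h | h
        · have := hT a h; omega
        · exact h.2
      have ha_eq : a = i :=
        by_contra fun hai => hleft (a - 1) (Or.inr ⟨by omega, by omega⟩) (by omega)
      have hend : a + b = i + k := by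
        rcases hsub (x := a + b - 1) ⟨by omega, by omega⟩ with h | h
        · have := hT _ h; omega
        · by_contra; exact hright (Or.inr ⟨by omega, by omega⟩)
      exact Or.inl ⟨ha_eq, by omega⟩
    · have hab : a + b + 1 ≤ i := by
        by_contra
        rcases hsub (x := i - 1) ⟨by omega, by omega⟩ with h | h
        · have := hT _ h; omega
        · omega
      exact Or.inr ⟨hb, fun j hj => (hsub hj).resolve_right (by omega),
        fun j hj => hleft j (Or.inl hj), fun h => hright (Or.inl h)⟩
  · rintro (⟨rfl, rfl⟩ | ⟨hb, hsub, hleft, hright⟩)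
    · refine ⟨hk, fun j hj => Or.inr hj, ?_, ?_⟩
      · rintro j (hj | hj) hji
        · have := hT j hj; omega
        · omega
      · rintro (h | h)
        · have := hT _ h; omega
        · omega
    · have hlast := hT _ (hsub (x := a + b - 1) ⟨by omega, by omega⟩)
      refine ⟨hb, fun j hj => Or.inl (hsub hj), ?_, ?_⟩
      · rintro j (hj | hj) hja
        · exact hleft j hj hja
        · omega
      · rintro (h | h)
        · exact hright h
        · omega

end Runs

section Patterns

variable {A : Type*} [Nonempty A] {M : A → A → Prop}

theorem ncard_sftPatterns_eq_prod (hM2 : ∀ a b : A, ∃ c, M a c ∧ M c b) (T : Finset ℕ) :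
    (sftPatterns M T).ncard = ∏ p ∈ runs T, (sftLang M p.2).ncard := by
  induction T using Finset.strongInduction with
  | H T ih =>
  rcases T.eq_empty_or_nonempty with rfl | hT
  · have := sftSpace_nonempty hM2
    rw [runs_empty, Finset.prod_empty, sftPatterns, (range_nonempty _).eq_univ, ncard_univ,
      Nat.card_unique]
  · obtain ⟨T', i, k, hk, hT', rfl⟩ := exists_eq_union_Ico hT
    have hi : i ∉ T' := fun h => by have := hT' i h; omega
    have hiK : i ∈ Finset.Ico i (i + k) := by simp [hk]
    have hssub : T' ⊂ T' ∪ Finset.Ico i (i + k) :=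
      (Finset.ssubset_iff_of_subset Finset.subset_union_left).2
        ⟨i, Finset.mem_union_right _ hiK, hi⟩
    rw [ncard_sftPatterns_union_Ico hM2 hT', runs_union_Ico hk hT',
      Finset.prod_insert fun h => hi ((mem_runs.1 h).2.1 hiK), ih T' hssub, mul_comm]

variable [Finite A]

theorem ncard_sftLang_pos (hM2 : ∀ a b : A, ∃ c, M a c ∧ M c b) (k : ℕ) :
    0 < (sftLang M k).ncard := by
  have := sftSpace_nonempty hM2
  rw [sftLang_eq_range k 0]
  exact (ncard_pos (toFinite _)).2 (range_nonempty _)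

theorem log_ncard_sftPatterns (hM2 : ∀ a b : A, ∃ c, M a c ∧ M c b) (T : Finset ℕ) :
    Real.log (sftPatterns M T).ncard = ∑ p ∈ runs T, Real.log (sftLang M p.2).ncard := by
  rw [ncard_sftPatterns_eq_prod hM2, Nat.cast_prod, Real.log_prod]
  exact fun p _ => by exact_mod_cast (ncard_sftLang_pos hM2 p.2).ne'

theorem coverNum_joinCover_timeZeroCover {n : ℕ} (S : Finset (Fin n)) :
    coverNum (joinCover (sftShift M) (timeZeroCover M) S) =
      (sftPatterns M (S.image Fin.val)).ncard := by
  rw [joinCover_timeZeroCover, coverNum_range_preimage_singleton _ (toFinite _)]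
  let e : S → S.image Fin.val := fun i => ⟨i.1, Finset.mem_image_of_mem _ i.2⟩
  have he : Function.Surjective e := by
    rintro ⟨_, h⟩
    obtain ⟨i, hi, rfl⟩ := Finset.mem_image.1 h
    exact ⟨⟨i, hi⟩, rfl⟩
  rw [sftPatterns, ← ncard_image_of_injective _ he.injective_comp_right, ← range_comp]
  rfl

end Patterns

section RunCount

open Finset

def runCore (n i k : ℕ) : Finset (Fin n) := {j | i ≤ j ∧ (j : ℕ) < i + k}

def runWindow (n i k : ℕ) : Finset (Fin n) := {j | i ≤ j + 1 ∧ (j : ℕ) ≤ i + k}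

theorem mem_runs_image_val {n i k : ℕ} {S : Finset (Fin n)}
    (h : (i, k) ∈ runs (S.image Fin.val)) : 0 < k ∧ i + k ≤ n := by
  obtain ⟨hk, hsub, -, -⟩ := mem_runs.1 h
  obtain ⟨j, -, hj⟩ := Finset.mem_image.1
    (hsub (Finset.mem_Ico.2 (show i ≤ i + k - 1 ∧ i + k - 1 < i + k by omega)))
  exact ⟨hk, by omega⟩

theorem mem_runs_image_val_iff {n i k : ℕ} (hk : 0 < k) (hikn : i + k ≤ n)
    (S : Finset (Fin n)) :
    (i, k) ∈ runs (S.image Fin.val) ↔ S ∩ runWindow n i k = runCore n i k := by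
  rw [mem_runs]
  constructor
  · rintro ⟨-, hsub, hleft, hright⟩
    ext j
    simp only [runWindow, runCore, Finset.mem_inter, Finset.mem_filter, Finset.mem_univ,
      true_and]
    constructor
    · rintro ⟨hjS, h1, h2⟩
      have hj : (j : ℕ) ∈ S.image Fin.val := Finset.mem_image_of_mem _ hjS
      have := hleft _ hj
      have : (j : ℕ) ≠ i + k := fun h => hright (h ▸ hj)
      omega
    · rintro ⟨h1, h2⟩
      obtain ⟨j', hj'S, hj'⟩ := Finset.mem_image.1 (hsub (Finset.mem_Ico.2 ⟨h1, h2⟩))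
      exact ⟨Fin.ext hj' ▸ hj'S, by omega, by omega⟩
  · intro h
    have hmem (j : Fin n) :
        j ∈ S ∧ i ≤ j + 1 ∧ (j : ℕ) ≤ i + k ↔ i ≤ j ∧ (j : ℕ) < i + k := by
      simpa [runWindow, runCore] using Finset.ext_iff.1 h j
    refine ⟨hk, fun m hm => ?_, fun m hm hmi => ?_, fun hm => ?_⟩
    · rw [Finset.mem_Ico] at hm
      exact Finset.mem_image.2 ⟨⟨m, by omega⟩, ((hmem _).2 hm).1, rfl⟩
    · obtain ⟨j, hjS, rfl⟩ := Finset.mem_image.1 hm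
      have := (hmem j).1 ⟨hjS, by omega, by omega⟩
      omega
    · obtain ⟨j, hjS, hj⟩ := Finset.mem_image.1 hm
      have := (hmem j).1 ⟨hjS, by omega, by omega⟩
      omega

theorem card_runWindow {n i k : ℕ} (hikn : i + k ≤ n) :
    #(runWindow n i k) = k + (if 0 < i then 1 else 0) + (if i + k < n then 1 else 0) := by
  have hmap : (runWindow n i k).map Fin.valEmbedding = Finset.Ico (i - 1) (min n (i + k + 1)) := by
    ext m
    simp only [runWindow, Finset.mem_map, Finset.mem_filter, Finset.mem_univ, true_and,
      Fin.valEmbedding_apply, Fin.exists_iff, Finset.mem_Ico]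
    constructor
    · rintro ⟨m, hm, ⟨h1, h2⟩, rfl⟩
      omega
    · intro h
      exact ⟨m, by omega, ⟨by omega, by omega⟩, rfl⟩
  rw [← Finset.card_map Fin.valEmbedding, hmap, Nat.card_Ico, Nat.min_def]
  split_ifs <;> omega

theorem card_filter_mem_runs {n i k : ℕ} (hk : 0 < k) (hikn : i + k ≤ n) :
    #{S : Finset (Fin n) | (i, k) ∈ runs (S.image Fin.val)} =
      2 ^ (n - (k + (if 0 < i then 1 else 0) + (if i + k < n then 1 else 0))) := by
  have hCB : runCore n i k ⊆ runWindow n i k := by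
    intro j
    simp only [runCore, runWindow, Finset.mem_filter, Finset.mem_univ, true_and]
    omega
  rw [Finset.filter_congr fun S _ => mem_runs_image_val_iff hk hikn S, card_filter_inter_eq hCB,
    Fintype.card_fin, card_runWindow hikn]

theorem card_filter_mem_runs_eq_zero {n i k : ℕ} (h : ¬(0 < k ∧ i + k ≤ n)) :
    #{S : Finset (Fin n) | (i, k) ∈ runs (S.image Fin.val)} = 0 :=
  Finset.card_eq_zero.2 (Finset.filter_eq_empty_iff.2 fun _ _ hS => h (mem_runs_image_val hS))

noncomputable def runCount (n k : ℕ) : ℕ :=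
  ∑ i ∈ range n, #{S : Finset (Fin n) | (i, k) ∈ runs (S.image Fin.val)}

theorem runCount_zero_right (n : ℕ) : runCount n 0 = 0 :=
  Finset.sum_eq_zero fun _ _ => card_filter_mem_runs_eq_zero (by omega)

theorem runCount_eq_zero_of_lt {n k : ℕ} (h : n < k) : runCount n k = 0 :=
  Finset.sum_eq_zero fun _ _ => card_filter_mem_runs_eq_zero (by omega)

theorem runCount_mul_pow_le (n k : ℕ) : runCount n k * 2 ^ k ≤ n * 2 ^ n := by
  rw [runCount, Finset.sum_mul]
  calc ∑ i ∈ range n, #{S : Finset (Fin n) | (i, k) ∈ runs (S.image Fin.val)} * 2 ^ k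
      ≤ ∑ _i ∈ range n, 2 ^ n := Finset.sum_le_sum fun i _ => ?_
    _ = n * 2 ^ n := by rw [Finset.sum_const, Finset.card_range, smul_eq_mul]
  by_cases h : 0 < k ∧ i + k ≤ n
  · rw [card_filter_mem_runs h.1 h.2, ← pow_add]
    exact Nat.pow_le_pow_right two_pos (by omega)
  · rw [card_filter_mem_runs_eq_zero h, zero_mul]
    exact Nat.zero_le _

theorem four_mul_runCount_mul_pow {n k : ℕ} (hk : 0 < k) (hkn : k < n) :
    4 * runCount n k * 2 ^ k = (n - k + 3) * 2 ^ n := by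
  obtain ⟨d, rfl⟩ : ∃ d, n = k + d + 1 := ⟨n - k - 1, by omega⟩
  have hsum : runCount (k + d + 1) k =
      ∑ i ∈ range (d + 2),
        #{S : Finset (Fin (k + d + 1)) | (i, k) ∈ runs (S.image Fin.val)} :=
    (Finset.sum_subset (Finset.range_subset_range.2 (by omega)) fun i _ hi =>
      card_filter_mem_runs_eq_zero (by rw [Finset.mem_range] at hi; omega)).symm
  -- the two runs touching an end of `n*` have one boundary cell, the `d` others have two
  have hfirst : #{S : Finset (Fin (k + d + 1)) | (0, k) ∈ runs (S.image Fin.val)} = 2 ^ d := by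
    rw [card_filter_mem_runs hk (by omega), if_neg (by omega), if_pos (by omega)]
    congr 1
    omega
  have hlast : #{S : Finset (Fin (k + d + 1)) | (d + 1, k) ∈ runs (S.image Fin.val)} = 2 ^ d := by
    rw [card_filter_mem_runs hk (by omega), if_pos (by omega), if_neg (by omega)]
    congr 1
    omega
  have hmid : ∀ i ∈ range d,
      #{S : Finset (Fin (k + d + 1)) | (i + 1, k) ∈ runs (S.image Fin.val)} = 2 ^ (d - 1) := by
    intro i hi
    rw [Finset.mem_range] at hi
    rw [card_filter_mem_runs hk (by omega), if_pos (by omega), if_pos (by omega)]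
    congr 1
    omega
  rw [hsum, Finset.sum_range_succ, Finset.sum_range_succ', Finset.sum_congr rfl hmid, hfirst,
    hlast, Finset.sum_const, Finset.card_range, smul_eq_mul,
    show k + d + 1 - k + 3 = d + 4 by omega]
  rcases d with _ | d
  · ring
  · rw [Nat.add_sub_cancel]
    ring

theorem runCount_div_le (n k : ℕ) : (runCount n k : ℝ) / (n * 2 ^ n) ≤ 1 / 2 ^ k := by
  rcases n.eq_zero_or_pos with rfl | hn
  · simp
  rw [div_le_div_iff₀ (by positivity) (by positivity), one_mul]
  exact_mod_cast runCount_mul_pow_le n k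

theorem tendsto_runCount_div {k : ℕ} (hk : 0 < k) :
    Tendsto (fun n : ℕ => (runCount n k : ℝ) / (n * 2 ^ n)) atTop (𝓝 (1 / 4 / 2 ^ k)) := by
  have hlim : Tendsto (fun n : ℕ => (1 + (3 - k : ℝ) / n) / (4 * 2 ^ k)) atTop
      (𝓝 ((1 + 0) / (4 * 2 ^ k))) :=
    ((tendsto_const_div_atTop_nhds_zero_nat _).const_add 1).div_const _
  rw [add_zero] at hlim
  rw [div_div]
  refine hlim.congr' ((eventually_gt_atTop k).mono fun n hkn => ?_)
  have hcount : (4 * runCount n k * 2 ^ k : ℝ) = ((n - k : ℕ) + 3) * 2 ^ n := by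
    exact_mod_cast four_mul_runCount_mul_pow hk hkn
  rw [Nat.cast_sub hkn.le] at hcount
  have hn : (n : ℝ) ≠ 0 := Nat.cast_ne_zero.2 (by omega)
  field_simp
  linear_combination -hcount

end RunCount

section Entropy

variable {A : Type*} [Fintype A] [Nonempty A] {M : A → A → Prop}

theorem log_ncard_sftLang_nonneg (hM2 : ∀ a b : A, ∃ c, M a c ∧ M c b) (k : ℕ) :
    0 ≤ Real.log (sftLang M k).ncard :=
  Real.log_nonneg (by exact_mod_cast ncard_sftLang_pos hM2 k)

theorem log_ncard_sftLang_le (hM2 : ∀ a b : A, ∃ c, M a c ∧ M c b) (k : ℕ) :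
    Real.log (sftLang M k).ncard ≤ k * Real.log (Fintype.card A) := by
  have hle : (sftLang M k).ncard ≤ Fintype.card A ^ k := by
    simpa [Nat.card_eq_fintype_card] using ncard_le_card (sftLang M k)
  rw [← Real.log_pow]
  exact Real.log_le_log (by exact_mod_cast ncard_sftLang_pos hM2 k) (by exact_mod_cast hle)

theorem summable_log_ncard_sftLang_div_pow (hM2 : ∀ a b : A, ∃ c, M a c ∧ M c b) :
    Summable fun k => Real.log (sftLang M k).ncard / 2 ^ k := by
  have hgeom := (summable_pow_mul_geometric_of_norm_lt_one 1 (r := (2 : ℝ)⁻¹)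
    (by norm_num)).mul_left (Real.log (Fintype.card A))
  refine hgeom.of_nonneg_of_le
    (fun k => div_nonneg (log_ncard_sftLang_nonneg hM2 k) (by positivity)) fun k => ?_
  rw [pow_one, inv_pow, ← div_eq_mul_inv, mul_div_assoc', mul_comm]
  exact div_le_div_of_nonneg_right (log_ncard_sftLang_le hM2 k) (by positivity)

open Finset in
theorem sum_log_coverNum (hM2 : ∀ a b : A, ∃ c, M a c ∧ M c b) (n : ℕ) :
    ∑ S : Finset (Fin n), Real.log (coverNum (joinCover (sftShift M) (timeZeroCover M) S)) =
      ∑ k ∈ range n, (runCount n (k + 1) : ℝ) * Real.log (sftLang M (k + 1)).ncard := by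
  classical
  set R := range n ×ˢ range (n + 1)
  have hsub (S : Finset (Fin n)) : runs (S.image Fin.val) ⊆ R := by
    rintro ⟨i, k⟩ h
    have := mem_runs_image_val h
    simp only [R, Finset.mem_product, Finset.mem_range]
    omega
  calc ∑ S : Finset (Fin n), Real.log (coverNum (joinCover (sftShift M) (timeZeroCover M) S))
      = ∑ S : Finset (Fin n), ∑ p ∈ R,
          if p ∈ runs (S.image Fin.val) then Real.log (sftLang M p.2).ncard else 0 := by
        refine Finset.sum_congr rfl fun S _ => ?_
        rw [coverNum_joinCover_timeZeroCover, log_ncard_sftPatterns hM2, Finset.sum_ite_mem,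
          Finset.inter_eq_right.2 (hsub S)]
    _ = ∑ p ∈ R, (#{S : Finset (Fin n) | p ∈ runs (S.image Fin.val)} : ℝ) *
          Real.log (sftLang M p.2).ncard := by
        rw [Finset.sum_comm]
        refine Finset.sum_congr rfl fun p _ => ?_
        rw [← Finset.sum_filter, Finset.sum_const, nsmul_eq_mul]
    _ = ∑ k ∈ range (n + 1), (runCount n k : ℝ) * Real.log (sftLang M k).ncard := by
        simp only [R, Finset.sum_product_right, runCount, Nat.cast_sum, Finset.sum_mul]
    _ = _ := by
        rw [Finset.sum_range_succ', runCount_zero_right, Nat.cast_zero, zero_mul, add_zero]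

end Entropy

/-- for a one-step SFT whose adjacency matrix `M` satisfies `M² > 0`,
with uniform coefficients `c_S^n = 2^{-n}`, the topological average sample complexity with
respect to the time-zero cover equals `(1/4)·∑_{k≥1} log|ℒ_k(X)| / 2^k`. -/
theorem asc_of_SFT_eq_series
    {A : Type*} [Fintype A] [Nonempty A] (M : A → A → Prop)
    (hM2 : ∀ a b : A, ∃ c : A, M a c ∧ M c b) :
    Tendsto (fun n : ℕ =>
        (1 / (n : ℝ)) * ∑ S : Finset (Fin n), (1 / 2 ^ n : ℝ) *
          Real.log (coverNum (joinCover (sftShift M) (timeZeroCover M) S)))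
      atTop
      (𝓝 ((1 / 4) * ∑' k : ℕ, Real.log ((sftLang M (k + 1)).ncard) / 2 ^ (k + 1))) := by
  have hterm (n : ℕ) :
      (1 / (n : ℝ)) * ∑ S : Finset (Fin n), (1 / 2 ^ n : ℝ) *
          Real.log (coverNum (joinCover (sftShift M) (timeZeroCover M) S)) =
        ∑' k, (runCount n (k + 1) : ℝ) / (n * 2 ^ n) * Real.log (sftLang M (k + 1)).ncard := by
    rw [← Finset.mul_sum, sum_log_coverNum hM2, tsum_eq_sum (s := Finset.range n) fun k hk => by
      rw [runCount_eq_zero_of_lt (by rw [Finset.mem_range] at hk; omega), Nat.cast_zero,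
        zero_div, zero_mul], Finset.mul_sum, Finset.mul_sum]
    exact Finset.sum_congr rfl fun k _ => by ring
  simp_rw [hterm, ← tsum_mul_left]
  refine tendsto_tsum_of_dominated_convergence
    ((summable_nat_add_iff 1).2 (summable_log_ncard_sftLang_div_pow hM2))
    (fun k => ?_) (Eventually.of_forall fun n k => ?_)
  · convert (tendsto_runCount_div (k := k + 1) (by omega)).mul_const
      (Real.log (sftLang M (k + 1)).ncard) using 2
    ring
  · have hlog := log_ncard_sftLang_nonneg hM2 (k + 1)
    rw [Real.norm_eq_abs, abs_of_nonneg (mul_nonneg (by positivity) hlog)]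
    exact (mul_le_mul_of_nonneg_right (runCount_div_le n (k + 1)) hlog).trans_eq
      (one_div_mul_eq_div _ _)
end

section
/- Let (X,T) be a topological dynamical system and take the uniform system of coefficients c_S^n = 2^{−n}. Then the supremum over all finite open covers 𝒰 of X of the topological average sample complexity equals the topological entropy: sup_𝒰 Asc(X,𝒰,T) = h_top(X,T). -/
/-!
Write `h(𝒰) = lim (1/n) log N(𝒰_{n*})`. Since `N(𝒰_S) ≤ N(𝒰_{n*})` for every `S ⊆ n*`,
`Asc(𝒰) ≤ h(𝒰)`. Conversely, let `𝒱 = 𝒰_{k*}`. For `S ⊆ n*` the cover `𝒱_S` refines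
`𝒰_{S + k*}`, and each time of `(n+k)*` missed by `S + k*` costs at most a factor `N(𝒰)`.
For a uniformly random `S`, a time `t ∈ [k-1, n)` is missed with probability `2^{-k}`, so
`h(𝒰) ≤ Asc(𝒱) + 2^{-k} log N(𝒰)`, and `k → ∞` gives the reverse inequality. Both limits exist
by Fekete's lemma: `log N(𝒰_A)` is subadditive under unions of time sets and does not increase
under time shifts.
-/

open Set Filter Topology

open scoped Pointwise

theorem Real.log_natCast_le_log_natCast {m n : ℕ} (h : m ≤ n) : Real.log m ≤ Real.log n := by
  rcases m.eq_zero_or_pos with rfl | hm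
  · simpa using Real.log_natCast_nonneg n
  · exact Real.log_le_log (by positivity) (by exact_mod_cast h)

theorem Real.log_natCast_le_add_of_le_mul {m a b : ℕ} (h : m ≤ a * b) :
    Real.log m ≤ Real.log a + Real.log b := by
  rcases eq_or_ne a 0 with rfl | ha
  · simp_all [Real.log_natCast_nonneg]
  rcases eq_or_ne b 0 with rfl | hb
  · simp_all [Real.log_natCast_nonneg]
  rw [← Real.log_mul (by positivity) (by positivity)]
  exact_mod_cast Real.log_natCast_le_log_natCast h

theorem Finset.sum_powerset_union {α M : Type*} [DecidableEq α] [AddCommMonoid M]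
    {s t : Finset α} (h : Disjoint s t) (f : Finset α → M) :
    ∑ A ∈ (s ∪ t).powerset, f A = ∑ B ∈ s.powerset, ∑ C ∈ t.powerset, f (B ∪ C) := by
  induction t using Finset.induction_on generalizing f with
  | empty => simp
  | insert a t ha ih =>
    obtain ⟨has, hst⟩ := Finset.disjoint_insert_right.1 h
    rw [Finset.union_insert, Finset.sum_powerset_insert (by simp [has, ha]), ih hst,
      ih hst fun A => f (insert a A)]
    simp only [Finset.sum_powerset_insert ha, Finset.union_insert, Finset.sum_add_distrib]

theorem Finset.sum_powerset_image_add_left {M : Type*} [AddCommMonoid M] (m : ℕ)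
    (s : Finset ℕ) (f : Finset ℕ → M) :
    ∑ A ∈ (s.image (m + ·)).powerset, f A = ∑ A ∈ s.powerset, f (A.image (m + ·)) := by
  rw [Finset.powerset_image, Finset.sum_image
    (Finset.image_injOn_powerset_of_injOn (add_right_injective m).injOn)]

theorem Finset.range_add_eq_union_image (m n : ℕ) :
    Finset.range (m + n) = Finset.range m ∪ (Finset.range n).image (m + ·) := by
  rw [Finset.range_add, Finset.map_eq_image]
  rfl

theorem Finset.disjoint_range_image_add_left (m : ℕ) (s : Finset ℕ) :
    Disjoint (Finset.range m) (s.image (m + ·)) := by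
  simp only [Finset.disjoint_left, Finset.mem_range, Finset.mem_image]
  omega

theorem Subadditive.exists_tendsto_div_of_nonneg {u : ℕ → ℝ} (hu : Subadditive u)
    (h0 : ∀ n, 0 ≤ u n) : ∃ a, Tendsto (fun n => u n / n) atTop (𝓝 a) :=
  ⟨hu.lim, hu.tendsto_lim ⟨0, by rintro _ ⟨n, rfl⟩; exact div_nonneg (h0 n) n.cast_nonneg⟩⟩

theorem Finset.image_val_univ_fin (n : ℕ) :
    (Finset.univ : Finset (Fin n)).image Fin.val = Finset.range n := by
  rw [← Nat.Iio_eq_range, ← Fin.map_valEmbedding_univ, Finset.map_eq_image]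
  rfl

theorem Finset.sum_finset_fin_image_val {M : Type*} [AddCommMonoid M] (n : ℕ)
    (g : Finset ℕ → M) :
    ∑ S : Finset (Fin n), g (S.image Fin.val) = ∑ A ∈ (Finset.range n).powerset, g A := by
  rw [← Finset.image_val_univ_fin, Finset.powerset_image,
    Finset.sum_image (Finset.image_injOn_powerset_of_injOn Fin.val_injective.injOn),
    Finset.powerset_univ]

section

variable {X : Type*}

def HasFiniteSubcover (𝒲 : Set (Set X)) : Prop :=
  ∃ F : Finset (Set X), ↑F ⊆ 𝒲 ∧ ⋃₀ (F : Set (Set X)) = univ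

theorem HasFiniteSubcover.of_finite {𝒲 : Set (Set X)} (h𝒲 : 𝒲.Finite) (hc : ⋃₀ 𝒲 = univ) :
    HasFiniteSubcover 𝒲 :=
  ⟨h𝒲.toFinset, by simp, by simpa using hc⟩

section coverNum

variable {𝒱 𝒲 𝒵 : Set (Set X)}

theorem HasFiniteSubcover.exists_card_eq_coverNum (h : HasFiniteSubcover 𝒲) :
    ∃ F : Finset (Set X), ↑F ⊆ 𝒲 ∧ F.card = coverNum 𝒲 ∧ ⋃₀ (F : Set (Set X)) = univ := by
  obtain ⟨F, hF, hcov⟩ := h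
  exact Nat.sInf_mem (s := {m | ∃ F : Finset (Set X), ↑F ⊆ 𝒲 ∧ F.card = m ∧
    ⋃₀ (F : Set (Set X)) = univ}) ⟨_, F, hF, rfl, hcov⟩

theorem coverNum_le_card_of_subcover {F : Finset (Set X)} (hF : ↑F ⊆ 𝒲)
    (hcov : ⋃₀ (F : Set (Set X)) = univ) : coverNum 𝒲 ≤ F.card :=
  Nat.sInf_le ⟨F, hF, rfl, hcov⟩

theorem coverNum_of_isEmpty [IsEmpty X] (𝒲 : Set (Set X)) : coverNum 𝒲 = 0 :=
  Nat.eq_zero_of_le_zero <| coverNum_le_card_of_subcover (F := ∅) (by simp)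
    (by simp [univ_eq_empty_iff.2 ‹_›])

theorem coverNum_le_card_s5 {ι : Type*} (s : Finset ι) (g : ι → Set X)
    (hcov : ∀ x, ∃ i ∈ s, x ∈ g i) (hg : ∀ i ∈ s, ∃ V ∈ 𝒱, g i ⊆ V) :
    coverNum 𝒱 ≤ s.card := by
  classical
  choose! V hV hgV using hg
  refine (coverNum_le_card_of_subcover (F := s.image V) ?_ (sUnion_eq_univ_iff.2 fun x => ?_)).trans
    Finset.card_image_le
  · simpa [Set.subset_def] using hV
  · obtain ⟨i, hi, hx⟩ := hcov x
    exact ⟨V i, by simpa using ⟨i, hi, rfl⟩, hgV i hi hx⟩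

theorem coverNum_le_of_preimage {Y : Type*} {𝒵 : Set (Set Y)} (f : Y → X)
    (h𝒲 : HasFiniteSubcover 𝒲) (h : ∀ W ∈ 𝒲, ∃ Z ∈ 𝒵, f ⁻¹' W ⊆ Z) :
    coverNum 𝒵 ≤ coverNum 𝒲 := by
  obtain ⟨F, hF, hcard, hcov⟩ := h𝒲.exists_card_eq_coverNum
  rw [← hcard]
  exact coverNum_le_card_s5 F (f ⁻¹' ·) (fun y => sUnion_eq_univ_iff.1 hcov (f y))
    fun W hW => h W (hF hW)

theorem coverNum_le_of_refines_s5 (h𝒲 : HasFiniteSubcover 𝒲) (h : ∀ W ∈ 𝒲, ∃ V ∈ 𝒱, W ⊆ V) :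
    coverNum 𝒱 ≤ coverNum 𝒲 :=
  coverNum_le_of_preimage id h𝒲 h

theorem coverNum_le_mul (h𝒱 : HasFiniteSubcover 𝒱) (h𝒲 : HasFiniteSubcover 𝒲)
    (h : ∀ V ∈ 𝒱, ∀ W ∈ 𝒲, ∃ Z ∈ 𝒵, V ∩ W ⊆ Z) :
    coverNum 𝒵 ≤ coverNum 𝒱 * coverNum 𝒲 := by
  obtain ⟨F, hF, hFcard, hFcov⟩ := h𝒱.exists_card_eq_coverNum
  obtain ⟨G, hG, hGcard, hGcov⟩ := h𝒲.exists_card_eq_coverNum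
  rw [← hFcard, ← hGcard, ← Finset.card_product]
  refine coverNum_le_card_s5 (F ×ˢ G) (fun p => p.1 ∩ p.2) (fun x => ?_) fun p hp => ?_
  · obtain ⟨V, hV, hxV⟩ := sUnion_eq_univ_iff.1 hFcov x
    obtain ⟨W, hW, hxW⟩ := sUnion_eq_univ_iff.1 hGcov x
    exact ⟨(V, W), Finset.mem_product.2 ⟨hV, hW⟩, hxV, hxW⟩
  · obtain ⟨hpF, hpG⟩ := Finset.mem_product.1 hp
    exact h _ (hF hpF) _ (hG hpG)

end coverNum

/-- `joinCover` with times in `ℕ` rather than `Fin n`, so that sets of times can be shifted and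
added. -/
def joinCoverNat (T : X → X) (𝒰 : Set (Set X)) (A : Finset ℕ) : Set (Set X) :=
  {V | ∃ f : ℕ → Set X, (∀ i ∈ A, f i ∈ 𝒰) ∧ V = ⋂ i ∈ A, T^[i] ⁻¹' f i}

namespace joinCoverNat

variable (T : X → X) {𝒰 : Set (Set X)}

theorem exists_superset_iff {W : Set X} {A : Finset ℕ} :
    (∃ V ∈ joinCoverNat T 𝒰 A, W ⊆ V) ↔ ∀ i ∈ A, ∃ U ∈ 𝒰, W ⊆ T^[i] ⁻¹' U := by
  constructor
  · rintro ⟨_, ⟨f, hf, rfl⟩, hW⟩ i hi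
    exact ⟨f i, hf i hi, hW.trans (biInter_subset_of_mem hi)⟩
  · intro h
    choose! f hf hWf using h
    exact ⟨_, ⟨f, hf, rfl⟩, subset_iInter₂ hWf⟩

theorem subset_preimage_of_mem {W : Set X} {A : Finset ℕ} (hW : W ∈ joinCoverNat T 𝒰 A) :
    ∀ i ∈ A, ∃ U ∈ 𝒰, W ⊆ T^[i] ⁻¹' U :=
  (exists_superset_iff T).1 ⟨W, hW, subset_rfl⟩

theorem finite (h𝒰 : 𝒰.Finite) (A : Finset ℕ) : (joinCoverNat T 𝒰 A).Finite := by
  refine ((Set.Finite.pi fun _ : A => h𝒰).image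
    fun g => ⋂ i : A, T^[i] ⁻¹' g i).subset ?_
  rintro _ ⟨f, hf, rfl⟩
  exact ⟨fun i => f i, fun i _ => hf i i.2, by simp [iInter_subtype]⟩

theorem sUnion_eq_univ (hc : ⋃₀ 𝒰 = univ) (A : Finset ℕ) : ⋃₀ joinCoverNat T 𝒰 A = univ := by
  refine sUnion_eq_univ_iff.2 fun x => ?_
  choose f hf hxf using fun i => sUnion_eq_univ_iff.1 hc (T^[i] x)
  exact ⟨_, ⟨f, fun i _ => hf i, rfl⟩, mem_iInter₂.2 fun i _ => hxf i⟩

theorem isOpen_of_mem [TopologicalSpace X] (hT : Continuous T) (ho : ∀ U ∈ 𝒰, IsOpen U)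
    {A : Finset ℕ} : ∀ V ∈ joinCoverNat T 𝒰 A, IsOpen V := by
  rintro _ ⟨f, hf, rfl⟩
  exact isOpen_biInter_finset fun i hi => (ho _ (hf i hi)).preimage (hT.iterate i)

theorem mono_cover {𝒰' : Set (Set X)} (h : 𝒰 ⊆ 𝒰') (A : Finset ℕ) :
    joinCoverNat T 𝒰 A ⊆ joinCoverNat T 𝒰' A := by
  rintro _ ⟨f, hf, rfl⟩
  exact ⟨f, fun i hi => h (hf i hi), rfl⟩

end joinCoverNat

theorem HasFiniteSubcover.joinCoverNat {𝒰 : Set (Set X)} (h𝒰 : HasFiniteSubcover 𝒰)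
    (T : X → X) (A : Finset ℕ) : HasFiniteSubcover (joinCoverNat T 𝒰 A) := by
  obtain ⟨F, hF, hcov⟩ := h𝒰
  exact ⟨(joinCoverNat.finite T F.finite_toSet A).toFinset,
    by simpa using joinCoverNat.mono_cover T hF A,
    by simpa using joinCoverNat.sUnion_eq_univ T hcov A⟩

section joinCoverNat

variable (T : X → X) {𝒰 : Set (Set X)} (h𝒰 : HasFiniteSubcover 𝒰)
include h𝒰

theorem coverNum_joinCoverNat_mono {A B : Finset ℕ} (hAB : A ⊆ B) :
    coverNum (joinCoverNat T 𝒰 A) ≤ coverNum (joinCoverNat T 𝒰 B) :=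
  coverNum_le_of_refines_s5 (h𝒰.joinCoverNat T B) fun _ hW =>
    (joinCoverNat.exists_superset_iff T).2 fun i hi =>
      joinCoverNat.subset_preimage_of_mem T hW i (hAB hi)

theorem coverNum_joinCoverNat_union_le (A B : Finset ℕ) :
    coverNum (joinCoverNat T 𝒰 (A ∪ B)) ≤
      coverNum (joinCoverNat T 𝒰 A) * coverNum (joinCoverNat T 𝒰 B) := by
  refine coverNum_le_mul (h𝒰.joinCoverNat T A) (h𝒰.joinCoverNat T B) fun V hV W hW =>
    (joinCoverNat.exists_superset_iff T).2 fun i hi => ?_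
  rcases Finset.mem_union.1 hi with hiA | hiB
  · obtain ⟨U, hU, hVU⟩ := joinCoverNat.subset_preimage_of_mem T hV i hiA
    exact ⟨U, hU, inter_subset_left.trans hVU⟩
  · obtain ⟨U, hU, hWU⟩ := joinCoverNat.subset_preimage_of_mem T hW i hiB
    exact ⟨U, hU, inter_subset_right.trans hWU⟩

theorem coverNum_joinCoverNat_singleton_le (i : ℕ) :
    coverNum (joinCoverNat T 𝒰 {i}) ≤ coverNum 𝒰 :=
  coverNum_le_of_preimage T^[i] h𝒰 fun U hU =>
    (joinCoverNat.exists_superset_iff T).2 fun j hj => ⟨U, hU, by rw [Finset.mem_singleton.1 hj]⟩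

theorem coverNum_joinCoverNat_add_le (A B : Finset ℕ) :
    coverNum (joinCoverNat T 𝒰 (B + A)) ≤
      coverNum (joinCoverNat T (joinCoverNat T 𝒰 A) B) := by
  refine coverNum_le_of_refines_s5 ((h𝒰.joinCoverNat T A).joinCoverNat T B) fun W hW =>
    (joinCoverNat.exists_superset_iff T).2 fun t ht => ?_
  obtain ⟨i, hi, j, hj, rfl⟩ := Finset.mem_add.1 ht
  obtain ⟨V, hV, hWV⟩ := joinCoverNat.subset_preimage_of_mem T hW i hi
  obtain ⟨U, hU, hVU⟩ := joinCoverNat.subset_preimage_of_mem T hV j hj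
  refine ⟨U, hU, hWV.trans fun x hx => ?_⟩
  simpa [add_comm i j, Function.iterate_add_apply] using hVU hx

theorem coverNum_joinCoverNat_le_pow (A : Finset ℕ) :
    coverNum (joinCoverNat T 𝒰 A) ≤ coverNum 𝒰 ^ A.card := by
  classical
  induction A using Finset.induction_on with
  | empty =>
    simpa using coverNum_le_card_s5 (Finset.univ : Finset Unit) (fun _ => univ)
      (fun _ => ⟨(), by simp⟩) fun _ _ => (joinCoverNat.exists_superset_iff T).2 (by simp)
  | insert a A ha ih =>
    rw [Finset.card_insert_of_notMem ha, Finset.insert_eq, pow_succ']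
    exact (coverNum_joinCoverNat_union_le T h𝒰 _ _).trans
      (Nat.mul_le_mul (coverNum_joinCoverNat_singleton_le T h𝒰 a) ih)

theorem coverNum_joinCoverNat_le_mul_pow (A B : Finset ℕ) :
    coverNum (joinCoverNat T 𝒰 B) ≤ coverNum (joinCoverNat T 𝒰 A) * coverNum 𝒰 ^ (B \ A).card :=
  calc coverNum (joinCoverNat T 𝒰 B)
      ≤ coverNum (joinCoverNat T 𝒰 (A ∪ B \ A)) :=
        coverNum_joinCoverNat_mono T h𝒰 (by simp [Finset.subset_union_right])
    _ ≤ _ := (coverNum_joinCoverNat_union_le T h𝒰 _ _).trans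
        (Nat.mul_le_mul_left _ (coverNum_joinCoverNat_le_pow T h𝒰 _))

end joinCoverNat

noncomputable def logCoverNum (T : X → X) (𝒰 : Set (Set X)) (A : Finset ℕ) : ℝ :=
  Real.log (coverNum (joinCoverNat T 𝒰 A))

noncomputable def avgLogCoverNum (T : X → X) (𝒰 : Set (Set X)) (n : ℕ) : ℝ :=
  (∑ A ∈ (Finset.range n).powerset, logCoverNum T 𝒰 A) / 2 ^ n

theorem logCoverNum_nonneg (T : X → X) (𝒰 : Set (Set X)) (A : Finset ℕ) :
    0 ≤ logCoverNum T 𝒰 A :=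
  Real.log_natCast_nonneg _

theorem avgLogCoverNum_nonneg (T : X → X) (𝒰 : Set (Set X)) (n : ℕ) :
    0 ≤ avgLogCoverNum T 𝒰 n :=
  div_nonneg (Finset.sum_nonneg fun A _ => logCoverNum_nonneg T 𝒰 A) (by positivity)

section logCoverNum

variable (T : X → X) {𝒰 : Set (Set X)} (h𝒰 : HasFiniteSubcover 𝒰)
include h𝒰

theorem logCoverNum_mono {A B : Finset ℕ} (hAB : A ⊆ B) :
    logCoverNum T 𝒰 A ≤ logCoverNum T 𝒰 B :=
  Real.log_natCast_le_log_natCast (coverNum_joinCoverNat_mono T h𝒰 hAB)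

theorem logCoverNum_union_le (A B : Finset ℕ) :
    logCoverNum T 𝒰 (A ∪ B) ≤ logCoverNum T 𝒰 A + logCoverNum T 𝒰 B :=
  Real.log_natCast_le_add_of_le_mul (coverNum_joinCoverNat_union_le T h𝒰 A B)

theorem logCoverNum_add_le (A B : Finset ℕ) :
    logCoverNum T 𝒰 (B + A) ≤ logCoverNum T (joinCoverNat T 𝒰 A) B :=
  Real.log_natCast_le_log_natCast (coverNum_joinCoverNat_add_le T h𝒰 A B)

theorem logCoverNum_image_add_left_le (m : ℕ) (A : Finset ℕ) :
    logCoverNum T 𝒰 (A.image (m + ·)) ≤ logCoverNum T 𝒰 A := by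
  have hA : A.image (m + ·) = {m} + A := by ext; simp [Finset.mem_add]
  rw [hA]
  exact (logCoverNum_add_le T h𝒰 A {m}).trans <| Real.log_natCast_le_log_natCast <|
    coverNum_joinCoverNat_singleton_le T (h𝒰.joinCoverNat T A) m

theorem logCoverNum_le_add_card_mul (A B : Finset ℕ) :
    logCoverNum T 𝒰 B ≤ logCoverNum T 𝒰 A + (B \ A).card * Real.log (coverNum 𝒰) := by
  rw [← Real.log_pow]
  exact_mod_cast Real.log_natCast_le_add_of_le_mul (coverNum_joinCoverNat_le_mul_pow T h𝒰 A B)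

theorem subadditive_logCoverNum_range : Subadditive fun n => logCoverNum T 𝒰 (Finset.range n) := by
  intro m n
  dsimp only
  rw [Finset.range_add_eq_union_image]
  exact (logCoverNum_union_le T h𝒰 _ _).trans
    (add_le_add le_rfl (logCoverNum_image_add_left_le T h𝒰 m _))

theorem subadditive_avgLogCoverNum : Subadditive (avgLogCoverNum T 𝒰) := by
  intro m n
  rw [avgLogCoverNum, Finset.range_add_eq_union_image,
    Finset.sum_powerset_union (Finset.disjoint_range_image_add_left m _)]
  simp only [Finset.sum_powerset_image_add_left]
  calc (∑ B ∈ (Finset.range m).powerset, ∑ C ∈ (Finset.range n).powerset,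
        logCoverNum T 𝒰 (B ∪ C.image (m + ·))) / 2 ^ (m + n)
      ≤ (∑ B ∈ (Finset.range m).powerset, ∑ C ∈ (Finset.range n).powerset,
        (logCoverNum T 𝒰 B + logCoverNum T 𝒰 C)) / 2 ^ (m + n) := by
        gcongr with B _ C _
        exact (logCoverNum_union_le T h𝒰 _ _).trans
          (add_le_add le_rfl (logCoverNum_image_add_left_le T h𝒰 m C))
    _ = avgLogCoverNum T 𝒰 m + avgLogCoverNum T 𝒰 n := by
        simp only [avgLogCoverNum, Finset.sum_add_distrib, Finset.sum_const,
          Finset.card_powerset, Finset.card_range, nsmul_eq_mul, ← Finset.mul_sum, Nat.cast_pow,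
          Nat.cast_ofNat]
        field_simp
        ring

theorem avgLogCoverNum_le_logCoverNum_range (n : ℕ) :
    avgLogCoverNum T 𝒰 n ≤ logCoverNum T 𝒰 (Finset.range n) := by
  rw [avgLogCoverNum, div_le_iff₀ (by positivity)]
  calc ∑ A ∈ (Finset.range n).powerset, logCoverNum T 𝒰 A
      ≤ ∑ A ∈ (Finset.range n).powerset, logCoverNum T 𝒰 (Finset.range n) :=
        Finset.sum_le_sum fun A hA => logCoverNum_mono T h𝒰 (Finset.mem_powerset.1 hA)
    _ = _ := by simp [mul_comm]

end logCoverNum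

theorem card_powerset_filter_notMem_add_range {n k t : ℕ} (ht : t ∈ Finset.Ico (k - 1) n) :
    (((Finset.range n).powerset.filter fun S => t ∉ S + Finset.range k).card : ℝ) =
      2 ^ n * (1 / 2) ^ k := by
  obtain ⟨hkt, htn⟩ := Finset.mem_Ico.1 ht
  have hW : Finset.Ico (t + 1 - k) (t + 1) ⊆ Finset.range n := by
    intro i hi
    simp only [Finset.mem_Ico, Finset.mem_range] at hi ⊢
    omega
  have hfilter : ((Finset.range n).powerset.filter fun S => t ∉ S + Finset.range k) =
      (Finset.range n \ Finset.Ico (t + 1 - k) (t + 1)).powerset := by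
    ext S
    simp only [Finset.mem_filter, Finset.mem_powerset, Finset.subset_sdiff, Finset.mem_add,
      Finset.mem_range, Finset.disjoint_left, Finset.mem_Ico, not_exists, not_and]
    refine and_congr_right fun _ => forall₂_congr fun i _ =>
      ⟨fun h h₁ h₂ => ?_, fun h j hj hij => ?_⟩
    · exact h (t - i) (by omega) (by omega)
    · exact h (by omega) (by omega)
  rw [hfilter, Finset.card_powerset, Finset.card_sdiff_of_subset hW, Finset.card_range,
    Nat.card_Ico, Nat.cast_pow, Nat.cast_ofNat, pow_sub₀ _ two_ne_zero (by omega),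
    show t + 1 - (t + 1 - k) = k by omega, one_div, inv_pow]

theorem sum_card_range_sdiff_add_range_le (n k : ℕ) :
    ∑ S ∈ (Finset.range n).powerset, ((Finset.range (n + k) \ (S + Finset.range k)).card : ℝ) ≤
      2 ^ n * (n * (1 / 2) ^ k + 2 * k) := by
  set I := Finset.Ico (k - 1) n
  have hsplit : ∀ S : Finset ℕ, (Finset.range (n + k) \ (S + Finset.range k)).card ≤
      2 * k + (I.filter fun t => t ∉ S + Finset.range k).card := by
    intro S
    calc (Finset.range (n + k) \ (S + Finset.range k)).card
        ≤ (Finset.range (k - 1) ∪ Finset.Ico n (n + k) ∪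
            I.filter fun t => t ∉ S + Finset.range k).card := by
          refine Finset.card_le_card fun t ht => ?_
          simp only [Finset.mem_sdiff, Finset.mem_range] at ht
          by_cases htI : t ∈ I
          · exact Finset.mem_union_right _ (Finset.mem_filter.2 ⟨htI, ht.2⟩)
          · simp only [I, Finset.mem_Ico] at htI
            simp only [Finset.mem_union, Finset.mem_range, Finset.mem_Ico]
            omega
      _ ≤ 2 * k + (I.filter fun t => t ∉ S + Finset.range k).card := by
          refine (Finset.card_union_le _ _).trans (Nat.add_le_add_right
            ((Finset.card_union_le _ _).trans ?_) _)
          simp only [Finset.card_range, Nat.card_Ico]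
          omega
  have hswap := Finset.sum_card_bipartiteAbove_eq_sum_card_bipartiteBelow
    (s := (Finset.range n).powerset) (t := I) (r := fun S t => t ∉ S + Finset.range k)
  simp only [Finset.bipartiteAbove, Finset.bipartiteBelow] at hswap
  calc ∑ S ∈ (Finset.range n).powerset,
        ((Finset.range (n + k) \ (S + Finset.range k)).card : ℝ)
      ≤ ∑ S ∈ (Finset.range n).powerset,
          (2 * k + ((I.filter fun t => t ∉ S + Finset.range k).card : ℝ)) :=
        Finset.sum_le_sum fun S _ => by exact_mod_cast hsplit S
    _ = 2 ^ n * (2 * k) + ∑ t ∈ I,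
          (((Finset.range n).powerset.filter fun S => t ∉ S + Finset.range k).card : ℝ) := by
        rw [Finset.sum_add_distrib, Finset.sum_const, Finset.card_powerset, Finset.card_range,
          nsmul_eq_mul]
        push_cast
        congr 1
        exact_mod_cast hswap
    _ = 2 ^ n * (2 * k) + I.card * (2 ^ n * (1 / 2) ^ k) := by
        rw [Finset.sum_congr rfl fun t ht => card_powerset_filter_notMem_add_range ht,
          Finset.sum_const, nsmul_eq_mul]
    _ ≤ 2 ^ n * (n * (1 / 2) ^ k + 2 * k) := by
        have hI : (I.card : ℝ) ≤ n := by
          exact_mod_cast (Nat.card_Ico _ _).trans_le (Nat.sub_le n _)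
        nlinarith [mul_le_mul_of_nonneg_right hI
          (by positivity : (0 : ℝ) ≤ 2 ^ n * (1 / 2) ^ k)]

section entropy

variable (T : X → X) {𝒰 : Set (Set X)} (h𝒰 : HasFiniteSubcover 𝒰)
include h𝒰

theorem logCoverNum_range_add_le (n k : ℕ) :
    logCoverNum T 𝒰 (Finset.range (n + k)) ≤
      avgLogCoverNum T (joinCoverNat T 𝒰 (Finset.range k)) n +
        Real.log (coverNum 𝒰) * (n * (1 / 2) ^ k + 2 * k) := by
  set c := Real.log (coverNum 𝒰)
  have hS : ∀ S ∈ (Finset.range n).powerset, logCoverNum T 𝒰 (Finset.range (n + k)) ≤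
      logCoverNum T (joinCoverNat T 𝒰 (Finset.range k)) S +
        c * (Finset.range (n + k) \ (S + Finset.range k)).card := fun S _ =>
    calc logCoverNum T 𝒰 (Finset.range (n + k))
        ≤ logCoverNum T 𝒰 (S + Finset.range k) +
            (Finset.range (n + k) \ (S + Finset.range k)).card * c :=
          logCoverNum_le_add_card_mul T h𝒰 _ _
      _ ≤ _ := by
          rw [mul_comm]
          exact add_le_add (logCoverNum_add_le T h𝒰 _ _) le_rfl
  have hsum := Finset.sum_le_sum hS
  rw [Finset.sum_const, Finset.card_powerset, Finset.card_range, nsmul_eq_mul,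
    Finset.sum_add_distrib, ← Finset.mul_sum] at hsum
  have hB := mul_le_mul_of_nonneg_left (sum_card_range_sdiff_add_range_le n k)
    (Real.log_natCast_nonneg (coverNum 𝒰))
  rw [avgLogCoverNum, div_add' _ _ _ (by positivity), le_div_iff₀ (by positivity)]
  push_cast at hsum
  linarith

theorem exists_tendsto_logCoverNum_range_div :
    ∃ h, Tendsto (fun n : ℕ => logCoverNum T 𝒰 (Finset.range n) / n) atTop (𝓝 h) :=
  (subadditive_logCoverNum_range T h𝒰).exists_tendsto_div_of_nonneg fun _ =>
    logCoverNum_nonneg T 𝒰 _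

theorem exists_tendsto_avgLogCoverNum_div :
    ∃ a, Tendsto (fun n : ℕ => avgLogCoverNum T 𝒰 n / n) atTop (𝓝 a) :=
  (subadditive_avgLogCoverNum T h𝒰).exists_tendsto_div_of_nonneg (avgLogCoverNum_nonneg T 𝒰)

theorem le_of_tendsto_avgLogCoverNum {a h : ℝ}
    (ha : Tendsto (fun n : ℕ => avgLogCoverNum T 𝒰 n / n) atTop (𝓝 a))
    (hh : Tendsto (fun n : ℕ => logCoverNum T 𝒰 (Finset.range n) / n) atTop (𝓝 h)) :
    a ≤ h :=
  le_of_tendsto_of_tendsto' ha hh fun n =>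
    div_le_div_of_nonneg_right (avgLogCoverNum_le_logCoverNum_range T h𝒰 n) n.cast_nonneg

theorem sub_le_of_tendsto_avgLogCoverNum_joinCoverNat (k : ℕ) {a h : ℝ}
    (hh : Tendsto (fun n : ℕ => logCoverNum T 𝒰 (Finset.range n) / n) atTop (𝓝 h))
    (ha : Tendsto (fun n : ℕ => avgLogCoverNum T (joinCoverNat T 𝒰 (Finset.range k)) n / n)
      atTop (𝓝 a)) :
    h - Real.log (coverNum 𝒰) * (1 / 2) ^ k ≤ a := by
  set c := Real.log (coverNum 𝒰)
  have hlow : Tendsto (fun n : ℕ => logCoverNum T 𝒰 (Finset.range (n + k)) / (n + k : ℕ) -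
      c * ((1 / 2) ^ k + 2 * k / n)) atTop (𝓝 (h - c * ((1 / 2) ^ k + 0))) :=
    (hh.comp (tendsto_add_atTop_nat k)).sub
      (tendsto_const_nhds.mul (tendsto_const_nhds.add (tendsto_const_div_atTop_nhds_zero_nat _)))
  rw [add_zero] at hlow
  refine le_of_tendsto_of_tendsto hlow ha ?_
  filter_upwards [eventually_gt_atTop 0] with n hn
  calc logCoverNum T 𝒰 (Finset.range (n + k)) / (n + k : ℕ) - c * ((1 / 2) ^ k + 2 * k / n)
      ≤ logCoverNum T 𝒰 (Finset.range (n + k)) / n - c * ((1 / 2) ^ k + 2 * k / n) := by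
        gcongr
        · exact logCoverNum_nonneg T 𝒰 _
        · exact_mod_cast Nat.le_add_right n k
    _ = (logCoverNum T 𝒰 (Finset.range (n + k)) - c * (n * (1 / 2) ^ k + 2 * k)) / n := by
        field_simp
    _ ≤ avgLogCoverNum T (joinCoverNat T 𝒰 (Finset.range k)) n / n := by
        gcongr
        linarith [logCoverNum_range_add_le T h𝒰 n k]

end entropy

theorem coverNum_joinCover (T : X → X) {𝒰 : Set (Set X)} (hc : ⋃₀ 𝒰 = univ) {n : ℕ}
    (S : Finset (Fin n)) :
    coverNum (joinCover T 𝒰 S) = coverNum (joinCoverNat T 𝒰 (S.image Fin.val)) := by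
  rcases 𝒰.eq_empty_or_nonempty with rfl | ⟨U₀, hU₀⟩
  · have : IsEmpty X := univ_eq_empty_iff.1 (by simpa using hc.symm)
    simp [coverNum_of_isEmpty]
  congr 1
  ext V
  simp only [joinCover, joinCoverNat, mem_ofPred_eq, Finset.set_biInter_finset_image]
  constructor
  · rintro ⟨f, hf, rfl⟩
    refine ⟨fun j => if h : j < n then f ⟨j, h⟩ else U₀, fun j _ => ?_, by simp⟩
    dsimp only
    split_ifs <;> simp [hf, hU₀]
  · rintro ⟨g, hg, rfl⟩
    refine ⟨fun i => if i ∈ S then g i else U₀, fun i => ?_,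
      iInter₂_congr fun i hi => by simp [hi]⟩
    dsimp only
    split_ifs with hi
    exacts [hg i (Finset.mem_image_of_mem _ hi), hU₀]

theorem one_div_mul_sum_log_coverNum_joinCover_eq (T : X → X) {𝒰 : Set (Set X)}
    (hc : ⋃₀ 𝒰 = univ) :
    (fun n : ℕ => (1 / (n : ℝ)) * ∑ S : Finset (Fin n), (1 / 2 ^ n : ℝ) *
        Real.log (coverNum (joinCover T 𝒰 S))) = fun n => avgLogCoverNum T 𝒰 n / n := by
  funext n
  simp only [coverNum_joinCover T hc, ← Finset.mul_sum]
  rw [Finset.sum_finset_fin_image_val n fun A => Real.log (coverNum (joinCoverNat T 𝒰 A))]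
  simp only [avgLogCoverNum, logCoverNum]
  ring

theorem log_coverNum_joinCover_univ_div_eq (T : X → X) {𝒰 : Set (Set X)}
    (hc : ⋃₀ 𝒰 = univ) :
    (fun n : ℕ => Real.log (coverNum (joinCover T 𝒰 (Finset.univ : Finset (Fin n)))) / (n : ℝ)) =
      fun n => logCoverNum T 𝒰 (Finset.range n) / n := by
  funext n
  rw [coverNum_joinCover T hc, Finset.image_val_univ_fin, logCoverNum]

end

theorem sup_asc_eq_topological_entropy_general
    {X : Type*} [MetricSpace X] (T : X → X) (hT : Continuous T) :
    sSup {a : EReal | ∃ 𝒰 : Set (Set X), 𝒰.Finite ∧ (∀ U ∈ 𝒰, IsOpen U) ∧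
        ⋃₀ 𝒰 = Set.univ ∧
        ∃ r : ℝ, Tendsto (fun n : ℕ =>
            (1 / (n : ℝ)) * ∑ S : Finset (Fin n), (1 / 2 ^ n : ℝ) *
              Real.log (coverNum (joinCover T 𝒰 S))) atTop (𝓝 r) ∧ a = (r : EReal)}
      =
    sSup {e : EReal | ∃ 𝒰 : Set (Set X), 𝒰.Finite ∧ (∀ U ∈ 𝒰, IsOpen U) ∧
        ⋃₀ 𝒰 = Set.univ ∧
        ∃ r : ℝ, Tendsto (fun n : ℕ =>
            Real.log (coverNum (joinCover T 𝒰 (Finset.univ : Finset (Fin n)))) / (n : ℝ))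
          atTop (𝓝 r) ∧ e = (r : EReal)} := by
  apply le_antisymm
  · refine sSup_le ?_
    rintro _ ⟨𝒰, hfin, hop, hc, a, ha, rfl⟩
    rw [one_div_mul_sum_log_coverNum_joinCover_eq T hc] at ha
    have h𝒰 := HasFiniteSubcover.of_finite hfin hc
    obtain ⟨h, hh⟩ := exists_tendsto_logCoverNum_range_div T h𝒰
    refine le_sSup_of_le ⟨𝒰, hfin, hop, hc, h, ?_, rfl⟩
      (EReal.coe_le_coe_iff.2 (le_of_tendsto_avgLogCoverNum T h𝒰 ha hh))
    rwa [log_coverNum_joinCover_univ_div_eq T hc]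
  · refine sSup_le ?_
    rintro _ ⟨𝒰, hfin, hop, hc, h, hh, rfl⟩
    rw [log_coverNum_joinCover_univ_div_eq T hc] at hh
    have h𝒰 := HasFiniteSubcover.of_finite hfin hc
    have hlim : Tendsto (fun k : ℕ => ((h - Real.log (coverNum 𝒰) * (1 / 2) ^ k : ℝ) : EReal))
        atTop (𝓝 (h : EReal)) :=
      EReal.tendsto_coe.2 (by simpa using tendsto_const_nhds.sub (tendsto_const_nhds.mul
        (tendsto_pow_atTop_nhds_zero_of_lt_one (r := (1 / 2 : ℝ)) (by norm_num) (by norm_num))))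
    refine le_of_tendsto' hlim fun k => ?_
    have hfin𝒱 := joinCoverNat.finite T hfin (Finset.range k)
    have hc𝒱 := joinCoverNat.sUnion_eq_univ T hc (Finset.range k)
    obtain ⟨a, ha⟩ := exists_tendsto_avgLogCoverNum_div T (.of_finite hfin𝒱 hc𝒱)
    refine le_sSup_of_le ⟨_, hfin𝒱, joinCoverNat.isOpen_of_mem T hT hop, hc𝒱, a, ?_, rfl⟩
      (EReal.coe_le_coe_iff.2 (sub_le_of_tendsto_avgLogCoverNum_joinCoverNat T h𝒰 k hh ha))
    rwa [one_div_mul_sum_log_coverNum_joinCover_eq T hc𝒱]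

/-- with uniform coefficients `c_S^n = 2^{-n}`, the supremum over all finite
open covers `𝒰` of the topological average sample complexity `Asc(X,𝒰,T)` equals the
topological entropy `h_top(X,T) = sup_𝒰 h_top(X,𝒰,T)`. -/
theorem sup_asc_eq_topological_entropy
    {X : Type*} [MetricSpace X] [CompactSpace X] (T : X → X) (hT : Continuous T) :
    sSup {a : EReal | ∃ 𝒰 : Set (Set X), 𝒰.Finite ∧ (∀ U ∈ 𝒰, IsOpen U) ∧
        ⋃₀ 𝒰 = Set.univ ∧
        ∃ r : ℝ, Tendsto (fun n : ℕ =>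
            (1 / (n : ℝ)) * ∑ S : Finset (Fin n), (1 / 2 ^ n : ℝ) *
              Real.log (coverNum (joinCover T 𝒰 S))) atTop (𝓝 r) ∧ a = (r : EReal)}
      =
    sSup {e : EReal | ∃ 𝒰 : Set (Set X), 𝒰.Finite ∧ (∀ U ∈ 𝒰, IsOpen U) ∧
        ⋃₀ 𝒰 = Set.univ ∧
        ∃ r : ℝ, Tendsto (fun n : ℕ =>
            Real.log (coverNum (joinCover T 𝒰 (Finset.univ : Finset (Fin n)))) / (n : ℝ))
          atTop (𝓝 r) ∧ e = (r : EReal)} :=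
  sup_asc_eq_topological_entropy_general T hT
end

section
/- Let (X,ℬ,μ,T) be a measure-preserving system on a probability space and take the uniform system of coefficients c_S^n = 2^{−n}. Then sup_α Asc_μ(X,α,T) = sup_α Int_μ(X,α,T) = h_μ(X,T), where the suprema are over all finite measurable partitions α of X and h_μ(X,T) is the measure-theoretic (Kolmogorov–Sinai) entropy. -/
open Set Filter Topology MeasureTheory

/-- The entropy `H_μ(α_S)` of the join `α_S = ⋁_{i∈S} T^{-i}α` of a finite measurable
partition `α` (indexed by `ι`) along a set of times `S ⊆ n*`. -/
noncomputable def partEntropyOn {X ι : Type*} [MeasurableSpace X] [Fintype ι]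
    (μ : Measure X) (T : X → X) (α : ι → Set X) {n : ℕ} (S : Finset (Fin n)) : ℝ :=
  ∑ f : {i : Fin n // i ∈ S} → ι,
    Real.negMulLog (μ (⋂ i : {i : Fin n // i ∈ S}, (T^[(i.1 : ℕ)]) ⁻¹' α (f i))).toReal

/-- `α` is a finite measurable partition of `X`. -/
def IsMeasPartition {X ι : Type*} [MeasurableSpace X] (α : ι → Set X) : Prop :=
  (∀ i, MeasurableSet (α i)) ∧ (∀ i j, i ≠ j → Disjoint (α i) (α j)) ∧ ⋃ i, α i = Set.univ

/-!
Code a partition `α` by a map `c : X → ι` whose fibres are the cells of `α`; then `α_S` is coded by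
the itinerary `x ↦ (c (T^[i] x))_{i ∈ S}`. The entropy of a coding drops under coarsening, is
subadditive under joins and is invariant under `T`. Hence `n ↦ H(α_{n*})` and
`n ↦ 2^{-n} ∑_S H(α_S)` are subadditive and Fekete's lemma gives `h(α)` and `Asc(α)`. Since
`S ↦ Sᶜ` permutes the subsets of `n*`, `Int(α) = 2 Asc(α) - h(α)`, and `Asc(α) ≤ h(α)` by
monotonicity, so both suprema are at most `h_μ(X,T)`.

Conversely, pass to the block partition `α_{k*}`. For a uniformly random `S ⊆ n*` the blocks
`[s, s + k)`, `s ∈ S`, miss on average at most `k + n 2^{-k}` of the times in `n*`, so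
`Asc(α_{k*}) ≥ h(α) - 2^{-k} H(α)`, while `h(α_{k*}) ≤ h(α)`. Letting `k → ∞` brings both
`Asc(α_{k*})` and `Int(α_{k*})` arbitrarily close to `h(α)`.
-/

open Real (negMulLog log)
open scoped Finset

lemma Real.negMulLog_add_le {a b : ℝ} (ha : 0 ≤ a) (hb : 0 ≤ b) :
    negMulLog (a + b) ≤ negMulLog a + negMulLog b := by
  rcases ha.eq_or_lt with rfl | ha
  · simp
  rcases hb.eq_or_lt with rfl | hb
  · simp
  have h₁ : a * log a ≤ a * log (a + b) := by gcongr; linarith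
  have h₂ : b * log b ≤ b * log (a + b) := by gcongr; linarith
  simp only [negMulLog]
  linarith

lemma Real.negMulLog_sum_le {κ : Type*} (s : Finset κ) {f : κ → ℝ} (hf : ∀ k ∈ s, 0 ≤ f k) :
    negMulLog (∑ k ∈ s, f k) ≤ ∑ k ∈ s, negMulLog (f k) := by
  induction s using Finset.cons_induction with
  | empty => simp
  | cons a s ha ih =>
    simp only [Finset.sum_cons, Finset.forall_mem_cons] at hf ⊢
    exact (negMulLog_add_le hf.1 (Finset.sum_nonneg hf.2)).trans (by gcongr; exact ih hf.2)

lemma Real.negMulLog_le_tangent {p r : ℝ} (hp : 0 ≤ p) (hr : 0 < r) :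
    negMulLog p ≤ -p * log r + (r - p) := by
  have hpr : p = r * (p / r) := by field_simp
  have := negMulLog_le_one_sub_self (div_nonneg hp hr.le)
  rw [hpr, negMulLog_mul, negMulLog]
  nlinarith

lemma Real.negMulLog_le_tangent_of_le_of_le {p a b : ℝ} (hp : 0 ≤ p) (ha : p ≤ a) (hb : p ≤ b) :
    negMulLog p ≤ -p * log a - p * log b + (a * b - p) := by
  rcases hp.eq_or_lt with rfl | hp
  · simpa using mul_nonneg ha hb
  have := negMulLog_le_tangent hp.le (mul_pos (hp.trans_le ha) (hp.trans_le hb))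
  rw [log_mul (hp.trans_le ha).ne' (hp.trans_le hb).ne'] at this
  linarith

lemma Real.sum_sum_negMulLog_le {ι κ : Type*} [Fintype ι] [Fintype κ] {p : ι → κ → ℝ}
    (hp : ∀ i k, 0 ≤ p i k) (h₁ : ∑ i, ∑ k, p i k = 1) :
    ∑ i, ∑ k, negMulLog (p i k) ≤ ∑ i, negMulLog (∑ k, p i k) + ∑ k, negMulLog (∑ i, p i k) := by
  have hPQ : ∑ i, ∑ k, (∑ k', p i k') * ∑ i', p i' k = 1 := by
    rw [← Finset.sum_mul_sum, h₁, Finset.sum_comm, h₁, one_mul]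
  calc ∑ i, ∑ k, negMulLog (p i k)
      ≤ ∑ i, ∑ k, (-p i k * log (∑ k', p i k') - p i k * log (∑ i', p i' k)
          + ((∑ k', p i k') * ∑ i', p i' k - p i k)) := by
        gcongr with i _ k
        exact negMulLog_le_tangent_of_le_of_le (hp i k)
          (Finset.single_le_sum (fun k _ => hp i k) (Finset.mem_univ k))
          (Finset.single_le_sum (fun i _ => hp i k) (Finset.mem_univ i))
    _ = ∑ i, negMulLog (∑ k, p i k) + ∑ k, negMulLog (∑ i, p i k) := by
        simp only [Finset.sum_add_distrib, Finset.sum_sub_distrib, neg_mul, Finset.sum_neg_distrib,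
          hPQ, h₁, negMulLog, ← Finset.sum_mul]
        rw [Finset.sum_comm (f := fun i k => p i k * log (∑ i', p i' k))]
        simp only [← Finset.sum_mul]
        ring

section MapEntropy

variable {X ι κ : Type*} [MeasurableSpace X] {μ : Measure X} [Fintype ι] [Fintype κ]

/-- The entropy `H_μ` of the partition of `X` into the fibres of `g`. -/
noncomputable def mapEntropy (μ : Measure X) (g : X → ι) : ℝ :=
  ∑ i, negMulLog (μ.real (g ⁻¹' {i}))

lemma mapEntropy_nonneg [IsProbabilityMeasure μ] (g : X → ι) : 0 ≤ mapEntropy μ g :=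
  Finset.sum_nonneg fun _ _ => Real.negMulLog_nonneg measureReal_nonneg measureReal_le_one

lemma mapEntropy_of_subsingleton [IsProbabilityMeasure μ] [Subsingleton ι] (g : X → ι) :
    mapEntropy μ g = 0 := by
  refine Finset.sum_eq_zero fun i _ => ?_
  have : g ⁻¹' {i} = univ := Set.eq_univ_of_forall fun x => Subsingleton.elim (g x) i
  simp [this]

lemma mapEntropy_equiv_comp (g : X → ι) (e : ι ≃ κ) : mapEntropy μ (e ∘ g) = mapEntropy μ g := by
  refine Fintype.sum_equiv e.symm _ _ fun k => ?_
  congr 2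
  ext x
  simp [← Equiv.eq_symm_apply]

lemma mapEntropy_comp_of_measurePreserving {g : X → ι} {τ : X → X} [MeasurableSpace ι]
    [MeasurableSingletonClass ι] (hg : Measurable g) (hτ : MeasurePreserving τ μ μ) :
    mapEntropy μ (g ∘ τ) = mapEntropy μ g := by
  simp only [mapEntropy, Set.preimage_comp,
    hτ.measureReal_preimage (hg (measurableSet_singleton _)).nullMeasurableSet]

variable [MeasurableSpace ι] [MeasurableSingletonClass ι]

lemma mapEntropy_comp_le [IsFiniteMeasure μ] {g : X → ι} (hg : Measurable g) (j : ι → κ) :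
    mapEntropy μ (j ∘ g) ≤ mapEntropy μ g := by
  classical
  calc mapEntropy μ (j ∘ g)
      = ∑ k, negMulLog (∑ i with j i = k, μ.real (g ⁻¹' {i})) := by
        refine Finset.sum_congr rfl fun k _ => ?_
        rw [sum_measureReal_preimage_singleton _ fun i _ => hg (measurableSet_singleton i)]
        congr 3
        ext x
        simp
    _ ≤ ∑ k, ∑ i with j i = k, negMulLog (μ.real (g ⁻¹' {i})) := by
        gcongr with k
        exact Real.negMulLog_sum_le _ fun _ _ => measureReal_nonneg
    _ = mapEntropy μ g := Finset.sum_fiberwise _ _ _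

lemma sum_measureReal_inter_preimage_singleton [IsFiniteMeasure μ] {h : X → ι} (hh : Measurable h)
    (A : Set X) : ∑ i, μ.real (A ∩ h ⁻¹' {i}) = μ.real A := by
  have := sum_measureReal_preimage_singleton (μ := μ.restrict A) Finset.univ
    fun i _ => hh (measurableSet_singleton i)
  simpa [measureReal_restrict_apply (hh (measurableSet_singleton _)), Set.inter_comm] using this

lemma mapEntropy_prodMk_le [IsProbabilityMeasure μ] [MeasurableSpace κ] [MeasurableSingletonClass κ]
    {g : X → ι} {h : X → κ} (hg : Measurable g) (hh : Measurable h) :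
    mapEntropy μ (fun x => (g x, h x)) ≤ mapEntropy μ g + mapEntropy μ h := by
  have hP : ∀ i, ∑ k, μ.real (g ⁻¹' {i} ∩ h ⁻¹' {k}) = μ.real (g ⁻¹' {i}) := fun i =>
    sum_measureReal_inter_preimage_singleton hh _
  have hQ : ∀ k, ∑ i, μ.real (g ⁻¹' {i} ∩ h ⁻¹' {k}) = μ.real (h ⁻¹' {k}) := fun k => by
    simpa only [Set.inter_comm] using sum_measureReal_inter_preimage_singleton hg (h ⁻¹' {k})
  have h₁ : ∑ i, ∑ k, μ.real (g ⁻¹' {i} ∩ h ⁻¹' {k}) = 1 := by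
    simpa [hP] using sum_measureReal_inter_preimage_singleton (μ := μ) hg Set.univ
  have hjoint : mapEntropy μ (fun x => (g x, h x))
      = ∑ i, ∑ k, negMulLog (μ.real (g ⁻¹' {i} ∩ h ⁻¹' {k})) := by
    rw [mapEntropy, Fintype.sum_prod_type]
    congr! 4
    ext x
    simp
  rw [hjoint]
  simpa only [hP, hQ, mapEntropy] using Real.sum_sum_negMulLog_le (fun _ _ => measureReal_nonneg) h₁

end MapEntropy

section JoinEntropy

variable {X ι κ κ' : Type*} [MeasurableSpace X] {T : X → X} {c : X → ι}

/-- The `c`-labels of the points `T^[t i] x`: its fibres form the join `⋁ i, T^{-t i} α` of the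
partition `α` into the fibres of `c`. -/
def itinerary (T : X → X) (c : X → ι) (t : κ → ℕ) (x : X) : κ → ι :=
  fun i => c (T^[t i] x)

lemma measurable_itinerary [MeasurableSpace ι] (hT : Measurable T) (hc : Measurable c)
    (t : κ → ℕ) : Measurable (itinerary T c t) :=
  measurable_pi_lambda _ fun _ => hc.comp (hT.iterate _)

variable {μ : Measure X} [Fintype ι] [Fintype κ] [DecidableEq κ] [Fintype κ'] [DecidableEq κ']

noncomputable def joinEntropy (μ : Measure X) (T : X → X) (c : X → ι) (t : κ → ℕ) : ℝ :=
  mapEntropy μ (itinerary T c t)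

lemma joinEntropy_nonneg [IsProbabilityMeasure μ] (t : κ → ℕ) : 0 ≤ joinEntropy μ T c t :=
  mapEntropy_nonneg _

lemma joinEntropy_equiv_comp {ι' : Type*} [Fintype ι'] (e : ι ≃ ι') (t : κ → ℕ) :
    joinEntropy μ T (e ∘ c) t = joinEntropy μ T c t := by
  have : itinerary T (e ∘ c) t = Equiv.arrowCongr (Equiv.refl κ) e ∘ itinerary T c t := rfl
  rw [joinEntropy, this, mapEntropy_equiv_comp, joinEntropy]

variable [MeasurableSpace ι] [MeasurableSingletonClass ι]

lemma joinEntropy_le_of_range_subset [IsFiniteMeasure μ] (hT : Measurable T) (hc : Measurable c)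
    {t : κ → ℕ} {t' : κ' → ℕ} (h : range t' ⊆ range t) :
    joinEntropy μ T c t' ≤ joinEntropy μ T c t := by
  choose σ hσ using fun i => h ⟨i, rfl⟩
  have : itinerary T c t' = (fun f => f ∘ σ) ∘ itinerary T c t := by
    ext x i
    simp [itinerary, hσ]
  rw [joinEntropy, this]
  exact mapEntropy_comp_le (measurable_itinerary hT hc t) _

lemma joinEntropy_add_const (hT : MeasurePreserving T μ μ) (hc : Measurable c) (t : κ → ℕ)
    (k : ℕ) : joinEntropy μ T c (fun i => t i + k) = joinEntropy μ T c t := by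
  have : itinerary T c (fun i => t i + k) = itinerary T c t ∘ T^[k] := by
    ext x i
    simp [itinerary, Function.iterate_add_apply]
  rw [joinEntropy, this, mapEntropy_comp_of_measurePreserving
    (measurable_itinerary hT.measurable hc t) (hT.iterate k), joinEntropy]

lemma joinEntropy_sumElim_le [IsProbabilityMeasure μ] (hT : Measurable T) (hc : Measurable c)
    (t₁ : κ → ℕ) (t₂ : κ' → ℕ) :
    joinEntropy μ T c (Sum.elim t₁ t₂) ≤ joinEntropy μ T c t₁ + joinEntropy μ T c t₂ := by
  have : itinerary T c (Sum.elim t₁ t₂) = (Equiv.sumArrowEquivProdArrow κ κ' ι).symm ∘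
      fun x => (itinerary T c t₁ x, itinerary T c t₂ x) := by
    ext x (i | i) <;> rfl
  rw [joinEntropy, this, mapEntropy_equiv_comp]
  exact mapEntropy_prodMk_le (measurable_itinerary hT hc t₁) (measurable_itinerary hT hc t₂)

lemma joinEntropy_const [IsProbabilityMeasure μ] (hT : MeasurePreserving T μ μ) (hc : Measurable c)
    (a : ℕ) : joinEntropy μ T c (fun _ : Unit => a) = mapEntropy μ c := by
  have : itinerary T c (fun _ : Unit => 0) = (Equiv.funUnique Unit ι).symm ∘ c := rfl
  have hshift := joinEntropy_add_const hT hc (fun _ : Unit => 0) a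
  simp only [zero_add] at hshift
  rw [hshift, joinEntropy, this, mapEntropy_equiv_comp]

lemma joinEntropy_le_card_mul [IsProbabilityMeasure μ] (hT : MeasurePreserving T μ μ)
    (hc : Measurable c) (t : κ → ℕ) :
    joinEntropy μ T c t ≤ Fintype.card κ * mapEntropy μ c := by
  suffices ∀ n (t : Fin n → ℕ), joinEntropy μ T c t ≤ n * mapEntropy μ c by
    refine (joinEntropy_le_of_range_subset hT.measurable hc (t := t ∘ (Fintype.equivFin κ).symm)
      ?_).trans (this _ _)
    rw [Set.range_comp, (Fintype.equivFin κ).symm.range_eq_univ, Set.image_univ]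
  intro n
  induction n with
  | zero => simp [joinEntropy, mapEntropy_of_subsingleton]
  | succ n ih =>
    intro t
    calc joinEntropy μ T c t
        ≤ joinEntropy μ T c (Sum.elim (fun _ : Unit => t 0) (t ∘ Fin.succ)) := by
          refine joinEntropy_le_of_range_subset hT.measurable hc ?_
          rintro _ ⟨i, rfl⟩
          cases i using Fin.cases with
          | zero => exact ⟨Sum.inl (), rfl⟩
          | succ i => exact ⟨Sum.inr i, rfl⟩
      _ ≤ mapEntropy μ c + n * mapEntropy μ c := by
          grw [joinEntropy_sumElim_le hT.measurable hc, joinEntropy_const hT hc, ih]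
      _ = (n + 1 : ℕ) * mapEntropy μ c := by push_cast; ring

end JoinEntropy

lemma sum_sum_one_div_two_pow_mul_add {n m : ℕ} (f : Finset (Fin n) → ℝ) (g : Finset (Fin m) → ℝ) :
    ∑ P : Finset (Fin n), ∑ Q : Finset (Fin m), (1 / 2 ^ (n + m) : ℝ) * (f P + g Q)
      = ∑ P, (1 / 2 ^ n : ℝ) * f P + ∑ Q, (1 / 2 ^ m : ℝ) * g Q := by
  rw [Finset.sum_comm (f := fun P Q => (1 / 2 ^ (n + m) : ℝ) * (f P + g Q))]
  simp only [pow_add, one_div, mul_inv_rev, mul_add, Finset.sum_add_distrib, Finset.sum_const,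
    Finset.card_univ, Fintype.card_finset, Fintype.card_fin, nsmul_eq_mul, Nat.cast_pow,
    Nat.cast_ofNat, Finset.mul_sum]
  congr 1 <;> exact Finset.sum_congr rfl fun _ _ => by field_simp

lemma sum_one_div_two_pow (n : ℕ) : ∑ _S : Finset (Fin n), (1 / 2 ^ n : ℝ) = 1 := by
  simp [Finset.card_univ]

def finsetFinAddEquiv (n m : ℕ) : Finset (Fin n) × Finset (Fin m) ≃ Finset (Fin (n + m)) :=
  Finset.sumEquiv.symm.toEquiv.trans (Equiv.finsetCongr finSumFinEquiv)

lemma finsetFinAddEquiv_apply_subset {n m : ℕ} (P : Finset (Fin n)) (Q : Finset (Fin m)) :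
    finsetFinAddEquiv n m (P, Q) ⊆ P.map (Fin.castAddEmb m) ∪ Q.map (Fin.natAddEmb n) := by
  intro j hj
  induction j using Fin.addCases <;> simp_all [finsetFinAddEquiv]

section JoinEntropyOn

variable {X ι : Type*} [MeasurableSpace X] {μ : Measure X} [Fintype ι] {T : X → X} {c : X → ι}
  {n m : ℕ}

noncomputable def joinEntropyOn (μ : Measure X) (T : X → X) (c : X → ι) {n : ℕ}
    (S : Finset (Fin n)) : ℝ :=
  joinEntropy μ T c (fun i : S => (i : ℕ))

lemma partEntropyOn_fibers (S : Finset (Fin n)) :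
    partEntropyOn μ T (fun i => c ⁻¹' {i}) S = joinEntropyOn μ T c S := by
  refine Finset.sum_congr rfl fun f _ => ?_
  rw [measureReal_def]
  congr 3
  ext x
  simp [itinerary, funext_iff]

noncomputable def avgJoinEntropy (μ : Measure X) (T : X → X) (c : X → ι) (n : ℕ) : ℝ :=
  ∑ S : Finset (Fin n), (1 / 2 ^ n : ℝ) * joinEntropyOn μ T c S

noncomputable def fullJoinEntropy (μ : Measure X) (T : X → X) (c : X → ι) (n : ℕ) : ℝ :=
  joinEntropyOn μ T c (Finset.univ : Finset (Fin n))

lemma avgJoinEntropy_nonneg [IsProbabilityMeasure μ] (n : ℕ) : 0 ≤ avgJoinEntropy μ T c n :=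
  Finset.sum_nonneg fun _ _ => mul_nonneg (by positivity) (joinEntropy_nonneg _)

lemma avgJoinEntropy_equiv_comp {ι' : Type*} [Fintype ι'] (e : ι ≃ ι')
    (n : ℕ) : avgJoinEntropy μ T (e ∘ c) n = avgJoinEntropy μ T c n := by
  simp only [avgJoinEntropy, joinEntropyOn, joinEntropy_equiv_comp]

lemma fullJoinEntropy_equiv_comp {ι' : Type*} [Fintype ι'] (e : ι ≃ ι')
    (n : ℕ) : fullJoinEntropy μ T (e ∘ c) n = fullJoinEntropy μ T c n := by
  simp only [fullJoinEntropy, joinEntropyOn, joinEntropy_equiv_comp]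

variable [MeasurableSpace ι] [MeasurableSingletonClass ι]

lemma joinEntropyOn_mono [IsFiniteMeasure μ] (hT : Measurable T) (hc : Measurable c)
    {S S' : Finset (Fin n)} (h : S ⊆ S') : joinEntropyOn μ T c S ≤ joinEntropyOn μ T c S' :=
  joinEntropy_le_of_range_subset hT hc fun _ ⟨i, hi⟩ => ⟨⟨i, h i.2⟩, hi⟩

lemma joinEntropyOn_le_add [IsProbabilityMeasure μ] (hT : MeasurePreserving T μ μ)
    (hc : Measurable c) {S : Finset (Fin (n + m))} {P : Finset (Fin n)} {Q : Finset (Fin m)}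
    (h : S ⊆ P.map (Fin.castAddEmb m) ∪ Q.map (Fin.natAddEmb n)) :
    joinEntropyOn μ T c S ≤ joinEntropyOn μ T c P + joinEntropyOn μ T c Q := by
  calc joinEntropyOn μ T c S
      ≤ joinEntropy μ T c (Sum.elim (fun i : P => (i : ℕ)) (fun i : Q => (i : ℕ) + n)) := by
        refine joinEntropy_le_of_range_subset hT.measurable hc ?_
        rintro _ ⟨⟨j, hj⟩, rfl⟩
        rcases Finset.mem_union.1 (h hj) with hj | hj <;>
          obtain ⟨i, hi, rfl⟩ := Finset.mem_map.1 hj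
        · exact ⟨Sum.inl ⟨i, hi⟩, rfl⟩
        · exact ⟨Sum.inr ⟨i, hi⟩, by simp [add_comm]⟩
    _ ≤ joinEntropyOn μ T c P + joinEntropyOn μ T c Q := by
        grw [joinEntropy_sumElim_le hT.measurable hc, joinEntropy_add_const hT hc]
        rfl

lemma avgJoinEntropy_le_fullJoinEntropy [IsFiniteMeasure μ] (hT : Measurable T)
    (hc : Measurable c) (n : ℕ) : avgJoinEntropy μ T c n ≤ fullJoinEntropy μ T c n := by
  calc avgJoinEntropy μ T c n
      ≤ ∑ _S : Finset (Fin n), (1 / 2 ^ n : ℝ) * fullJoinEntropy μ T c n := by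
        unfold avgJoinEntropy
        gcongr with S
        exact joinEntropyOn_mono hT hc (Finset.subset_univ S)
    _ = fullJoinEntropy μ T c n := by rw [← Finset.sum_mul, sum_one_div_two_pow, one_mul]

lemma subadditive_fullJoinEntropy [IsProbabilityMeasure μ] (hT : MeasurePreserving T μ μ)
    (hc : Measurable c) : Subadditive (fullJoinEntropy μ T c) := fun n m =>
  joinEntropyOn_le_add hT hc fun j _ => by
    induction j using Fin.addCases <;> simp

lemma subadditive_avgJoinEntropy [IsProbabilityMeasure μ] (hT : MeasurePreserving T μ μ)
    (hc : Measurable c) : Subadditive (avgJoinEntropy μ T c) := by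
  intro n m
  calc avgJoinEntropy μ T c (n + m)
      = ∑ P : Finset (Fin n), ∑ Q : Finset (Fin m),
          (1 / 2 ^ (n + m) : ℝ) * joinEntropyOn μ T c (finsetFinAddEquiv n m (P, Q)) := by
        rw [avgJoinEntropy, ← (finsetFinAddEquiv n m).sum_comp, Fintype.sum_prod_type]
    _ ≤ ∑ P : Finset (Fin n), ∑ Q : Finset (Fin m),
          (1 / 2 ^ (n + m) : ℝ) * (joinEntropyOn μ T c P + joinEntropyOn μ T c Q) := by
        gcongr with P _ Q
        exact joinEntropyOn_le_add hT hc (finsetFinAddEquiv_apply_subset P Q)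
    _ = avgJoinEntropy μ T c n + avgJoinEntropy μ T c m := sum_sum_one_div_two_pow_mul_add _ _

end JoinEntropyOn

section Covering

variable {n k : ℕ}

lemma card_filter_disjoint {α : Type*} [Fintype α] [DecidableEq α] (W : Finset α) :
    #{S : Finset α | Disjoint S W} = 2 ^ (Fintype.card α - #W) := by
  have : ({S : Finset α | Disjoint S W} : Finset (Finset α)) = Wᶜ.powerset := by
    ext S
    simp [Finset.subset_compl_iff_disjoint_right]
  rw [this, Finset.card_powerset, Finset.card_compl]

def window (k : ℕ) (j : Fin n) : Finset (Fin n) := {s | s ≤ j ∧ (j : ℕ) < s + k}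

def uncovered (k : ℕ) (S : Finset (Fin n)) : Finset (Fin n) := {j | Disjoint S (window k j)}

lemma le_card_window {j : Fin n} (hj : k ≤ j) : k ≤ #(window k j) := by
  calc k = #(Finset.Ioc (⟨j - k, by omega⟩ : Fin n) j) := by simp only [Fin.card_Ioc]; omega
    _ ≤ #(window k j) := Finset.card_le_card fun s hs => by
      simp only [Finset.mem_Ioc, window, Finset.mem_filter, Finset.mem_univ, true_and,
        Fin.le_def, Fin.lt_def] at hs ⊢
      omega

lemma one_div_two_pow_card_window_le (j : Fin n) :
    (1 / 2 ^ #(window k j) : ℝ) ≤ 1 / 2 ^ k + if (j : ℕ) < k then 1 else 0 := by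
  split_ifs with hj
  · have : (1 / 2 ^ #(window k j) : ℝ) ≤ 1 := by
      rw [div_le_one (by positivity)]
      exact one_le_pow₀ one_le_two
    linarith [show (0 : ℝ) ≤ 1 / 2 ^ k by positivity]
  · rw [add_zero]
    gcongr
    · norm_num
    · exact le_card_window (not_lt.1 hj)

lemma sum_card_uncovered_le :
    ∑ S : Finset (Fin n), (1 / 2 ^ n : ℝ) * #(uncovered k S) ≤ k + n / 2 ^ k := by
  calc ∑ S : Finset (Fin n), (1 / 2 ^ n : ℝ) * #(uncovered k S)
      = ∑ j : Fin n, (1 / 2 ^ n : ℝ) * #{S : Finset (Fin n) | Disjoint S (window k j)} := by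
        simp only [uncovered, Finset.card_filter, Nat.cast_sum, Nat.cast_ite, Nat.cast_one,
          Nat.cast_zero, Finset.mul_sum]
        exact Finset.sum_comm
    _ = ∑ j : Fin n, (1 / 2 ^ #(window k j) : ℝ) := by
        refine Finset.sum_congr rfl fun j _ => ?_
        have : #(window k j) ≤ n := by simpa using Finset.card_le_univ (window k j)
        have hpow : (2 : ℝ) ^ n = 2 ^ (n - #(window k j)) * 2 ^ #(window k j) := by
          rw [← pow_add, Nat.sub_add_cancel this]
        rw [card_filter_disjoint, Fintype.card_fin, Nat.cast_pow, Nat.cast_ofNat, hpow]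
        field_simp
    _ ≤ ∑ j : Fin n, ((1 / 2 ^ k : ℝ) + if (j : ℕ) < k then 1 else 0) :=
        Finset.sum_le_sum fun j _ => one_div_two_pow_card_window_le j
    _ ≤ k + n / 2 ^ k := by
        rw [Finset.sum_add_distrib, Finset.sum_boole, Fin.card_filter_val_lt]
        simp only [Finset.sum_const, Finset.card_univ, Fintype.card_fin, nsmul_eq_mul]
        have : ((min n k : ℕ) : ℝ) ≤ k := by exact_mod_cast min_le_right n k
        linarith [show (n : ℝ) * (1 / 2 ^ k) = n / 2 ^ k by ring]

end Covering

section Blocks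

variable {X ι : Type*} [MeasurableSpace X] {μ : Measure X} {T : X → X} {c : X → ι} {n k : ℕ}

def blockCoding (T : X → X) (c : X → ι) (k : ℕ) : X → Fin k → ι :=
  itinerary T c (fun i : Fin k => (i : ℕ))

lemma measurable_blockCoding [MeasurableSpace ι] (hT : Measurable T) (hc : Measurable c) (k : ℕ) :
    Measurable (blockCoding T c k) :=
  measurable_itinerary hT hc _

variable [Fintype ι]

lemma joinEntropy_blockCoding {κ : Type*} [Fintype κ] [DecidableEq κ] (t : κ → ℕ) :
    joinEntropy μ T (blockCoding T c k) t
      = joinEntropy μ T c (fun p : κ × Fin k => (p.2 : ℕ) + t p.1) := by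
  have : itinerary T (blockCoding T c k) t
      = Equiv.curry _ _ _ ∘ itinerary T c (fun p : κ × Fin k => (p.2 : ℕ) + t p.1) := by
    ext x s i
    simp [itinerary, blockCoding, Function.iterate_add_apply]
  rw [joinEntropy, this, mapEntropy_equiv_comp, joinEntropy]

variable [MeasurableSpace ι] [MeasurableSingletonClass ι]

lemma fullJoinEntropy_blockCoding_le [IsFiniteMeasure μ] (hT : Measurable T) (hc : Measurable c)
    (n : ℕ) : fullJoinEntropy μ T (blockCoding T c k) n ≤ fullJoinEntropy μ T c (n + k) := by
  rw [fullJoinEntropy, joinEntropyOn, joinEntropy_blockCoding]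
  refine joinEntropy_le_of_range_subset hT hc ?_
  rintro _ ⟨⟨⟨s, _⟩, i⟩, rfl⟩
  exact ⟨⟨⟨i + s, by omega⟩, Finset.mem_univ _⟩, rfl⟩

lemma fullJoinEntropy_le_joinEntropyOn_blockCoding [IsProbabilityMeasure μ]
    (hT : MeasurePreserving T μ μ) (hc : Measurable c) (S : Finset (Fin n)) :
    fullJoinEntropy μ T c n
      ≤ joinEntropyOn μ T (blockCoding T c k) S + #(uncovered k S) * mapEntropy μ c := by
  calc fullJoinEntropy μ T c n
      ≤ joinEntropy μ T c (Sum.elim (fun p : S × Fin k => (p.2 : ℕ) + p.1.1)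
          (fun j : uncovered k S => (j : ℕ))) := by
        refine joinEntropy_le_of_range_subset hT.measurable hc ?_
        rintro _ ⟨⟨j, -⟩, rfl⟩
        by_cases hj : j ∈ uncovered k S
        · exact ⟨Sum.inr ⟨j, hj⟩, rfl⟩
        · obtain ⟨s, hs, hsj⟩ : ∃ s ∈ S, s ∈ window k j := by
            simpa [uncovered, Finset.not_disjoint_iff] using hj
          simp only [window, Finset.mem_filter, Finset.mem_univ, true_and, Fin.le_def] at hsj
          exact ⟨Sum.inl (⟨s, hs⟩, ⟨j - s, by omega⟩), by simp only [Sum.elim_inl]; omega⟩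
    _ ≤ joinEntropyOn μ T (blockCoding T c k) S + #(uncovered k S) * mapEntropy μ c := by
        grw [joinEntropy_sumElim_le hT.measurable hc,
          joinEntropy_le_card_mul hT hc (fun j : uncovered k S => (j : ℕ))]
        rw [Fintype.card_coe, joinEntropyOn, joinEntropy_blockCoding]

lemma fullJoinEntropy_le_avgJoinEntropy_blockCoding [IsProbabilityMeasure μ]
    (hT : MeasurePreserving T μ μ) (hc : Measurable c) (n k : ℕ) :
    fullJoinEntropy μ T c n
      ≤ avgJoinEntropy μ T (blockCoding T c k) n + (k + n / 2 ^ k) * mapEntropy μ c := by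
  calc fullJoinEntropy μ T c n
      = ∑ _S : Finset (Fin n), (1 / 2 ^ n : ℝ) * fullJoinEntropy μ T c n := by
        rw [← Finset.sum_mul, sum_one_div_two_pow, one_mul]
    _ ≤ ∑ S : Finset (Fin n), (1 / 2 ^ n : ℝ) *
          (joinEntropyOn μ T (blockCoding T c k) S + #(uncovered k S) * mapEntropy μ c) := by
        gcongr with S
        exact fullJoinEntropy_le_joinEntropyOn_blockCoding hT hc S
    _ = avgJoinEntropy μ T (blockCoding T c k) n
          + (∑ S : Finset (Fin n), (1 / 2 ^ n : ℝ) * #(uncovered k S)) * mapEntropy μ c := by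
        simp only [mul_add, Finset.sum_add_distrib, Finset.sum_mul, mul_assoc, avgJoinEntropy]
    _ ≤ avgJoinEntropy μ T (blockCoding T c k) n + (k + n / 2 ^ k) * mapEntropy μ c := by
        grw [sum_card_uncovered_le]
        exact mapEntropy_nonneg c

end Blocks

lemma Subadditive.tendsto_lim_of_nonneg {u : ℕ → ℝ} (h : Subadditive u) (h₀ : ∀ n, 0 ≤ u n) :
    Tendsto (fun n => u n / n) atTop (𝓝 h.lim) :=
  h.tendsto_lim ⟨0, by rintro _ ⟨n, rfl⟩; exact div_nonneg (h₀ n) n.cast_nonneg⟩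

section Partitions

variable {X : Type*} [MeasurableSpace X] {μ : Measure X} {T : X → X} {m : ℕ}

lemma IsMeasPartition.exists_eq_fibers {α : Fin m → Set X} (hα : IsMeasPartition α) :
    ∃ c : X → Fin m, Measurable c ∧ α = fun i => c ⁻¹' {i} := by
  obtain ⟨hmeas, hdisj, hcover⟩ := hα
  choose c hc using fun x => Set.mem_iUnion.1 (hcover ▸ Set.mem_univ x)
  have hfib : α = fun i => c ⁻¹' {i} := by
    ext i x
    refine ⟨fun hx => ?_, fun hx => hx ▸ hc x⟩
    by_contra hne
    exact Set.disjoint_left.1 (hdisj _ _ hne) (hc x) hx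
  exact ⟨c, measurable_to_countable' fun i => congrFun hfib i ▸ hmeas i, hfib⟩

lemma isMeasPartition_fibers {ι : Type*} [MeasurableSpace ι] [MeasurableSingletonClass ι]
    {c : X → ι} (hc : Measurable c) : IsMeasPartition fun i => c ⁻¹' {i} :=
  ⟨fun i => hc (measurableSet_singleton i), fun _ _ hij => Disjoint.preimage c
    (Set.disjoint_singleton.2 hij), by ext; simp⟩

noncomputable def ascSeq (μ : Measure X) (T : X → X) (α : Fin m → Set X) (n : ℕ) : ℝ :=
  (1 / (n : ℝ)) * ∑ S : Finset (Fin n), (1 / 2 ^ n : ℝ) * partEntropyOn μ T α S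

noncomputable def intSeq (μ : Measure X) (T : X → X) (α : Fin m → Set X) (n : ℕ) : ℝ :=
  (1 / (n : ℝ)) * ∑ S : Finset (Fin n), (1 / 2 ^ n : ℝ) *
    (partEntropyOn μ T α S + partEntropyOn μ T α Sᶜ -
      partEntropyOn μ T α (Finset.univ : Finset (Fin n)))

noncomputable def entropySeq (μ : Measure X) (T : X → X) (α : Fin m → Set X) (n : ℕ) : ℝ :=
  partEntropyOn μ T α (Finset.univ : Finset (Fin n)) / n

noncomputable def ascRate (μ : Measure X) (T : X → X) (α : Fin m → Set X) : ℝ :=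
  limUnder atTop (ascSeq μ T α)

noncomputable def entropyRate (μ : Measure X) (T : X → X) (α : Fin m → Set X) : ℝ :=
  limUnder atTop (entropySeq μ T α)

lemma intSeq_eq (α : Fin m → Set X) (n : ℕ) :
    intSeq μ T α n = 2 * ascSeq μ T α n - entropySeq μ T α n := by
  have hcompl : ∑ S : Finset (Fin n), (1 / 2 ^ n : ℝ) * partEntropyOn μ T α Sᶜ
      = ∑ S : Finset (Fin n), (1 / 2 ^ n : ℝ) * partEntropyOn μ T α S :=
    Fintype.sum_bijective _ compl_involutive.bijective _ _ fun _ => rfl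
  simp only [intSeq, ascSeq, entropySeq, mul_add, mul_sub, Finset.sum_add_distrib,
    Finset.sum_sub_distrib, hcompl, ← Finset.sum_mul, sum_one_div_two_pow]
  ring

lemma ascSeq_fibers (c : X → Fin m) (n : ℕ) :
    ascSeq μ T (fun i => c ⁻¹' {i}) n = avgJoinEntropy μ T c n / n := by
  simp only [ascSeq, avgJoinEntropy, partEntropyOn_fibers]
  ring

lemma entropySeq_fibers (c : X → Fin m) (n : ℕ) :
    entropySeq μ T (fun i => c ⁻¹' {i}) n = fullJoinEntropy μ T c n / n := by
  rw [entropySeq, partEntropyOn_fibers, fullJoinEntropy]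

variable [IsProbabilityMeasure μ]

lemma tendsto_ascSeq (hT : MeasurePreserving T μ μ) {α : Fin m → Set X} (hα : IsMeasPartition α) :
    Tendsto (ascSeq μ T α) atTop (𝓝 (ascRate μ T α)) := by
  obtain ⟨c, hc, rfl⟩ := hα.exists_eq_fibers
  have := (subadditive_avgJoinEntropy hT hc).tendsto_lim_of_nonneg avgJoinEntropy_nonneg
  exact tendsto_nhds_limUnder ⟨_, this.congr fun n => (ascSeq_fibers c n).symm⟩

lemma tendsto_entropySeq (hT : MeasurePreserving T μ μ) {α : Fin m → Set X}
    (hα : IsMeasPartition α) : Tendsto (entropySeq μ T α) atTop (𝓝 (entropyRate μ T α)) := by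
  obtain ⟨c, hc, rfl⟩ := hα.exists_eq_fibers
  have := (subadditive_fullJoinEntropy hT hc).tendsto_lim_of_nonneg fun _ => joinEntropy_nonneg _
  exact tendsto_nhds_limUnder ⟨_, this.congr fun n => (entropySeq_fibers c n).symm⟩

lemma tendsto_intSeq (hT : MeasurePreserving T μ μ) {α : Fin m → Set X} (hα : IsMeasPartition α) :
    Tendsto (intSeq μ T α) atTop (𝓝 (2 * ascRate μ T α - entropyRate μ T α)) :=
  (((tendsto_ascSeq hT hα).const_mul 2).sub (tendsto_entropySeq hT hα)).congr fun n =>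
    (intSeq_eq α n).symm

lemma ascRate_le_entropyRate (hT : MeasurePreserving T μ μ) {α : Fin m → Set X}
    (hα : IsMeasPartition α) : ascRate μ T α ≤ entropyRate μ T α := by
  refine le_of_tendsto_of_tendsto' (tendsto_ascSeq hT hα) (tendsto_entropySeq hT hα) fun n => ?_
  obtain ⟨c, hc, rfl⟩ := hα.exists_eq_fibers
  rw [ascSeq_fibers, entropySeq_fibers]
  exact div_le_div_of_nonneg_right (avgJoinEntropy_le_fullJoinEntropy hT.measurable hc n)
    n.cast_nonneg

lemma two_mul_ascRate_sub_entropyRate_le (hT : MeasurePreserving T μ μ) {α : Fin m → Set X}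
    (hα : IsMeasPartition α) : 2 * ascRate μ T α - entropyRate μ T α ≤ entropyRate μ T α := by
  linarith [ascRate_le_entropyRate hT hα]

lemma entropyRate_sub_le_ascRate_blockCoding (hT : MeasurePreserving T μ μ) {c : X → Fin m}
    (hc : Measurable c) (k : ℕ) {M : ℕ} (e : (Fin k → Fin m) ≃ Fin M) :
    entropyRate μ T (fun i => c ⁻¹' {i}) - mapEntropy μ c / 2 ^ k
      ≤ ascRate μ T (fun j => (e ∘ blockCoding T c k) ⁻¹' {j}) := by
  have hβ := isMeasPartition_fibers
    ((measurable_of_finite e).comp (measurable_blockCoding hT.measurable hc k))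
  have hlim : Tendsto (fun n : ℕ => entropySeq μ T (fun i => c ⁻¹' {i}) n
      - (k / n + 1 / 2 ^ k) * mapEntropy μ c) atTop
      (𝓝 (entropyRate μ T (fun i => c ⁻¹' {i}) - (0 + 1 / 2 ^ k) * mapEntropy μ c)) :=
    (tendsto_entropySeq hT (isMeasPartition_fibers hc)).sub
      (((tendsto_const_div_atTop_nhds_zero_nat (k : ℝ)).add_const _).mul_const _)
  rw [zero_add, one_div_mul_eq_div] at hlim
  refine le_of_tendsto_of_tendsto hlim (tendsto_ascSeq hT hβ) ?_
  filter_upwards [eventually_ne_atTop 0] with n hn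
  have hn : (0 : ℝ) < n := by positivity
  rw [entropySeq_fibers, ascSeq_fibers, avgJoinEntropy_equiv_comp,
    show (k / n + 1 / 2 ^ k : ℝ) * mapEntropy μ c = (k + n / 2 ^ k) * mapEntropy μ c / n by
      field_simp, div_sub_div_same]
  exact div_le_div_of_nonneg_right
    (sub_le_iff_le_add.2 (fullJoinEntropy_le_avgJoinEntropy_blockCoding hT hc n k)) hn.le

lemma entropyRate_blockCoding_le (hT : MeasurePreserving T μ μ) {c : X → Fin m}
    (hc : Measurable c) (k : ℕ) {M : ℕ} (e : (Fin k → Fin m) ≃ Fin M) :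
    entropyRate μ T (fun j => (e ∘ blockCoding T c k) ⁻¹' {j})
      ≤ entropyRate μ T (fun i => c ⁻¹' {i}) := by
  have hβ := isMeasPartition_fibers
    ((measurable_of_finite e).comp (measurable_blockCoding hT.measurable hc k))
  have hlim : Tendsto (fun n : ℕ => entropySeq μ T (fun i => c ⁻¹' {i}) n
      + fullJoinEntropy μ T c k / n) atTop (𝓝 (entropyRate μ T (fun i => c ⁻¹' {i}) + 0)) :=
    (tendsto_entropySeq hT (isMeasPartition_fibers hc)).add
      (tendsto_const_div_atTop_nhds_zero_nat _)
  rw [add_zero] at hlim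
  refine le_of_tendsto_of_tendsto' (tendsto_entropySeq hT hβ) hlim fun n => ?_
  rw [entropySeq_fibers, entropySeq_fibers, fullJoinEntropy_equiv_comp, ← add_div]
  exact div_le_div_of_nonneg_right ((fullJoinEntropy_blockCoding_le hT.measurable hc n).trans
    (subadditive_fullJoinEntropy hT hc n k)) n.cast_nonneg

lemma exists_ascRate_gt (hT : MeasurePreserving T μ μ) {α : Fin m → Set X}
    (hα : IsMeasPartition α) {ε : ℝ} (hε : 0 < ε) :
    ∃ (M : ℕ) (β : Fin M → Set X), IsMeasPartition β ∧
      entropyRate μ T α - ε < ascRate μ T β ∧ entropyRate μ T β ≤ entropyRate μ T α := by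
  obtain ⟨c, hc, rfl⟩ := hα.exists_eq_fibers
  obtain ⟨k, hk⟩ : ∃ k : ℕ, mapEntropy μ c / 2 ^ k < ε :=
    ((tendsto_const_nhds.div_atTop (tendsto_pow_atTop_atTop_of_one_lt one_lt_two)).eventually
      (gt_mem_nhds hε)).exists
  let e := Fintype.equivFin (Fin k → Fin m)
  refine ⟨_, _, isMeasPartition_fibers
    ((measurable_of_finite e).comp (measurable_blockCoding hT.measurable hc k)), ?_,
    entropyRate_blockCoding_le hT hc k e⟩
  linarith [entropyRate_sub_le_ascRate_blockCoding hT hc k e]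

lemma exists_two_mul_ascRate_sub_entropyRate_gt (hT : MeasurePreserving T μ μ)
    {α : Fin m → Set X} (hα : IsMeasPartition α) {ε : ℝ} (hε : 0 < ε) :
    ∃ (M : ℕ) (β : Fin M → Set X), IsMeasPartition β ∧
      entropyRate μ T α - ε < 2 * ascRate μ T β - entropyRate μ T β := by
  obtain ⟨M, β, hβ, hasc, hent⟩ := exists_ascRate_gt hT hα (half_pos hε)
  exact ⟨M, β, hβ, by linarith⟩

end Partitions

section Suprema

variable {X : Type*} [MeasurableSpace X]

def partitionLimits (F : ∀ m, (Fin m → Set X) → ℕ → ℝ) : Set EReal :=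
  {a | ∃ (m : ℕ) (α : Fin m → Set X), IsMeasPartition α ∧
    ∃ r : ℝ, Tendsto (F m α) atTop (𝓝 r) ∧ a = (r : EReal)}

lemma sSup_partitionLimits_eq {F G : ∀ m, (Fin m → Set X) → ℕ → ℝ}
    {f g : ∀ m, (Fin m → Set X) → ℝ}
    (hF : ∀ m α, IsMeasPartition α → Tendsto (F m α) atTop (𝓝 (f m α)))
    (hG : ∀ m α, IsMeasPartition α → Tendsto (G m α) atTop (𝓝 (g m α)))
    (hle : ∀ m α, IsMeasPartition α → f m α ≤ g m α)
    (happrox : ∀ m α, IsMeasPartition α → ∀ ε > 0,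
      ∃ (M : ℕ) (β : Fin M → Set X), IsMeasPartition β ∧ g m α - ε < f M β) :
    sSup (partitionLimits F) = sSup (partitionLimits G) := by
  refine le_antisymm (sSup_le ?_) (sSup_le ?_)
  · rintro _ ⟨m, α, hα, r, hr, rfl⟩
    rw [tendsto_nhds_unique hr (hF m α hα)]
    exact (EReal.coe_le_coe_iff.2 (hle m α hα)).trans (le_sSup ⟨m, α, hα, _, hG m α hα, rfl⟩)
  · rintro _ ⟨m, α, hα, r, hr, rfl⟩
    rw [tendsto_nhds_unique hr (hG m α hα)]
    refine le_of_forall_lt fun z hz => ?_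
    obtain ⟨x, hzx, hx⟩ := EReal.lt_iff_exists_real_btwn.1 hz
    obtain ⟨M, β, hβ, hlt⟩ := happrox m α hα (g m α - x) (sub_pos.2 (EReal.coe_lt_coe_iff.1 hx))
    exact lt_sSup_iff.2 ⟨_, ⟨M, β, hβ, _, hF M β hβ, rfl⟩,
      hzx.trans (EReal.coe_lt_coe_iff.2 (by linarith))⟩

end Suprema

/-- with uniform coefficients `c_S^n = 2^{-n}`,
`sup_α Asc_μ(X,α,T) = sup_α Int_μ(X,α,T) = h_μ(X,T)`, the suprema being over all finite
measurable partitions `α` and `h_μ(X,T)` the Kolmogorov–Sinai entropy. -/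
theorem sup_asc_eq_sup_int_eq_entropy
    {X : Type*} [MeasurableSpace X]
    (μ : Measure X) [IsProbabilityMeasure μ]
    (T : X → X) (hT : MeasurePreserving T μ μ) :
    sSup {a : EReal | ∃ (m : ℕ) (α : Fin m → Set X), IsMeasPartition α ∧
        ∃ r : ℝ, Tendsto (fun n : ℕ =>
            (1 / (n : ℝ)) * ∑ S : Finset (Fin n), (1 / 2 ^ n : ℝ) * partEntropyOn μ T α S)
          atTop (𝓝 r) ∧ a = (r : EReal)}
      =
    sSup {h : EReal | ∃ (m : ℕ) (α : Fin m → Set X), IsMeasPartition α ∧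
        ∃ r : ℝ, Tendsto (fun n : ℕ =>
            partEntropyOn μ T α (Finset.univ : Finset (Fin n)) / (n : ℝ))
          atTop (𝓝 r) ∧ h = (r : EReal)}
    ∧
    sSup {a : EReal | ∃ (m : ℕ) (α : Fin m → Set X), IsMeasPartition α ∧
        ∃ r : ℝ, Tendsto (fun n : ℕ =>
            (1 / (n : ℝ)) * ∑ S : Finset (Fin n), (1 / 2 ^ n : ℝ) *
              (partEntropyOn μ T α S + partEntropyOn μ T α Sᶜ -
                partEntropyOn μ T α (Finset.univ : Finset (Fin n))))
          atTop (𝓝 r) ∧ a = (r : EReal)}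
      =
    sSup {h : EReal | ∃ (m : ℕ) (α : Fin m → Set X), IsMeasPartition α ∧
        ∃ r : ℝ, Tendsto (fun n : ℕ =>
            partEntropyOn μ T α (Finset.univ : Finset (Fin n)) / (n : ℝ))
          atTop (𝓝 r) ∧ h = (r : EReal)} := by
  refine ⟨sSup_partitionLimits_eq (fun _ _ => tendsto_ascSeq hT) (fun _ _ => tendsto_entropySeq hT)
      (fun _ _ => ascRate_le_entropyRate hT) ?_,
    sSup_partitionLimits_eq (fun _ _ => tendsto_intSeq hT) (fun _ _ => tendsto_entropySeq hT)
      (fun _ _ => two_mul_ascRate_sub_entropyRate_le hT)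
      (fun _ _ hα _ hε => exists_two_mul_ascRate_sub_entropyRate_gt hT hα hε)⟩
  intro m α hα ε hε
  obtain ⟨M, β, hβ, hlt, -⟩ := exists_ascRate_gt hT hα hε
  exact ⟨M, β, hβ, hlt⟩
end

section
/- (Morse–Hedlund) A two-sided sequence u ∈ 𝒜^ℤ over a finite alphabet 𝒜 is periodic (there exists p ≥ 1 with u_{i+p} = u_i for all i ∈ ℤ) if and only if there exists k ≥ 1 with p_u(k+1) = p_u(k), and this holds if and only if there exists n ≥ 1 with p_u(n) ≤ n. -/
/-!
The blocks of length `n` of a `p`-periodic sequence are read off at the `p` positions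
`0, …, p - 1`, so `p_u(n) ≤ p` for all `n`; since `p_u` is nondecreasing with `p_u(0) = 1`,
it must then stall: `p_u(k + 1) = p_u(k)` for some `k ≥ 1`, and `p_u(n) ≤ n` for `n = p`.

Conversely, if `p_u(k + 1) = p_u(k)`, then deleting the last letter, and likewise deleting the
first letter, is injective on blocks of length `k + 1`. So two occurrences of the same block of
length `k + 1` are followed, and preceded, by the same letter, and the bi-infinite sequence of
these blocks is determined by any one of its terms; by pigeonhole some block occurs twice, and
`u` is periodic. Finally `p_u(n) ≤ n` together with `p_u(0) = 1` forces `p_u` to stall below `n`.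
-/

noncomputable def complexityZ {A : Type*} (u : ℤ → A) (n : ℕ) : ℕ :=
  {w : Fin n → A | ∃ i : ℤ, ∀ j : Fin n, w j = u (i + (j : ℤ))}.ncard

open Function Set

theorem exists_map_succ_eq_of_map_add_lt {f : ℕ → ℕ} (hf : Monotone f) {a m : ℕ}
    (h : f (a + m) < f a + m) : ∃ k, a ≤ k ∧ f (k + 1) = f k := by
  induction m with
  | zero => exact absurd h (lt_irrefl _)
  | succ m ih =>
    by_cases hm : f (a + m + 1) = f (a + m)
    · exact ⟨a + m, le_add_right le_rfl, hm⟩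
    · have hlt : f (a + m) < f (a + m + 1) := lt_of_le_of_ne (hf (Nat.le_succ _)) (Ne.symm hm)
      rw [← add_assoc] at h
      exact ih (by omega)

theorem Function.periodic_sub_of_eq {β : Type*} {f : ℤ → β}
    (hf : ∀ i j, f (i + 1) = f (j + 1) ↔ f i = f j) {i j : ℤ} (hij : f i = f j) :
    Periodic f (j - i) := by
  have hshift : ∀ t, f (i + t) = f (j + t) := by
    intro t
    induction t using Int.induction_on with
    | zero => simpa using hij
    | succ t ih => rwa [← add_assoc, ← add_assoc, hf]
    | pred t ih =>
      rw [← hf]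
      convert ih using 2 <;> ring
  intro x
  convert (hshift (x - i)).symm using 2 <;> ring

theorem Function.Periodic.exists_nat_period {β : Type*} {f : ℤ → β} {c : ℤ} (hf : Periodic f c)
    (hc : c ≠ 0) : ∃ p : ℕ, 0 < p ∧ Periodic f p := by
  obtain ⟨p, rfl | rfl⟩ := Int.eq_nat_or_neg c
  · exact ⟨p, by omega, hf⟩
  · exact ⟨p, by omega, by simpa using hf.neg⟩

theorem Function.Periodic.ncard_range_le {β : Type*} {f : ℤ → β} {p : ℕ} (hf : Periodic f p)
    (hp : 0 < p) : (range f).ncard ≤ p := by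
  have : NeZero p := ⟨hp.ne'⟩
  have hrange : range f = range (fun t : ZMod p => f t.val) := by
    refine Subset.antisymm (range_subset_iff.2 fun i => ⟨(i : ZMod p), ?_⟩)
      (range_subset_iff.2 fun t => ⟨_, rfl⟩)
    show f ((i : ZMod p).val : ℤ) = f i
    rw [ZMod.val_intCast, Int.emod_def, mul_comm]
    exact hf.sub_int_mul_eq _
  rw [hrange, ← Nat.card_coe_set_eq]
  exact (Finite.card_range_le _).trans (Nat.card_zmod p).le

namespace MorseHedlund

variable {A : Type*} (u : ℤ → A)

def block (n : ℕ) (i : ℤ) : Fin n → A := fun j => u (i + j)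

theorem complexityZ_eq_ncard_range_block (n : ℕ) :
    complexityZ u n = (range (block u n)).ncard := by
  unfold complexityZ
  congr 1
  ext w
  simp [block, funext_iff, eq_comm]

theorem complexityZ_zero : complexityZ u 0 = 1 := by
  rw [complexityZ_eq_ncard_range_block, ncard_eq_one]
  exact ⟨block u 0 0, eq_singleton_iff_unique_mem.2 ⟨⟨0, rfl⟩, fun _ _ => Subsingleton.elim _ _⟩⟩

theorem init_comp_block (n : ℕ) : Fin.init ∘ block u (n + 1) = block u n := rfl

theorem tail_comp_block (n : ℕ) : Fin.tail ∘ block u (n + 1) = block u n ∘ (· + 1) := by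
  funext i j
  simp [block, Fin.tail, add_assoc, add_comm (1 : ℤ)]

theorem image_init_range_block (n : ℕ) :
    Fin.init '' range (block u (n + 1)) = range (block u n) := by
  rw [← range_comp, init_comp_block]

theorem image_tail_range_block (n : ℕ) :
    Fin.tail '' range (block u (n + 1)) = range (block u n) := by
  rw [← range_comp, tail_comp_block, (add_right_surjective (1 : ℤ)).range_comp]

theorem complexityZ_monotone [Finite A] : Monotone (complexityZ u) := by
  refine monotone_nat_of_le_succ fun n => ?_
  rw [complexityZ_eq_ncard_range_block, complexityZ_eq_ncard_range_block,
    ← image_init_range_block]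
  exact ncard_image_le

theorem complexityZ_le_of_periodic {p : ℕ} (hp : 0 < p) (hu : Periodic u p) (n : ℕ) :
    complexityZ u n ≤ p := by
  have hblock : Periodic (block u n) p := fun i => funext fun j => by
    simp only [block]
    rw [add_right_comm, hu]
  rw [complexityZ_eq_ncard_range_block]
  exact hblock.ncard_range_le hp

section Stalling

variable [Finite A] {u} {k : ℕ} (h : complexityZ u (k + 1) = complexityZ u k)
include h

theorem injOn_init_of_complexityZ_succ_eq : InjOn Fin.init (range (block u (k + 1))) :=
  injOn_of_ncard_image_eq (by
    rw [image_init_range_block, ← complexityZ_eq_ncard_range_block,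
      ← complexityZ_eq_ncard_range_block, h])

theorem injOn_tail_of_complexityZ_succ_eq : InjOn Fin.tail (range (block u (k + 1))) :=
  injOn_of_ncard_image_eq (by
    rw [image_tail_range_block, ← complexityZ_eq_ncard_range_block,
      ← complexityZ_eq_ncard_range_block, h])

theorem block_add_one_eq_iff_of_complexityZ_succ_eq (i j : ℤ) :
    block u (k + 1) (i + 1) = block u (k + 1) (j + 1) ↔ block u (k + 1) i = block u (k + 1) j := by
  have htail (i : ℤ) : Fin.tail (block u (k + 1) i) = Fin.init (block u (k + 1) (i + 1)) :=
    congrFun (tail_comp_block u k) i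
  constructor
  · intro hij
    refine injOn_tail_of_complexityZ_succ_eq h ⟨i, rfl⟩ ⟨j, rfl⟩ ?_
    rw [htail, htail, hij]
  · intro hij
    refine injOn_init_of_complexityZ_succ_eq h ⟨i + 1, rfl⟩ ⟨j + 1, rfl⟩ ?_
    rw [← htail, ← htail, hij]

theorem periodic_of_complexityZ_succ_eq : ∃ p : ℕ, 0 < p ∧ Periodic u p := by
  obtain ⟨i, j, hne, hij⟩ := Finite.exists_ne_map_eq_of_infinite (block u (k + 1))
  have hblock := periodic_sub_of_eq (block_add_one_eq_iff_of_complexityZ_succ_eq h) hij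
  have hu : Periodic u (j - i) := fun x => by simpa [block] using congrFun (hblock x) 0
  exact hu.exists_nat_period (sub_ne_zero.2 hne.symm)

end Stalling

end MorseHedlund

open MorseHedlund in
/-- Morse–Hedlund: a two-sided sequence over a finite alphabet is periodic
iff `p_u(k+1) = p_u(k)` for some `k ≥ 1`, iff `p_u(n) ≤ n` for some `n ≥ 1`. -/
theorem morse_hedlund_two_sided {A : Type*} [Fintype A] (u : ℤ → A) :
    ((∃ p : ℕ, 1 ≤ p ∧ ∀ i : ℤ, u (i + (p : ℤ)) = u i) ↔
      (∃ k : ℕ, 1 ≤ k ∧ complexityZ u (k + 1) = complexityZ u k)) ∧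
    ((∃ p : ℕ, 1 ≤ p ∧ ∀ i : ℤ, u (i + (p : ℤ)) = u i) ↔
      (∃ n : ℕ, 1 ≤ n ∧ complexityZ u n ≤ n)) := by
  have hmono := complexityZ_monotone u
  have hzero := complexityZ_zero u
  refine ⟨⟨fun ⟨p, hp, hu⟩ => ?_, fun ⟨k, _, hk⟩ => periodic_of_complexityZ_succ_eq hk⟩,
    ⟨fun ⟨p, hp, hu⟩ => ⟨p, hp, complexityZ_le_of_periodic u hp hu p⟩, fun ⟨n, _, hn⟩ => ?_⟩⟩
  · have hbound := complexityZ_le_of_periodic u hp hu (1 + p)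
    have hone := hmono (Nat.zero_le 1)
    exact exists_map_succ_eq_of_map_add_lt hmono (a := 1) (m := p) (by omega)
  · obtain ⟨k, -, hk⟩ := exists_map_succ_eq_of_map_add_lt hmono (a := 0) (m := n)
      (by rw [zero_add, hzero]; omega)
    exact periodic_of_complexityZ_succ_eq hk
end

section
/- For a one-sided sequence u ∈ 𝒜^ℕ over a finite alphabet 𝒜, the following are equivalent: (1) there exists n ≥ 1 with p_u(n) ≤ n; (2) there exists k ≥ 1 with p_u(k+1) = p_u(k); (3) u is eventually periodic (there exist N ≥ 0 and p ≥ 1 with u_{i+p} = u_i for all i ≥ N); (4) the complexity function p_u is bounded. -/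
/-- The complexity function of a one-sided sequence `u : ℕ → A`: the number of distinct
blocks of length `n` occurring in `u`. -/
noncomputable def complexityN {A : Type*} (u : ℕ → A) (n : ℕ) : ℕ :=
  {w : Fin n → A | ∃ i : ℕ, ∀ j : Fin n, w j = u (i + (j : ℕ))}.ncard

namespace MHaux

set_option linter.unusedSectionVars false

variable {A : Type*} [Fintype A] (u : ℕ → A)

/-- Window of length `n` at position `i`. -/
def win (n i : ℕ) : Fin n → A := fun j => u (i + j)

def setL (n : ℕ) : Set (Fin n → A) :=
  {w : Fin n → A | ∃ i : ℕ, ∀ j : Fin n, w j = u (i + (j : ℕ))}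

lemma complexity_eq (n : ℕ) : complexityN u n = (setL u n).ncard := rfl

lemma win_mem (n i : ℕ) : win u n i ∈ setL u n := ⟨i, fun _ => rfl⟩

lemma mem_setL_iff {n : ℕ} {w : Fin n → A} : w ∈ setL u n ↔ ∃ i, w = win u n i := by
  simp [setL, win, funext_iff]

lemma setL_finite (n : ℕ) : (setL u n).Finite := Set.toFinite _

/-- prefix map -/
def pre (k : ℕ) (w : Fin (k + 1) → A) : Fin k → A := fun j => w j.castSucc

lemma image_pre (k : ℕ) : pre k '' setL u (k + 1) = setL u k := by
  apply Set.Subset.antisymm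
  · rintro w ⟨v, hv, rfl⟩
    rw [mem_setL_iff] at hv ⊢
    obtain ⟨i, rfl⟩ := hv
    exact ⟨i, by funext j; simp [pre, win]⟩
  · intro w hw
    rw [mem_setL_iff] at hw
    obtain ⟨i, rfl⟩ := hw
    exact ⟨win u (k + 1) i, win_mem u _ i, by funext j; simp [pre, win]⟩

lemma complexity_mono (k : ℕ) : complexityN u k ≤ complexityN u (k + 1) := by
  rw [complexity_eq, complexity_eq, ← image_pre u k]
  exact Set.ncard_image_le (setL_finite u _)

lemma complexity_one_pos : 1 ≤ complexityN u 1 := by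
  rw [complexity_eq]
  exact (Set.ncard_pos (setL_finite u 1)).2 ⟨_, win_mem u 1 0⟩

/-- If the complexity never stabilizes then it grows at least linearly. -/
lemma linear_growth (h : ∀ k : ℕ, 1 ≤ k → complexityN u (k + 1) ≠ complexityN u k) :
    ∀ n : ℕ, complexityN u 1 + n ≤ complexityN u (n + 1) := by
  intro n
  induction n with
  | zero => simp
  | succ n ih =>
    have h1 := complexity_mono u (n + 1)
    have h2 := h (n + 1) (by omega)
    omega

/-- If `p(1) = 1` then `u` is constant. -/
lemma const_of_one (h : complexityN u 1 = 1) : ∀ i, u i = u 0 := by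
  rw [complexity_eq, Set.ncard_eq_one] at h
  obtain ⟨a, ha⟩ := h
  intro i
  have h1 : win u 1 i = a := by have := win_mem u 1 i; rwa [ha] at this
  have h2 : win u 1 0 = a := by have := win_mem u 1 0; rwa [ha] at this
  have := congrFun (h1.trans h2.symm) 0
  simpa [win] using this

/-- Key step: if `p(k+1) = p(k)` then `u` is eventually periodic. -/
lemma ep_of_eq {k : ℕ} (hk : 1 ≤ k) (h : complexityN u (k + 1) = complexityN u k) :
    ∃ N : ℕ, ∃ p : ℕ, 1 ≤ p ∧ ∀ i : ℕ, N ≤ i → u (i + p) = u i := by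
  -- the prefix map is injective on L_{k+1}
  have himg := image_pre u k
  have hinj : Set.InjOn (pre k) (setL u (k + 1)) := by
    apply Set.injOn_of_ncard_image_eq _ (setL_finite u _)
    rw [himg, ← complexity_eq, ← complexity_eq, h]
  -- unique right extension
  have hext : ∀ a b : ℕ, (∀ r, r < k → u (a + r) = u (b + r)) → u (a + k) = u (b + k) := by
    intro a b hab
    have hpre : pre k (win u (k + 1) a) = pre k (win u (k + 1) b) := by
      funext j
      simpa [pre, win] using hab j j.isLt
    have := hinj (win_mem u _ a) (win_mem u _ b) hpre
    have := congrFun this (Fin.last k)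
    simpa [win, Fin.last] using this
  -- pigeonhole
  obtain ⟨x, y, hxy, hw⟩ := Finite.exists_ne_map_eq_of_infinite (fun i => win u k i)
  rcases Nat.lt_or_ge x y with hlt | hge
  case _ =>
    refine ⟨x, y - x, by omega, ?_⟩
    have key : ∀ m : ℕ, u (x + m) = u (y + m) := by
      intro m
      induction m using Nat.strong_induction_on with
      | _ m ih =>
        rcases Nat.lt_or_ge m k with hm | hm
        · have := congrFun hw ⟨m, hm⟩
          simpa [win] using this
        · have h1 : ∀ r, r < k → u (x + (m - k) + r) = u (y + (m - k) + r) := by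
            intro r hr
            have := ih (m - k + r) (by omega)
            rw [← Nat.add_assoc, ← Nat.add_assoc] at this
            exact this
          have := hext (x + (m - k)) (y + (m - k)) h1
          rw [Nat.add_assoc, Nat.add_assoc, Nat.sub_add_cancel hm] at this
          exact this
    intro i hi
    have h2 := key (i - x)
    have heq3 : x + (i - x) = i := by omega
    have heq2 : y + (i - x) = i + (y - x) := by omega
    rw [heq3, heq2] at h2
    exact h2.symm
  case _ =>
    have hlt : y < x := by omega
    refine ⟨y, x - y, by omega, ?_⟩
    have key : ∀ m : ℕ, u (y + m) = u (x + m) := by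
      intro m
      induction m using Nat.strong_induction_on with
      | _ m ih =>
        rcases Nat.lt_or_ge m k with hm | hm
        · have := congrFun hw ⟨m, hm⟩
          simpa [win] using this.symm
        · have h1 : ∀ r, r < k → u (y + (m - k) + r) = u (x + (m - k) + r) := by
            intro r hr
            have := ih (m - k + r) (by omega)
            rw [← Nat.add_assoc, ← Nat.add_assoc] at this
            exact this
          have := hext (y + (m - k)) (x + (m - k)) h1
          rw [Nat.add_assoc, Nat.add_assoc, Nat.sub_add_cancel hm] at this
          exact this
    intro i hi
    have h2 := key (i - y)
    have heq3 : y + (i - y) = i := by omega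
    have heq2 : x + (i - y) = i + (x - y) := by omega
    rw [heq3, heq2] at h2
    exact h2.symm

/-- Eventually periodic implies bounded complexity. -/
lemma bounded_of_ep {N p : ℕ} (hp : 1 ≤ p) (hper : ∀ i : ℕ, N ≤ i → u (i + p) = u i) :
    ∀ n : ℕ, complexityN u n ≤ N + p := by
  intro n
  have hsub : setL u n ⊆ (fun i => win u n i) '' Set.Iio (N + p) := by
    intro w hw
    rw [mem_setL_iff] at hw
    obtain ⟨i, rfl⟩ := hw
    induction i using Nat.strong_induction_on with
    | _ i ih =>
      rcases Nat.lt_or_ge i (N + p) with hi | hi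
      · exact ⟨i, hi, rfl⟩
      · have hwin : win u n (i - p) = win u n i := by
          funext j
          have : N ≤ i - p + j := by omega
          have := hper (i - p + j) this
          have heq : i - p + j + p = i + j := by omega
          rw [heq] at this
          simpa [win] using this.symm
        rw [← hwin]
        exact ih (i - p) (by omega)
  calc complexityN u n ≤ ((fun i => win u n i) '' Set.Iio (N + p)).ncard :=
        Set.ncard_le_ncard hsub (Set.Finite.image _ (Set.finite_Iio _))
    _ ≤ (Set.Iio (N + p)).ncard := Set.ncard_image_le (Set.finite_Iio _)
    _ = N + p := by rw [← Finset.coe_range, Set.ncard_coe_finset, Finset.card_range]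
    
end MHaux

/-- for a one-sided sequence `u` over a finite alphabet the following are
equivalent: (1) `p_u(n) ≤ n` for some `n ≥ 1`; (2) `p_u(k+1) = p_u(k)` for some `k ≥ 1`;
(3) `u` is eventually periodic; (4) `p_u` is bounded. -/
theorem one_sided_eventually_periodic_iff {A : Type*} [Fintype A] (u : ℕ → A) :
    ((∃ n : ℕ, 1 ≤ n ∧ complexityN u n ≤ n) ↔
      (∃ N : ℕ, ∃ p : ℕ, 1 ≤ p ∧ ∀ i : ℕ, N ≤ i → u (i + p) = u i)) ∧
    ((∃ k : ℕ, 1 ≤ k ∧ complexityN u (k + 1) = complexityN u k) ↔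
      (∃ N : ℕ, ∃ p : ℕ, 1 ≤ p ∧ ∀ i : ℕ, N ≤ i → u (i + p) = u i)) ∧
    ((∃ C : ℕ, ∀ n : ℕ, complexityN u n ≤ C) ↔
      (∃ N : ℕ, ∃ p : ℕ, 1 ≤ p ∧ ∀ i : ℕ, N ≤ i → u (i + p) = u i)) := by
  -- bounded → (2)
  have hbd_eq : (∃ C : ℕ, ∀ n : ℕ, complexityN u n ≤ C) →
      ∃ k : ℕ, 1 ≤ k ∧ complexityN u (k + 1) = complexityN u k := by
    rintro ⟨C, hC⟩
    by_contra hne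
    push_neg at hne
    have := MHaux.linear_growth u (fun k hk => hne k hk) (C + 1)
    have h1 := MHaux.complexity_one_pos u
    have := hC (C + 1 + 1)
    omega
  -- (2) → EP
  have heq_ep : (∃ k : ℕ, 1 ≤ k ∧ complexityN u (k + 1) = complexityN u k) →
      ∃ N : ℕ, ∃ p : ℕ, 1 ≤ p ∧ ∀ i : ℕ, N ≤ i → u (i + p) = u i := by
    rintro ⟨k, hk, h⟩
    exact MHaux.ep_of_eq u hk h
  -- EP → bounded
  have hep_bd : (∃ N : ℕ, ∃ p : ℕ, 1 ≤ p ∧ ∀ i : ℕ, N ≤ i → u (i + p) = u i) →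
      ∃ C : ℕ, ∀ n : ℕ, complexityN u n ≤ C := by
    rintro ⟨N, p, hp, hper⟩
    exact ⟨N + p, MHaux.bounded_of_ep u hp hper⟩
  -- (1) → EP
  have h1_ep : (∃ n : ℕ, 1 ≤ n ∧ complexityN u n ≤ n) →
      ∃ N : ℕ, ∃ p : ℕ, 1 ≤ p ∧ ∀ i : ℕ, N ≤ i → u (i + p) = u i := by
    rintro ⟨n, hn, hle⟩
    by_cases heq : ∃ k : ℕ, 1 ≤ k ∧ complexityN u (k + 1) = complexityN u k
    · exact heq_ep heq
    · push_neg at heq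
      have hlin := MHaux.linear_growth u (fun k hk => heq k hk) (n - 1)
      have h1 := MHaux.complexity_one_pos u
      have hn1 : n - 1 + 1 = n := by omega
      rw [hn1] at hlin
      have hone : complexityN u 1 = 1 := by omega
      have hconst := MHaux.const_of_one u hone
      exact ⟨0, 1, le_refl 1, fun i _ => by rw [hconst (i + 1), hconst i]⟩
  -- EP → (1)
  have hep_1 : (∃ N : ℕ, ∃ p : ℕ, 1 ≤ p ∧ ∀ i : ℕ, N ≤ i → u (i + p) = u i) →
      ∃ n : ℕ, 1 ≤ n ∧ complexityN u n ≤ n := by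
    intro hep
    obtain ⟨C, hC⟩ := hep_bd hep
    exact ⟨C + 1, by omega, le_trans (hC (C + 1)) (by omega)⟩
  refine ⟨⟨h1_ep, hep_1⟩, ⟨heq_ep, fun hep => hbd_eq (hep_bd hep)⟩, ⟨fun hbd => heq_ep (hbd_eq hbd), hep_bd⟩⟩
end

section
/- (Blanchard–Host–Maass) A topological dynamical system (X,T), with X compact metric and T : X → X continuous, is equicontinuous if and only if every finite open cover 𝒰 of X has bounded topological complexity function, i.e. sup_n p_𝒰(n) < ∞ where p_𝒰(n) = N(𝒰 ∨ T^{−1}𝒰 ∨ ⋯ ∨ T^{−n+1}𝒰). -/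
open Set Filter Topology

/-- Blanchard–Host–Maass: a topological dynamical system `(X,T)` is
equicontinuous iff every finite open cover has bounded topological complexity function
`p_𝒰(n) = N(𝒰 ∨ T^{-1}𝒰 ∨ ⋯ ∨ T^{-n+1}𝒰)`. -/
theorem equicontinuous_iff_bounded_cover_complexity
    {X : Type*} [MetricSpace X] [CompactSpace X] (T : X → X) (hT : Continuous T) :
    (∀ ε : ℝ, 0 < ε → ∃ δ : ℝ, 0 < δ ∧ ∀ x y : X, dist x y < δ →
        ∀ n : ℕ, dist (T^[n] x) (T^[n] y) < ε) ↔
    (∀ 𝒰 : Set (Set X), 𝒰.Finite → (∀ U ∈ 𝒰, IsOpen U) → ⋃₀ 𝒰 = Set.univ →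
      ∃ C : ℕ, ∀ n : ℕ,
        coverNum (joinCover T 𝒰 (Finset.univ : Finset (Fin n))) ≤ C) := by
  constructor
  · intro heq 𝒰 hfin hopen hcov
    classical
    obtain ⟨ρ, hρ, hleb⟩ := lebesgue_number_lemma_of_metric_sUnion isCompact_univ
      (fun t ht => hopen t ht) (by rw [hcov])
    obtain ⟨δ, hδ, hδε⟩ := heq ρ hρ
    obtain ⟨t, -, htfin, htcov⟩ := finite_cover_balls_of_compact (isCompact_univ : IsCompact (Set.univ : Set X)) hδ
    refine ⟨htfin.toFinset.card, fun n => ?_⟩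
    choose Ux hUx hUx2 using fun (x : X) (i : Fin n) => hleb (T^[(i : ℕ)] x) (mem_univ _)
    set V : X → Set X := fun x =>
      ⋂ i ∈ (Finset.univ : Finset (Fin n)), T^[(i : ℕ)] ⁻¹' Ux x i with hV
    have hVmem : ∀ x, V x ∈ joinCover T 𝒰 (Finset.univ : Finset (Fin n)) :=
      fun x => ⟨Ux x, hUx x, rfl⟩
    set F : Finset (Set X) := htfin.toFinset.image V with hF
    have hsub : (F : Set (Set X)) ⊆ joinCover T 𝒰 (Finset.univ : Finset (Fin n)) := by
      intro W hW
      simp only [hF, Finset.coe_image, Set.mem_image] at hW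
      obtain ⟨x, -, rfl⟩ := hW
      exact hVmem x
    have hcover : ⋃₀ (F : Set (Set X)) = Set.univ := by
      apply eq_univ_of_forall
      intro y
      have : y ∈ ⋃ x ∈ t, Metric.ball x δ := htcov (mem_univ y)
      obtain ⟨x, hxt, hyx⟩ := mem_iUnion₂.mp this
      refine ⟨V x, by
        rw [hF]
        exact Finset.mem_coe.mpr (Finset.mem_image_of_mem V (htfin.mem_toFinset.mpr hxt)), ?_⟩
      simp only [hV, Set.mem_iInter, Set.mem_preimage]
      intro i _
      apply hUx2 x i
      rw [Metric.mem_ball]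
      exact hδε y x (Metric.mem_ball.mp hyx) (i : ℕ)
    calc coverNum (joinCover T 𝒰 (Finset.univ : Finset (Fin n))) ≤ F.card :=
          Nat.sInf_le ⟨F, hsub, rfl, hcover⟩
      _ ≤ htfin.toFinset.card := by rw [hF]; exact Finset.card_image_le
  · intro hbdd ε hε
    by_cases hX : Nonempty X
    swap
    · exact ⟨1, one_pos, fun x y _ n => absurd ⟨x⟩ hX⟩
    have hε5 : (0 : ℝ) < ε / 5 := by linarith
    obtain ⟨t, -, htfin, htcov⟩ := finite_cover_balls_of_compact (isCompact_univ : IsCompact (Set.univ : Set X)) hε5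
    set 𝒰 : Set (Set X) := (fun x => Metric.ball x (ε / 5)) '' t with h𝒰
    have h𝒰fin : 𝒰.Finite := htfin.image _
    have h𝒰open : ∀ U ∈ 𝒰, IsOpen U := by rintro U ⟨x, -, rfl⟩; exact Metric.isOpen_ball
    have h𝒰cov : ⋃₀ 𝒰 = Set.univ := by
      rw [h𝒰, sUnion_image]
      exact eq_univ_of_univ_subset htcov
    obtain ⟨C, hC⟩ := hbdd 𝒰 h𝒰fin h𝒰open h𝒰cov
    obtain ⟨x₀⟩ := hX
    have hex : ∀ y : X, ∃ U ∈ 𝒰, y ∈ U := by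
      intro y
      have : y ∈ ⋃₀ 𝒰 := h𝒰cov ▸ mem_univ y
      exact this
    obtain ⟨U₀, hU₀, -⟩ := hex x₀
    -- Step 1: for each n, a cover of X by at most C "itinerary" sets of depth n
    have key1 : ∀ n : ℕ, ∃ g : Fin C → ℕ → Set X, (∀ k i, g k i ∈ 𝒰) ∧
        ∀ x : X, ∃ k : Fin C, ∀ i < n, T^[i] x ∈ g k i := by
      intro n
      choose u hu hu2 using hex
      have hjoin_fin : (joinCover T 𝒰 (Finset.univ : Finset (Fin n))).Finite := by
        have hpi : ({f : Fin n → Set X | ∀ i, f i ∈ 𝒰}).Finite := by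
          have : {f : Fin n → Set X | ∀ i, f i ∈ 𝒰} = Set.pi Set.univ fun _ => 𝒰 := by
            ext f; simp [Set.mem_pi]
          rw [this]
          exact Set.Finite.pi fun _ => h𝒰fin
        apply (hpi.image fun f : Fin n → Set X =>
          ⋂ i ∈ (Finset.univ : Finset (Fin n)), T^[(i : ℕ)] ⁻¹' f i).subset
        rintro W ⟨f, hf, rfl⟩
        exact ⟨f, hf, rfl⟩
      have hjoin_cov : ⋃₀ (hjoin_fin.toFinset : Set (Set X)) = Set.univ := by
        apply eq_univ_of_forall
        intro x
        refine ⟨⋂ i ∈ (Finset.univ : Finset (Fin n)), T^[(i : ℕ)] ⁻¹' u (T^[(i : ℕ)] x), ?_, ?_⟩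
        · rw [hjoin_fin.coe_toFinset]
          exact ⟨fun i => u (T^[(i : ℕ)] x), fun i => hu _, rfl⟩
        · simp only [Set.mem_iInter, Set.mem_preimage]
          intro i _
          exact hu2 _
      have hne : {m | ∃ F : Finset (Set X),
          (F : Set (Set X)) ⊆ joinCover T 𝒰 (Finset.univ : Finset (Fin n)) ∧ F.card = m ∧
          ⋃₀ (F : Set (Set X)) = Set.univ}.Nonempty :=
        ⟨hjoin_fin.toFinset.card, hjoin_fin.toFinset,
          by rw [hjoin_fin.coe_toFinset], rfl, hjoin_cov⟩
      obtain ⟨F, hFsub, hFcard, hFcov⟩ := Nat.sInf_mem hne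
      have hFC : F.card ≤ C := by rw [hFcard]; exact hC n
      have hchoice : ∀ V : Set X, ∃ f : Fin n → Set X, (∀ i, f i ∈ 𝒰) ∧
          (V ∈ F → V = ⋂ i ∈ (Finset.univ : Finset (Fin n)), T^[(i : ℕ)] ⁻¹' f i) := by
        intro V
        by_cases hV : V ∈ F
        · obtain ⟨f, hf1, hf2⟩ := hFsub hV
          exact ⟨f, hf1, fun _ => hf2⟩
        · exact ⟨fun _ => U₀, fun _ => hU₀, fun h => absurd h hV⟩
      choose fV hfV1 hfV2 using hchoice
      set l : List (Set X) := F.toList with hl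
      have hlen : l.length ≤ C := by rw [hl, Finset.length_toList]; exact hFC
      set g : Fin C → ℕ → Set X := fun k i =>
        if h : (k : ℕ) < l.length then
          (if hi : i < n then fV (l.get ⟨k, h⟩) ⟨i, hi⟩ else U₀)
        else U₀ with hg
      have hgeq : ∀ (k : Fin C) (h : (k : ℕ) < l.length) (i : ℕ) (hi : i < n),
          g k i = fV (l.get ⟨k, h⟩) ⟨i, hi⟩ := by
        intro k h i hi
        simp only [hg]
        rw [dif_pos h, dif_pos hi]
      refine ⟨g, ?_, ?_⟩
      · intro k i
        by_cases h : (k : ℕ) < l.length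
        · by_cases hi : i < n
          · rw [hgeq k h i hi]; exact hfV1 _ _
          · simp only [hg]; rw [dif_pos h, dif_neg hi]; exact hU₀
        · simp only [hg]; rw [dif_neg h]; exact hU₀
      · intro x
        have hx : x ∈ ⋃₀ (F : Set (Set X)) := hFcov ▸ mem_univ x
        obtain ⟨W, hWF, hxW⟩ := hx
        have hWF' : W ∈ F := hWF
        obtain ⟨j, hj⟩ := List.mem_iff_get.mp (Finset.mem_toList.mpr hWF')
        refine ⟨⟨j, lt_of_lt_of_le j.2 hlen⟩, fun i hi => ?_⟩
        have hjl : ((⟨j, lt_of_lt_of_le j.2 hlen⟩ : Fin C) : ℕ) < l.length := j.2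
        rw [hgeq _ hjl i hi]
        have hgetW : l.get ⟨(⟨(j : ℕ), lt_of_lt_of_le j.2 hlen⟩ : Fin C), hjl⟩ = W := hj
        rw [hgetW]
        have hxW2 : x ∈ ⋂ i ∈ (Finset.univ : Finset (Fin n)),
            T^[(i : ℕ)] ⁻¹' fV W i := by rw [← hfV2 W hWF']; exact hxW
        simp only [Set.mem_iInter, Set.mem_preimage] at hxW2
        exact hxW2 ⟨i, hi⟩ (Finset.mem_univ _)
    -- Step 2: ultrafilter limit of the covers
    choose G hG1 hG2 using key1
    let 𝓕 : Ultrafilter ℕ := Ultrafilter.of atTop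
    have hle : (𝓕 : Filter ℕ) ≤ atTop := Ultrafilter.of_le _
    have hlim : ∀ (k : Fin C) (i : ℕ), ∃ U ∈ 𝒰, {n | G n k i = U} ∈ 𝓕 := by
      intro k i
      have hU : (⋃ U ∈ 𝒰, {n | G n k i = U}) ∈ 𝓕 := by
        have : (⋃ U ∈ 𝒰, {n | G n k i = U}) = Set.univ :=
          eq_univ_of_forall fun n => mem_iUnion₂.mpr ⟨G n k i, hG1 n k i, rfl⟩
        rw [this]; exact univ_mem
      exact (Ultrafilter.finite_biUnion_mem_iff h𝒰fin).mp hU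
    choose g hg1 hg2 using hlim
    -- Step 3: for every depth m, the limit functions still give a cover
    have key2 : ∀ (x : X) (m : ℕ), ∃ k : Fin C, ∀ i < m, T^[i] x ∈ g k i := by
      intro x m
      have hA : ∀ᶠ n in (𝓕 : Filter ℕ), ∀ k : Fin C, ∀ i ∈ Finset.range m,
          G n k i = g k i := by
        rw [eventually_all]
        intro k
        rw [eventually_all_finset]
        intro i _
        exact hg2 k i
      have hB : ∀ᶠ n in (𝓕 : Filter ℕ), m ≤ n := hle (eventually_ge_atTop m)
      obtain ⟨n, hn1, hn2⟩ := (hA.and hB).exists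
      obtain ⟨k, hk⟩ := hG2 n x
      refine ⟨k, fun i hi => ?_⟩
      have := hk i (lt_of_lt_of_le hi hn2)
      rwa [hn1 k i (Finset.mem_range.mpr hi)] at this
    -- Step 4: pigeonhole, X is covered by C sets with uniform itineraries
    have key3 : ∀ x : X, ∃ k : Fin C, ∀ i : ℕ, T^[i] x ∈ g k i := by
      intro x
      choose km hkm using key2 x
      obtain ⟨k, hk⟩ := Finite.exists_infinite_fiber km
      rw [Set.infinite_coe_iff] at hk
      refine ⟨k, fun i => ?_⟩
      obtain ⟨m, hm, him⟩ := hk.exists_gt i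
      have := hkm m i him
      rwa [show km m = k from hm] at this
    set Z : Fin C → Set X := fun k => closure {x | ∀ i : ℕ, T^[i] x ∈ g k i} with hZ
    have hZclosed : ∀ k, IsClosed (Z k) := fun k => isClosed_closure
    have hZcov : ∀ x : X, ∃ k, x ∈ Z k := fun x => (key3 x).imp fun k h => subset_closure h
    have hZdist : ∀ (k : Fin C) (i : ℕ), ∀ x ∈ Z k, ∀ y ∈ Z k,
        dist (T^[i] x) (T^[i] y) ≤ 2 * (ε / 5) := by
      intro k i
      obtain ⟨c, -, hc⟩ := hg1 k i
      set D : Set (X × X) := {p : X × X | dist (T^[i] p.1) (T^[i] p.2) ≤ 2 * (ε / 5)} with hD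
      have hDclosed : IsClosed D :=
        isClosed_le (Continuous.dist ((hT.iterate i).comp continuous_fst)
          ((hT.iterate i).comp continuous_snd)) continuous_const
      have hYD : {x : X | ∀ i : ℕ, T^[i] x ∈ g k i} ×ˢ {x : X | ∀ i : ℕ, T^[i] x ∈ g k i}
          ⊆ D := by
        rintro ⟨x, y⟩ ⟨hx, hy⟩
        have hc' : Metric.ball c (ε / 5) = g k i := hc
        have hx' : T^[i] x ∈ Metric.ball c (ε / 5) := by rw [hc']; exact hx i
        have hy' : T^[i] y ∈ Metric.ball c (ε / 5) := by rw [hc']; exact hy i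
        rw [Metric.mem_ball] at hx' hy'
        calc dist (T^[i] x) (T^[i] y) ≤ dist (T^[i] x) c + dist c (T^[i] y) :=
              dist_triangle _ _ _
          _ ≤ 2 * (ε / 5) := by
              rw [dist_comm c]
              linarith
      intro x hx y hy
      have : (x, y) ∈ Z k ×ˢ Z k := ⟨hx, hy⟩
      rw [hZ, ← closure_prod_eq] at this
      exact hDclosed.closure_subset_iff.mpr hYD this
    -- Step 5: Lebesgue number argument
    set W : X → Set X := fun z => (⋃ k ∈ {k : Fin C | z ∉ Z k}, Z k)ᶜ with hW
    have hWopen : ∀ z, IsOpen (W z) := by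
      intro z
      have : IsClosed (⋃ k ∈ {k : Fin C | z ∉ Z k}, Z k) :=
        Set.Finite.isClosed_biUnion (Set.toFinite _) fun k _ => hZclosed k
      exact this.isOpen_compl
    have hWmem : ∀ z, z ∈ W z := by
      intro z
      rw [hW]
      intro hmem
      obtain ⟨k, hk1, hk2⟩ := mem_iUnion₂.mp hmem
      exact hk1 hk2
    have hWcov : (Set.univ : Set X) ⊆ ⋃ z : X, W z :=
      fun z _ => mem_iUnion.mpr ⟨z, hWmem z⟩
    obtain ⟨δ, hδ, hleb⟩ := lebesgue_number_lemma_of_metric isCompact_univ hWopen hWcov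
    refine ⟨δ, hδ, fun x y hxy n => ?_⟩
    obtain ⟨z, hz⟩ := hleb x (mem_univ x)
    have hxW : x ∈ W z := hz (Metric.mem_ball_self hδ)
    have hyW : y ∈ W z := hz (by rwa [Metric.mem_ball, dist_comm])
    obtain ⟨k1, hk1⟩ := hZcov x
    obtain ⟨k2, hk2⟩ := hZcov y
    have hz1 : z ∈ Z k1 := by
      by_contra h
      exact hxW (mem_biUnion h hk1)
    have hz2 : z ∈ Z k2 := by
      by_contra h
      exact hyW (mem_biUnion h hk2)
    calc dist (T^[n] x) (T^[n] y) ≤ dist (T^[n] x) (T^[n] z) + dist (T^[n] z) (T^[n] y) :=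
          dist_triangle _ _ _
      _ ≤ 2 * (ε / 5) + 2 * (ε / 5) :=
          add_le_add (hZdist k1 n x hk1 z hz1) (hZdist k2 n z hz2 y hk2)
      _ < ε := by linarith
end

section
/- (Cassaigne) Let u be a one-sided sequence over a finite alphabet with complexity function p_u. Then there exists a constant K with p_u(n) ≤ K·n for all n ≥ 1 if and only if the sequence of first differences p_u(n+1) − p_u(n) is bounded. -/
/-!
Bounded differences give `p(n) ≤ 1 + C n` at once. Conversely, assume `p(n) ≤ K n`. Since
`p(n+1) - p(n)` lies between the number `s(n)` of right special factors of length `n` and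
`|A| s(n)`, it suffices to bound `s`. Averaging over `[m/2, m)` gives an `n` there with
`s(n) ≤ 4K`, and a right special factor of length `m` has a right special suffix of length `n`.
Few right special factors share a given suffix `v`: extend each of them by a letter other than the
one that a period `≤ n/2` of `v` would force. Occurrences of two such extensions then lie more than
`n/2` apart, so at most `8` of them start in any stretch of length `4n`, and double counting pairs
(factor of length `6n`, offset) bounds their number by `12K + 8`.
-/

namespace FactorComplexity

open Finset
open scoped Classical

lemma card_le_of_forall_le_sub {S : Finset ℕ} {δ B : ℕ} (hS : ∀ i ∈ S, i < δ * B)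
    (hsep : ∀ i ∈ S, ∀ j ∈ S, i < j → δ ≤ j - i) : S.card ≤ B := by
  have hclose : ∀ i ∈ S, ∀ j, i / δ = j / δ → j - i < δ := fun i hi j hdiv => by
    have hδ : 0 < δ := Nat.pos_of_ne_zero fun h => by simpa [h] using hS i hi
    have := Nat.div_add_mod i δ
    have := Nat.div_add_mod j δ
    have := Nat.mod_lt j hδ
    rw [hdiv] at *
    omega
  calc S.card ≤ (range B).card := by
        refine card_le_card_of_injOn (· / δ) (fun i hi => ?_) fun i hi j hj hdiv => ?_
        · exact mem_range.2 (Nat.div_lt_of_lt_mul (hS i hi))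
        · by_contra hne
          rcases Nat.lt_or_gt_of_ne hne with h | h
          · exact (hsep i hi j hj h).not_gt (hclose i hi j hdiv)
          · exact (hsep j hj i hi h).not_gt (hclose j hj i hdiv.symm)
    _ = B := card_range B

section Window

variable {A : Type*} (u : ℕ → A)

def window (n i : ℕ) : Fin n → A := fun j => u (i + j)

variable {u}

lemma window_succ (n i : ℕ) : window u (n + 1) i = Fin.snoc (window u n i) (u (i + n)) := by
  ext j
  refine Fin.lastCases ?_ (fun j => ?_) j <;> simp [window]

lemma window_comp_natAdd (ℓ n i : ℕ) :
    window u (ℓ + n) i ∘ Fin.natAdd ℓ = window u n (i + ℓ) := by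
  ext j
  simp [window, add_assoc]

lemma window_add_eq_window_add {N M D i j : ℕ} (h : window u N i = window u N j)
    (hD : D + M ≤ N) : window u M (i + D) = window u M (j + D) := by
  ext t
  simpa [window, add_assoc] using congrFun h ⟨D + t, by omega⟩

lemma apply_add_eq_of_window_eq {n a b t : ℕ} (h : window u n a = window u n b) (ht : t < n) :
    u (a + t) = u (b + t) :=
  congrFun h ⟨t, ht⟩

/-- Overlapping occurrences give the common factor `v` the periods `g` and `h`, and then
`v (n - g) = v (n - g - h) = v (n - h)`. -/
lemma apply_add_eq_of_overlaps {n a b g h : ℕ} (hg : 0 < g) (hh : 0 < h) (hgh : g + h ≤ n)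
    (hab : window u n a = window u n b) (ha : window u n a = window u n (a + g))
    (hb : window u n b = window u n (b + h)) : u (a + n) = u (b + n) := by
  have e₁ := apply_add_eq_of_window_eq ha (t := n - g) (by omega)
  have e₂ := apply_add_eq_of_window_eq hab (t := n - g) (by omega)
  have e₃ := apply_add_eq_of_window_eq hb (t := n - g - h) (by omega)
  have e₄ := apply_add_eq_of_window_eq hab (t := n - g - h) (by omega)
  have e₅ := apply_add_eq_of_window_eq ha (t := n - g - h) (by omega)
  have e₆ := apply_add_eq_of_window_eq hab (t := n - h) (by omega)
  have e₇ := apply_add_eq_of_window_eq hb (t := n - h) (by omega)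
  calc u (a + n) = u (a + g + (n - g)) := by congr 1; omega
    _ = u (b + h + (n - g - h)) := by rw [← e₁, e₂]; congr 1; omega
    _ = u (a + g + (n - g - h)) := by rw [← e₃, ← e₄, e₅]
    _ = u (b + h + (n - h)) := by rw [← e₇, ← e₆]; congr 1; omega
    _ = u (b + n) := by congr 1; omega

variable (u) in
lemma exists_letter_forced_by_overlap {n : ℕ} (v : Fin n → A) : ∃ z, ∀ a g, 0 < g → 2 * g ≤ n →
    window u n a = v → window u n (a + g) = v → u (a + n) = z := by
  by_cases hover : ∃ b h, 0 < h ∧ 2 * h ≤ n ∧ window u n b = v ∧ window u n (b + h) = v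
  · obtain ⟨b, h, hh, hhn, hb, hbh⟩ := hover
    exact ⟨u (b + n), fun a g hg hgn ha hag => apply_add_eq_of_overlaps hg hh (by omega)
      (ha.trans hb.symm) (ha.trans hag.symm) (hb.trans hbh.symm)⟩
  · push Not at hover
    exact ⟨u 0, fun a g hg hgn ha hag => absurd hag (hover a g hg hgn ha)⟩

end Window

noncomputable section

variable {A : Type*} [Fintype A] (u : ℕ → A)

def factors (n : ℕ) : Finset (Fin n → A) := univ.filter fun w => ∃ i, window u n i = w

def rightExt {n : ℕ} (w : Fin n → A) : Finset A :=
  univ.filter fun c => Fin.snoc w c ∈ factors u (n + 1)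

def rightSpecial (n : ℕ) : Finset (Fin n → A) :=
  (factors u n).filter fun w => 1 < (rightExt u w).card

variable {u}

@[simp]
lemma mem_factors {n : ℕ} {w : Fin n → A} : w ∈ factors u n ↔ ∃ i, window u n i = w := by
  simp [factors]

lemma window_mem_factors (n i : ℕ) : window u n i ∈ factors u n := mem_factors.2 ⟨i, rfl⟩

lemma mem_rightExt {n : ℕ} {w : Fin n → A} {c : A} :
    c ∈ rightExt u w ↔ Fin.snoc w c ∈ factors u (n + 1) := by
  simp [rightExt]

lemma complexityN_eq_card_factors (n : ℕ) : complexityN u n = (factors u n).card := by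
  rw [complexityN, ← Set.ncard_coe_finset]
  congr 1
  ext w
  simp [funext_iff, window, eq_comm]

lemma complexityN_le_card_pow (n : ℕ) : complexityN u n ≤ Fintype.card A ^ n := by
  simpa [complexityN_eq_card_factors] using card_le_univ (factors u n)

lemma snoc_mem_factors_iff {n : ℕ} {w : Fin n → A} {c : A} :
    Fin.snoc w c ∈ factors u (n + 1) ↔ ∃ i, window u n i = w ∧ u (i + n) = c := by
  simp [window_succ, Fin.snoc_inj]

lemma rightExt_nonempty {n : ℕ} {w : Fin n → A} (hw : w ∈ factors u n) :
    (rightExt u w).Nonempty := by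
  obtain ⟨i, rfl⟩ := mem_factors.1 hw
  exact ⟨u (i + n), mem_rightExt.2 (snoc_mem_factors_iff.2 ⟨i, rfl, rfl⟩)⟩

lemma rightExt_subset_rightExt_comp_natAdd {ℓ n : ℕ} (w : Fin (ℓ + n) → A) :
    rightExt u w ⊆ rightExt u (w ∘ Fin.natAdd ℓ) := by
  intro c hc
  obtain ⟨i, rfl, rfl⟩ := snoc_mem_factors_iff.1 (mem_rightExt.1 hc)
  refine mem_rightExt.2 (snoc_mem_factors_iff.2 ⟨i + ℓ, (window_comp_natAdd ℓ n i).symm, ?_⟩)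
  rw [add_assoc]

lemma comp_natAdd_mem_rightSpecial {ℓ n : ℕ} {w : Fin (ℓ + n) → A}
    (hw : w ∈ rightSpecial u (ℓ + n)) : w ∘ Fin.natAdd ℓ ∈ rightSpecial u n := by
  simp only [rightSpecial, mem_filter, mem_factors] at hw ⊢
  obtain ⟨⟨i, rfl⟩, hext⟩ := hw
  exact ⟨⟨i + ℓ, (window_comp_natAdd ℓ n i).symm⟩,
    hext.trans_le (card_le_card (rightExt_subset_rightExt_comp_natAdd _))⟩

lemma init_mem_factors {n : ℕ} {x : Fin (n + 1) → A} (hx : x ∈ factors u (n + 1)) :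
    Fin.init x ∈ factors u n := by
  obtain ⟨i, rfl⟩ := mem_factors.1 hx
  simp [window_succ]

lemma card_factors_succ (n : ℕ) :
    (factors u (n + 1)).card = ∑ w ∈ factors u n, (rightExt u w).card := by
  rw [card_eq_sum_card_fiberwise fun x hx => init_mem_factors (u := u) hx]
  refine sum_congr rfl fun w _ => ?_
  have hfiber :
      (factors u (n + 1)).filter (Fin.init · = w) = (rightExt u w).image (Fin.snoc w) := by
    ext x
    simp only [mem_filter, mem_image]
    constructor
    · rintro ⟨hx, rfl⟩
      exact ⟨x (Fin.last n), mem_rightExt.2 (by rwa [Fin.snoc_init_self]), Fin.snoc_init_self x⟩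
    · rintro ⟨c, hc, rfl⟩
      exact ⟨mem_rightExt.1 hc, Fin.init_snoc _ _⟩
  rw [hfiber]
  exact card_image_of_injective _ (Fin.snoc_right_injective (α := fun _ => A) w)

lemma complexityN_succ_sub (n : ℕ) :
    complexityN u (n + 1) - complexityN u n =
      ∑ w ∈ rightSpecial u n, ((rightExt u w).card - 1) := by
  have hpos : ∀ w ∈ factors u n, 1 ≤ (rightExt u w).card :=
    fun w hw => card_pos.2 (rightExt_nonempty hw)
  rw [complexityN_eq_card_factors, complexityN_eq_card_factors, card_factors_succ, rightSpecial,
    sum_filter_of_ne fun w hw h => by have := hpos w hw; omega, sum_tsub_distrib _ hpos,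
    card_eq_sum_ones (factors u n)]

lemma complexityN_mono : Monotone (complexityN u) :=
  monotone_nat_of_le_succ fun n => by
    rw [complexityN_eq_card_factors, complexityN_eq_card_factors, card_factors_succ,
      card_eq_sum_ones]
    exact sum_le_sum fun w hw => card_pos.2 (rightExt_nonempty hw)

lemma card_rightSpecial_le (n : ℕ) :
    (rightSpecial u n).card ≤ complexityN u (n + 1) - complexityN u n := by
  rw [complexityN_succ_sub, card_eq_sum_ones]
  exact sum_le_sum fun w hw => by have := (mem_filter.1 hw).2; omega

lemma complexityN_succ_sub_le (n : ℕ) :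
    complexityN u (n + 1) - complexityN u n ≤ Fintype.card A * (rightSpecial u n).card := by
  rw [complexityN_succ_sub, mul_comm, ← smul_eq_mul]
  exact sum_le_card_nsmul _ _ _ fun w _ => (Nat.sub_le _ _).trans (card_le_univ _)

lemma card_le_of_occurrences_separated {M n K : ℕ} (hn : 0 < n) (hM : M ≤ 2 * n + 1)
    (hK : complexityN u (6 * n) ≤ K * (6 * n)) {G : Finset (Fin M → A)} (hG : G ⊆ factors u M)
    (hsep : ∀ i j, window u M i ∈ G → window u M j ∈ G → i < j → n < 2 * (j - i)) :
    G.card ≤ 12 * K + 8 := by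
  have hstretch : ∀ a, ((range (4 * n)).filter fun D => window u M (a + D) ∈ G).card ≤ 8 := by
    refine fun a => card_le_of_forall_le_sub (δ := n / 2 + 1) (fun D hD => ?_)
      fun D hD D' hD' h => ?_
    · have := mem_range.1 (mem_filter.1 hD).1
      omega
    · have := hsep _ _ (mem_filter.1 hD).2 (mem_filter.1 hD').2 (Nat.add_lt_add_left h a)
      omega
  have hocc : ∀ x ∈ G, ∃ i, window u M i = x := fun x hx => mem_factors.1 (hG hx)
  choose! pos hpos using hocc
  have hearly : (G.filter (pos · < 4 * n)).card ≤ 8 := by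
    refine (card_le_card_of_injOn pos (fun x hx => ?_) fun x hx y hy h => ?_).trans (hstretch 0)
    · obtain ⟨hxG, hx4⟩ := mem_filter.1 hx
      simp [hx4, hpos x hxG, hxG]
    · rw [← hpos x (mem_filter.1 hx).1, ← hpos y (mem_filter.1 hy).1, h]
  -- `(x, D)` goes to the factor of length `6n` that holds `x` at offset `D`
  have hlate : ((G.filter (¬ pos · < 4 * n)) ×ˢ range (4 * n)).card ≤
      8 * (factors u (6 * n)).card := by
    refine card_le_mul_card_image_of_maps_to
      (f := fun xD : (Fin M → A) × ℕ => window u (6 * n) (pos xD.1 - xD.2))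
      (fun xD _ => window_mem_factors _ _) 8 fun X hX => ?_
    obtain ⟨i, rfl⟩ := mem_factors.1 hX
    have hread : ∀ xD ∈ ((G.filter (¬ pos · < 4 * n)) ×ˢ range (4 * n)).filter
        (fun xD => window u (6 * n) (pos xD.1 - xD.2) = window u (6 * n) i),
        xD.2 < 4 * n ∧ xD.1 ∈ G ∧ window u M (i + xD.2) = xD.1 := by
      rintro ⟨x, D⟩ hxD
      simp only [mem_filter, mem_product, mem_range, not_lt] at hxD
      obtain ⟨⟨⟨hxG, hx4⟩, hD⟩, hwin⟩ := hxD
      refine ⟨hD, hxG, ?_⟩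
      rw [← window_add_eq_window_add hwin (by omega), Nat.sub_add_cancel (by omega), hpos x hxG]
    refine (card_le_card_of_injOn Prod.snd (fun xD hxD => ?_) fun xD hxD yD hyD h => ?_).trans
      (hstretch i)
    · obtain ⟨hD, hxG, hx⟩ := hread xD hxD
      simp [hD, hx, hxG]
    · have hx := (hread xD hxD).2.2
      have hy := (hread yD hyD).2.2
      exact Prod.ext (by rw [← hx, ← hy, h]) h
  have h12 : (G.filter (¬ pos · < 4 * n)).card ≤ 12 * K := by
    refine Nat.le_of_mul_le_mul_right (c := 4 * n) ?_ (by omega)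
    calc _ ≤ 8 * (factors u (6 * n)).card := by rwa [card_product, card_range] at hlate
      _ ≤ 8 * (K * (6 * n)) := by rw [← complexityN_eq_card_factors]; exact Nat.mul_le_mul_left 8 hK
      _ = 12 * K * (4 * n) := by ring
  rw [← card_filter_add_card_filter_not (s := G) (p := (pos · < 4 * n))]
  omega

lemma card_filter_comp_natAdd_eq_le {ℓ n K : ℕ} (hn : 0 < n) (hℓ : ℓ ≤ n)
    (hK : complexityN u (6 * n) ≤ K * (6 * n)) (v : Fin n → A) :
    ((rightSpecial u (ℓ + n)).filter (· ∘ Fin.natAdd ℓ = v)).card ≤ 12 * K + 8 := by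
  obtain ⟨z, hz⟩ := exists_letter_forced_by_overlap u v
  calc _ ≤ ((factors u (ℓ + n + 1)).filter
        fun x => Fin.init x ∘ Fin.natAdd ℓ = v ∧ x (Fin.last _) ≠ z).card := by
        refine card_le_card_of_surjOn Fin.init fun w hw => ?_
        obtain ⟨hwRS, hwv⟩ := mem_filter.1 hw
        obtain ⟨c, hc, hcz⟩ := (one_lt_card_iff_nontrivial.1 (mem_filter.1 hwRS).2).exists_ne z
        exact ⟨Fin.snoc w c,
          mem_filter.2 ⟨mem_rightExt.1 hc, by simpa using hwv, by simpa using hcz⟩,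
          Fin.init_snoc _ _⟩
    _ ≤ 12 * K + 8 := card_le_of_occurrences_separated hn (by omega) hK (filter_subset _ _) ?_
  intro i j hi hj hij
  simp only [mem_filter, window_succ, Fin.init_snoc, Fin.snoc_last, window_comp_natAdd] at hi hj
  by_contra hclose
  refine hi.2.2 ?_
  rw [← add_assoc]
  exact hz (i + ℓ) (j - i) (by omega) (by omega) hi.2.1 (by rw [← hj.2.1]; congr 1; omega)

lemma card_rightSpecial_add_le {ℓ n K : ℕ} (hn : 0 < n) (hℓ : ℓ ≤ n)
    (hK : complexityN u (6 * n) ≤ K * (6 * n)) :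
    (rightSpecial u (ℓ + n)).card ≤ (12 * K + 8) * (rightSpecial u n).card := by
  refine (card_le_mul_card_image _ _ fun v _ => card_filter_comp_natAdd_eq_le hn hℓ hK v).trans
    (Nat.mul_le_mul_left _ (card_le_card fun v hv => ?_))
  obtain ⟨w, hw, rfl⟩ := mem_image.1 hv
  exact comp_natAdd_mem_rightSpecial hw

lemma exists_card_rightSpecial_le {K m : ℕ} (hm : 2 ≤ m) (hK : complexityN u m ≤ K * m) :
    ∃ n, m ≤ 2 * n ∧ n < m ∧ (rightSpecial u n).card ≤ 4 * K := by
  have hsum : ∑ j ∈ Ico (m - m / 2) m, (rightSpecial u j).card ≤ ∑ _j ∈ Ico (m - m / 2) m, 4 * K :=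
    calc ∑ j ∈ Ico (m - m / 2) m, (rightSpecial u j).card
        ≤ ∑ j ∈ range m, (complexityN u (j + 1) - complexityN u j) :=
          (sum_le_sum fun j _ => card_rightSpecial_le j).trans
            (sum_le_sum_of_subset fun j hj => mem_range.2 (mem_Ico.1 hj).2)
      _ = complexityN u m - complexityN u 0 := sum_range_tsub complexityN_mono m
      _ ≤ K * (4 * (m / 2)) := (Nat.sub_le _ _).trans (hK.trans (Nat.mul_le_mul_left K (by omega)))
      _ = ∑ _j ∈ Ico (m - m / 2) m, 4 * K := by
        rw [sum_const, Nat.card_Ico, smul_eq_mul, Nat.sub_sub_self (by omega)]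
        ring
  obtain ⟨n, hn, hle⟩ := exists_le_of_sum_le (nonempty_Ico.2 (by omega)) hsum
  exact ⟨n, by have := mem_Ico.1 hn; omega, (mem_Ico.1 hn).2, hle⟩

lemma card_rightSpecial_le_of_complexityN_le {K : ℕ}
    (hK : ∀ n, 1 ≤ n → complexityN u n ≤ K * n) (m : ℕ) :
    (rightSpecial u m).card ≤ Fintype.card A + (12 * K + 8) * (4 * K) := by
  rcases lt_or_ge m 2 with hm | hm
  · have hA : 0 < Fintype.card A := Fintype.card_pos_iff.2 ⟨u 0⟩
    calc (rightSpecial u m).card ≤ (factors u m).card := card_filter_le _ _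
      _ ≤ Fintype.card A ^ m := complexityN_eq_card_factors (u := u) m ▸ complexityN_le_card_pow m
      _ ≤ Fintype.card A ^ 1 := Nat.pow_le_pow_right hA (by omega)
      _ ≤ _ := by rw [pow_one]; exact Nat.le_add_right _ _
  · obtain ⟨n, h2n, hnm, hn⟩ := exists_card_rightSpecial_le hm (hK m (by omega))
    have hchain :=
      card_rightSpecial_add_le (ℓ := m - n) (by omega) (by omega) (hK (6 * n) (by omega))
    rw [Nat.sub_add_cancel hnm.le] at hchain
    calc (rightSpecial u m).card ≤ (12 * K + 8) * (4 * K) :=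
          hchain.trans (Nat.mul_le_mul_left _ hn)
      _ ≤ _ := Nat.le_add_left _ _

lemma complexityN_le_of_sub_le {C : ℕ}
    (hC : ∀ n, complexityN u (n + 1) - complexityN u n ≤ C) (n : ℕ) :
    complexityN u n ≤ 1 + C * n := by
  induction n with
  | zero => simpa using complexityN_le_card_pow (u := u) 0
  | succ n ih =>
    have := hC n
    rw [mul_add_one]
    omega

end

end FactorComplexity

open FactorComplexity in
/-- Cassaigne: `p_u(n) ≤ K·n` for some `K` and all `n ≥ 1` iff the first
differences `p_u(n+1) − p_u(n)` are bounded. -/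
theorem linear_complexity_iff_bounded_differences {A : Type*} [Fintype A] (u : ℕ → A) :
    (∃ K : ℕ, ∀ n : ℕ, 1 ≤ n → complexityN u n ≤ K * n) ↔
    (∃ C : ℕ, ∀ n : ℕ, complexityN u (n + 1) - complexityN u n ≤ C) := by
  constructor
  · rintro ⟨K, hK⟩
    exact ⟨Fintype.card A * (Fintype.card A + (12 * K + 8) * (4 * K)), fun n =>
      (complexityN_succ_sub_le n).trans
        (Nat.mul_le_mul_left _ (card_rightSpecial_le_of_complexityN_le hK n))⟩
  · rintro ⟨C, hC⟩
    refine ⟨C + 1, fun n hn => (complexityN_le_of_sub_le hC n).trans ?_⟩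
    nlinarith
end
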